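/- arXiv:2010.11236 — 10 statements merged into one kernel-verified Lean document; each statement's English description precedes it below -/
import Mathlib

section
/- For positive integers m and n, the number of permutations of [m+n] whose excedance set is exactly {1,...,m} equals the sum over i from 1 to n of (-1)^(n-i) * i! * i^m * S(n,i), where S(n,i) denotes the Stirling number of the second kind. -/
/-- A permutation of `[N] = {1,…,N}`, encoded as a function `ℕ → ℕ` that is a
bijection of `{1,…,N}` onto itself and is the identity elsewhere. -/
def PermOn (N : ℕ) (π : ℕ → ℕ) : Prop :=
  Set.BijOn π (Set.Icc 1 N) (Set.Icc 1 N) ∧ ∀ i, i ∉ Set.Icc 1 N → π i = i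

/-- The excedance set of a permutation of `[N]`: positions `i ∈ [N]` with `π i > i`. -/
def ExcSet (N : ℕ) (π : ℕ → ℕ) : Set ℕ := {i | i ∈ Set.Icc 1 N ∧ i < π i}

/-- Stirling numbers of the second kind. -/
def stirling : ℕ → ℕ → ℕ
  | 0, 0 => 1
  | 0, _ + 1 => 0
  | _ + 1, 0 => 0
  | n + 1, k + 1 => (k + 1) * stirling n (k + 1) + stirling n k

/-!
Number positions from `0`. Let `g j u` count the permutations of `Fin (m + j + u)` whose first `m`
positions are excedances and whose next `j` positions are not. Deleting an excedance position `q`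
together with its value `σ q` and closing the gaps keeps the excedance behaviour of the positions
before `q`, and `σ q` can be any of the values above `q`; splitting on whether position `m + j` is
an excedance therefore gives
  `g 0 u = u! * u ^ m`,   `g (j + 1) u = g j (u + 1) - u * g j u`.
So `g n = T^n g 0` for `T h u = h (u + 1) - u * h u`, and `T^n h u` expands in `r`-Stirling
numbers as `∑ₖ (-1)^(n+k) S_u(n + u, k + u) h (u + k)`, which at `u = 0` is the claimed sum.
-/

open Equiv Finset
open scoped Nat

namespace Fin

theorem castSucc_lt_succAbove_iff {M : ℕ} {p : Fin (M + 1)} {i : Fin M} (h : castSucc i < p)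
    (k : Fin M) : castSucc i < p.succAbove k ↔ i < k := by
  rcases castSucc_lt_or_lt_succ p k with hk | hk
  · rw [succAbove_of_castSucc_lt _ _ hk, castSucc_lt_castSucc_iff]
  · rw [succAbove_of_lt_succ _ _ hk]
    simp only [lt_def, val_castSucc, val_succ] at h hk ⊢
    omega

end Fin

namespace Equiv.Perm

variable {M : ℕ}

noncomputable def removeAt (σ : Perm (Fin (M + 1))) (q : Fin (M + 1)) : Perm (Fin M) :=
  removeNone ((finSuccEquiv' q).symm.trans (σ.trans (finSuccEquiv' (σ q))))

theorem apply_succAbove_eq_succAbove_removeAt (σ : Perm (Fin (M + 1))) (q : Fin (M + 1))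
    (i : Fin M) : σ (q.succAbove i) = (σ q).succAbove (σ.removeAt q i) := by
  obtain ⟨j, hj⟩ := Fin.exists_succAbove_eq fun h => Fin.succAbove_ne q i (σ.injective h)
  have hsome :
      ((finSuccEquiv' q).symm.trans (σ.trans (finSuccEquiv' (σ q)))) (some i) = some j := by
    simp [← hj]
  have hj' : σ.removeAt q i = j :=
    Option.some_injective _ ((removeNone_some _ ⟨j, hsome⟩).trans hsome)
  rw [hj', hj]

def insertAt (τ : Perm (Fin M)) (q v : Fin (M + 1)) : Perm (Fin (M + 1)) :=
  (finSuccEquiv' q).trans ((optionCongr τ).trans (finSuccEquiv' v).symm)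

theorem insertAt_apply_self (τ : Perm (Fin M)) (q v : Fin (M + 1)) : τ.insertAt q v q = v := by
  simp [insertAt]

theorem insertAt_apply_succAbove (τ : Perm (Fin M)) (q v : Fin (M + 1)) (i : Fin M) :
    τ.insertAt q v (q.succAbove i) = v.succAbove (τ i) := by
  simp [insertAt]

noncomputable def decomposeAt (q : Fin (M + 1)) : Perm (Fin (M + 1)) ≃ Fin (M + 1) × Perm (Fin M)
    where
  toFun σ := (σ q, σ.removeAt q)
  invFun p := p.2.insertAt q p.1
  left_inv σ := by
    ext1 z
    rcases eq_or_ne z q with rfl | hz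
    · exact insertAt_apply_self ..
    · obtain ⟨i, rfl⟩ := Fin.exists_succAbove_eq hz
      rw [insertAt_apply_succAbove, apply_succAbove_eq_succAbove_removeAt]
  right_inv := by
    rintro ⟨v, τ⟩
    have hv := insertAt_apply_self τ q v
    refine Prod.ext hv (Equiv.ext fun i => Fin.succAbove_right_injective (p := v) ?_)
    change v.succAbove ((τ.insertAt q v).removeAt q i) = v.succAbove (τ i)
    rw [← insertAt_apply_succAbove τ q v i, apply_succAbove_eq_succAbove_removeAt, hv]

theorem castSucc_lt_apply_castSucc_iff {σ : Perm (Fin (M + 1))} {q : Fin (M + 1)} (hq : q < σ q)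
    {i : Fin M} (hi : i.castSucc < q) : i.castSucc < σ i.castSucc ↔ i < σ.removeAt q i := by
  rw [← Fin.succAbove_of_castSucc_lt q i hi, apply_succAbove_eq_succAbove_removeAt,
    Fin.succAbove_of_castSucc_lt q i hi]
  exact Fin.castSucc_lt_succAbove_iff (hi.trans hq) _

end Equiv.Perm

section ExcPattern

variable {N M : ℕ} {S : Set ℕ} {k : ℕ}

def ExcPattern (S : Set ℕ) (k : ℕ) (σ : Perm (Fin N)) : Prop :=
  ∀ i : Fin N, (i : ℕ) < k → ((i : ℕ) ∈ S ↔ i < σ i)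

noncomputable def excCount (N : ℕ) (S : Set ℕ) (k : ℕ) : ℕ :=
  Nat.card {σ : Perm (Fin N) // ExcPattern S k σ}

theorem excPattern_succ_iff (hk : k < N) (σ : Perm (Fin N)) :
    ExcPattern S (k + 1) σ ↔
      ExcPattern S k σ ∧ (k ∈ S ↔ (⟨k, hk⟩ : Fin N) < σ ⟨k, hk⟩) := by
  refine ⟨fun h => ⟨fun i hi => h i (by omega), h ⟨k, hk⟩ k.lt_succ_self⟩,
    fun ⟨h, hlast⟩ i hi => ?_⟩
  rcases Nat.lt_succ_iff_lt_or_eq.mp hi with hi | hi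
  · exact h i hi
  · obtain rfl : i = ⟨k, hk⟩ := Fin.ext hi
    exact hlast

theorem excPattern_iff_removeAt (hk : k ≤ M) {σ : Perm (Fin (M + 1))}
    (hq : (⟨k, Nat.lt_succ_of_le hk⟩ : Fin (M + 1)) < σ ⟨k, Nat.lt_succ_of_le hk⟩) :
    ExcPattern S k σ ↔ ExcPattern S k (σ.removeAt ⟨k, Nat.lt_succ_of_le hk⟩) := by
  have hlast : ¬ ((Fin.last M : Fin (M + 1)) : ℕ) < k := by rw [Fin.val_last]; omega
  rw [ExcPattern, Fin.forall_fin_succ', ExcPattern]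
  simp only [hlast, false_imp_iff, and_true, Fin.val_castSucc]
  refine forall_congr' fun i => imp_congr_right fun hi => ?_
  rw [Perm.castSucc_lt_apply_castSucc_iff hq (by simpa [Fin.lt_def] using hi)]

theorem card_excPattern_and_lt (hk : k ≤ M) :
    Nat.card {σ : Perm (Fin (M + 1)) // ExcPattern S k σ ∧
      (⟨k, Nat.lt_succ_of_le hk⟩ : Fin (M + 1)) < σ ⟨k, Nat.lt_succ_of_le hk⟩} =
      (M - k) * excCount M S k := by
  set q : Fin (M + 1) := ⟨k, Nat.lt_succ_of_le hk⟩
  have hfiber : ∀ σ, ExcPattern S k σ ∧ q < σ q ↔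
      q < (Perm.decomposeAt q σ).1 ∧ ExcPattern S k (Perm.decomposeAt q σ).2 := fun σ =>
    ⟨fun ⟨h, hq⟩ => ⟨hq, (excPattern_iff_removeAt hk hq).1 h⟩,
      fun ⟨hq, h⟩ => ⟨(excPattern_iff_removeAt hk hq).2 h, hq⟩⟩
  have hIoi : Nat.card {v : Fin (M + 1) // q < v} = M - k := by
    rw [Nat.card_eq_fintype_card, Fintype.card_subtype, filter_lt_eq_Ioi, Fin.card_Ioi]
    simp [q]
  rw [Nat.card_congr ((Perm.decomposeAt q).subtypeEquiv
      (q := fun p => q < p.1 ∧ ExcPattern S k p.2) hfiber),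
    Nat.card_congr subtypeProdEquivProd, Nat.card_prod, hIoi, excCount]

theorem excCount_succ_of_mem (hk : k ≤ M) (hS : k ∈ S) :
    excCount (M + 1) S (k + 1) = (M - k) * excCount M S k := by
  rw [excCount, ← card_excPattern_and_lt hk]
  exact Nat.card_congr (subtypeEquivRight fun σ => by
    rw [excPattern_succ_iff (Nat.lt_succ_of_le hk), iff_true_left hS])

theorem excCount_succ_of_notMem (hk : k ≤ M) (hS : k ∉ S) :
    excCount (M + 1) S (k + 1) + (M - k) * excCount M S k = excCount (M + 1) S k := by
  rw [← card_excPattern_and_lt hk, add_comm]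
  convert Set.ncard_inter_add_ncard_sdiff_eq_ncard {σ : Perm (Fin (M + 1)) | ExcPattern S k σ}
    {σ | (⟨k, Nat.lt_succ_of_le hk⟩ : Fin (M + 1)) < σ ⟨k, Nat.lt_succ_of_le hk⟩} using 2
  · rfl
  · change Set.ncard {σ | ExcPattern S (k + 1) σ} = _
    congr 1
    ext σ
    simp [excPattern_succ_iff (Nat.lt_succ_of_le hk), hS]
  · rfl

theorem excCount_zero (N : ℕ) (S : Set ℕ) : excCount N S 0 = N ! := by
  rw [excCount, Nat.card_congr (subtypeUnivEquiv (p := ExcPattern S 0)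
      fun σ i hi => absurd hi (Nat.not_lt_zero _)), Nat.card_perm, Nat.card_fin]

theorem excCount_of_forall_mem (hS : ∀ i < k, i ∈ S) (u : ℕ) :
    excCount (k + u) S k = u ! * u ^ k := by
  induction k with
  | zero => simp [excCount_zero]
  | succ k ih =>
    rw [Nat.add_right_comm, excCount_succ_of_mem (Nat.le_add_right k u) (hS k k.lt_succ_self),
      ih fun i hi => hS i (hi.trans k.lt_succ_self), Nat.add_sub_cancel_left, pow_succ]
    ring

end ExcPattern

noncomputable def Set.bijOnFixingComplEquivPerm {α : Type*} (s : Set α)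
    [DecidablePred (· ∈ s)] :
    {f : α → α // Set.BijOn f s s ∧ ∀ x, x ∉ s → f x = x} ≃ Perm s where
  toFun f := f.2.1.equiv f.1
  invFun σ :=
    ⟨Perm.ofSubtype σ, (Perm.ofSubtype σ).bijOn (Perm.ofSubtype_apply_mem_iff_mem σ),
      fun _ => Perm.ofSubtype_apply_of_not_mem σ⟩
  left_inv f := by
    ext x
    by_cases hx : x ∈ s
    · simp [Perm.ofSubtype_apply_of_mem _ hx, Set.BijOn.equiv]
    · simp [Perm.ofSubtype_apply_of_not_mem _ hx, f.2.2 x hx]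
  right_inv σ := by
    ext x
    simp [Set.BijOn.equiv, Perm.ofSubtype_apply_coe]

def iccEquivFin (N : ℕ) : Set.Icc 1 N ≃ Fin N where
  toFun x := ⟨x - 1, by obtain ⟨h1, h2⟩ := x.2; omega⟩
  invFun i := ⟨i + 1, by simp⟩
  left_inv x := Subtype.ext (Nat.sub_add_cancel x.2.1)
  right_inv i := Fin.ext (Nat.add_sub_cancel i 1)

noncomputable def permOnEquiv (N : ℕ) : {π : ℕ → ℕ // PermOn N π} ≃ Perm (Fin N) :=
  (Set.Icc 1 N).bijOnFixingComplEquivPerm.trans (iccEquivFin N).permCongr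

theorem permOnEquiv_apply_val {N : ℕ} (π : {π : ℕ → ℕ // PermOn N π}) (i : Fin N) :
    (permOnEquiv N π i : ℕ) = π.1 (i + 1) - 1 :=
  rfl

theorem excSet_eq_iff_excPattern {N : ℕ} {T : Set ℕ} (hT : T ⊆ Set.Icc 1 N)
    (π : {π : ℕ → ℕ // PermOn N π}) :
    ExcSet N π.1 = T ↔ ExcPattern {i | i + 1 ∈ T} N (permOnEquiv N π) := by
  have hval : ∀ i : Fin N, 1 ≤ π.1 (i + 1) := fun i =>
    (π.2.1.mapsTo ⟨Nat.le_add_left 1 i, i.isLt⟩).1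
  simp only [ExcPattern, Fin.lt_def, permOnEquiv_apply_val, Set.ext_iff, ExcSet,
    Set.mem_ofPred_eq]
  constructor
  · intro h i _
    have := hval i
    rw [← h]
    simp only [Set.mem_Icc]
    omega
  · intro h x
    by_cases hx : x ∈ Set.Icc 1 N
    · obtain ⟨i, rfl⟩ : ∃ i : Fin N, x = i + 1 := ⟨⟨x - 1, by grind⟩, by grind⟩
      have := hval i
      rw [h i i.isLt]
      simp only [Set.mem_Icc] at hx ⊢
      omega
    · exact iff_of_false (fun h' => hx h'.1) (fun h' => hx (hT h'))

theorem card_permOn_excSet_eq {N : ℕ} {T : Set ℕ} (hT : T ⊆ Set.Icc 1 N) :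
    Nat.card {π : ℕ → ℕ // PermOn N π ∧ ExcSet N π = T} =
      excCount N {i | i + 1 ∈ T} N :=
  Nat.card_congr ((subtypeSubtypeEquivSubtypeInter _ _).symm.trans
    ((permOnEquiv N).subtypeEquiv (excSet_eq_iff_excPattern hT)))

/-- The `r`-Stirling number `S_r(n + r, k + r)`, defined through the recurrence
(`rStirling_succ_succ`) that matches `shiftSub`; the usual one is `rStirling_succ_succ'`. -/
def rStirling : ℕ → ℕ → ℕ → ℕ
  | _, 0, k => if k = 0 then 1 else 0
  | r, n + 1, 0 => r * rStirling r n 0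
  | r, n + 1, k + 1 => rStirling (r + 1) n k + r * rStirling r n (k + 1)

theorem rStirling_succ_zero (r n : ℕ) : rStirling r (n + 1) 0 = r * rStirling r n 0 := rfl

theorem rStirling_succ_succ (r n k : ℕ) :
    rStirling r (n + 1) (k + 1) = rStirling (r + 1) n k + r * rStirling r n (k + 1) := rfl

theorem rStirling_eq_zero_of_lt {n k : ℕ} (h : n < k) (r : ℕ) : rStirling r n k = 0 := by
  induction n generalizing r k with
  | zero => obtain ⟨k, rfl⟩ := Nat.exists_eq_succ_of_ne_zero h.ne'; rfl
  | succ n ih =>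
    obtain ⟨k, rfl⟩ := Nat.exists_eq_succ_of_ne_zero (by omega : k ≠ 0)
    rw [rStirling_succ_succ, ih (by omega), ih (by omega), mul_zero, add_zero]

theorem rStirling_zero_right (r n : ℕ) : rStirling r n 0 = r ^ n := by
  induction n with
  | zero => rfl
  | succ n ih => rw [rStirling_succ_zero, ih, pow_succ, mul_comm]

theorem rStirling_succ_succ' (r n k : ℕ) :
    rStirling r (n + 1) (k + 1) = (r + k + 1) * rStirling r n (k + 1) + rStirling r n k := by
  induction n generalizing r k with
  | zero => cases k <;> simp [rStirling]
  | succ n ih =>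
    cases k with
    | zero =>
      have hdef : rStirling r (n + 1) 1 = (r + 1) ^ n + r * rStirling r n 1 := by
        rw [rStirling_succ_succ, rStirling_zero_right]
      have hrec : rStirling r (n + 1) 1 = (r + 1) * rStirling r n 1 + r ^ n := by
        rw [ih, rStirling_zero_right]
      rw [rStirling_succ_succ r (n + 1) 0, rStirling_zero_right, rStirling_zero_right]
      zify at hdef hrec ⊢
      linear_combination -(r + 1 : ℤ) * hdef + r * hrec
    | succ k =>
      have hdef := rStirling_succ_succ r n (k + 1)
      have hrec := ih r (k + 1)
      rw [rStirling_succ_succ r (n + 1) (k + 1), ih, rStirling_succ_succ r n k]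
      zify at hdef hrec ⊢
      linear_combination -(r + k + 2 : ℤ) * hdef + r * hrec

theorem rStirling_zero_left (n k : ℕ) : rStirling 0 n k = stirling n k := by
  induction n generalizing k with
  | zero => cases k <;> rfl
  | succ n ih =>
    cases k with
    | zero => simp [rStirling, stirling]
    | succ k => rw [rStirling_succ_succ', ih, ih, stirling, zero_add]

def shiftSub (h : ℕ → ℤ) (u : ℕ) : ℤ := h (u + 1) - u * h u

theorem shiftSub_iterate_apply (h : ℕ → ℤ) (n u : ℕ) :
    shiftSub^[n] h u =
      ∑ k ∈ range (n + 1), (-1) ^ (n + k) * (rStirling u n k : ℤ) * h (u + k) := by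
  induction n generalizing u with
  | zero => simp [rStirling]
  | succ n ih =>
    have hpad : ∑ k ∈ range (n + 2), (-1) ^ (n + k) * (rStirling u n k : ℤ) * h (u + k) =
        ∑ k ∈ range (n + 1), (-1) ^ (n + k) * (rStirling u n k : ℤ) * h (u + k) := by
      rw [sum_range_succ, rStirling_eq_zero_of_lt n.lt_succ_self, Nat.cast_zero, mul_zero,
        zero_mul, add_zero]
    rw [Function.iterate_succ_apply', shiftSub, ih, ih, ← hpad,
      sum_range_succ' (fun k => (-1) ^ (n + k) * (rStirling u n k : ℤ) * h (u + k)),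
      sum_range_succ' (fun k => (-1) ^ (n + 1 + k) * (rStirling u (n + 1) k : ℤ) * h (u + k)),
      mul_add, mul_sum, ← sub_sub, ← sum_sub_distrib, sub_eq_add_neg]
    congr 1
    · refine sum_congr rfl fun k _ => ?_
      rw [rStirling_succ_succ, add_right_comm u 1 k, ← add_assoc u k 1]
      push_cast
      ring
    · rw [rStirling_succ_zero]
      push_cast
      ring

theorem excCount_Iio_eq_shiftSub_iterate (m j u : ℕ) :
    (excCount (m + j + u) (Set.Iio m) (m + j) : ℤ) =
      shiftSub^[j] (fun u => (u ! * u ^ m : ℤ)) u := by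
  induction j generalizing u with
  | zero =>
    rw [add_zero, excCount_of_forall_mem (S := Set.Iio m) (fun i hi => hi) u]
    push_cast
    rfl
  | succ j ih =>
    have hrec := excCount_succ_of_notMem (S := Set.Iio m) (M := m + j + u) (k := m + j)
      (Nat.le_add_right _ _) (by simp)
    rw [Nat.add_sub_cancel_left] at hrec
    rw [Function.iterate_succ_apply', shiftSub, ← ih, ← ih, ← add_assoc m j 1, add_right_comm,
      ← add_assoc, ← hrec]
    push_cast
    ring

theorem number_of_perms_with_excedance_set_initial_segment_general (m n : ℕ)
    (hn : 1 ≤ n) :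
    (Nat.card {π : ℕ → ℕ // PermOn (m + n) π ∧ ExcSet (m + n) π = Set.Icc 1 m} : ℤ) =
      ∑ i ∈ Finset.Icc 1 n,
        (-1 : ℤ) ^ (n - i) * (Nat.factorial i : ℤ) * (i : ℤ) ^ m * (stirling n i : ℤ) := by
  have hsegment : {i | i + 1 ∈ Set.Icc 1 m} = Set.Iio m := by
    ext i
    simp
  have hcount := excCount_Iio_eq_shiftSub_iterate m n 0
  rw [add_zero] at hcount
  rw [card_permOn_excSet_eq (Set.Icc_subset_Icc_right (Nat.le_add_right m n)), hsegment, hcount,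
    shiftSub_iterate_apply, range_eq_Ico, sum_eq_sum_Ico_succ_bot (Nat.succ_pos n),
    rStirling_zero_right, zero_pow (by omega), Nat.cast_zero, mul_zero, zero_mul, zero_add,
    Nat.succ_eq_add_one, Ico_add_one_right_eq_Icc]
  refine sum_congr rfl fun i hi => ?_
  rw [rStirling_zero_left, zero_add, show n + i = n - i + 2 * i by grind, pow_add, pow_mul,
    neg_one_sq, one_pow, mul_one]
  ring

theorem number_of_perms_with_excedance_set_initial_segment (m n : ℕ)
    (hm : 1 ≤ m) (hn : 1 ≤ n) :
    (Nat.card {π : ℕ → ℕ // PermOn (m + n) π ∧ ExcSet (m + n) π = Set.Icc 1 m} : ℤ) =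
      ∑ i ∈ Finset.Icc 1 n,
        (-1 : ℤ) ^ (n - i) * (Nat.factorial i : ℤ) * (i : ℤ) ^ m * (stirling n i : ℤ) :=
  number_of_perms_with_excedance_set_initial_segment_general m n hn
end

section
/- For positive integers m and n with m+1 ≤ n, the number of permutations of [m+n] with excedance set exactly {1,...,m} equals the number of permutations of [m+n] with excedance set exactly {1,...,n-1}. -/
/-- The key bijection: `φ π (i) = N+1 - π (N-i)` for `1 ≤ i ≤ N-1`, and
`φ π (N) = N+1 - π N`; identity elsewhere. -/
def phiExc (N : ℕ) (π : ℕ → ℕ) : ℕ → ℕ := fun i =>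
  if i = N then N + 1 - π N
  else if 1 ≤ i ∧ i ≤ N - 1 then N + 1 - π (N - i) else i

lemma phiExc_permOn (N : ℕ) (hN : 1 ≤ N) {π : ℕ → ℕ} (hπ : PermOn N π) :
    PermOn N (phiExc N π) := by
  constructor
  · -- r1 : i ↦ if i = N then N else N - i
    have hr1 : Set.BijOn (fun i => if i = N then N else N - i)
        (Set.Icc 1 N) (Set.Icc 1 N) := by
      apply Set.InvOn.bijOn (f' := fun i => if i = N then N else N - i)
      · constructor <;> intro i hi <;> simp only [Set.mem_Icc] at hi <;>
          simp only <;> split_ifs <;> omega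
      · intro i hi; simp only [Set.mem_Icc] at hi ⊢; split_ifs <;> omega
      · intro i hi; simp only [Set.mem_Icc] at hi ⊢; split_ifs <;> omega
    have hr2 : Set.BijOn (fun j => N + 1 - j) (Set.Icc 1 N) (Set.Icc 1 N) := by
      apply Set.InvOn.bijOn (f' := fun j => N + 1 - j)
      · constructor <;> intro j hj <;> simp only [Set.mem_Icc] at hj <;>
          simp only <;> omega
      · intro j hj; simp only [Set.mem_Icc] at hj ⊢; omega
      · intro j hj; simp only [Set.mem_Icc] at hj ⊢; omega
    have hcomp := (hr2.comp (hπ.1.comp hr1))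
    have heq : Set.EqOn ((fun j => N + 1 - j) ∘ π ∘ (fun i => if i = N then N else N - i))
        (phiExc N π) (Set.Icc 1 N) := by
      intro i hi
      simp only [Set.mem_Icc] at hi
      by_cases h : i = N
      · simp [phiExc, h]
      · have h2 : 1 ≤ i ∧ i ≤ N - 1 := by omega
        simp [phiExc, h, h2]
    exact hcomp.congr heq
  · intro i hi
    simp only [Set.mem_Icc, not_and_or, not_le] at hi
    simp only [phiExc]
    rw [if_neg (by omega), if_neg (by omega)]

lemma phiExc_excSet (N k : ℕ) (hN : 1 ≤ N) (hk : k ≤ N - 1) {π : ℕ → ℕ}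
    (hπ : PermOn N π) (hexc : ExcSet N π = Set.Icc 1 k) :
    ExcSet N (phiExc N π) = Set.Icc 1 (N - 1 - k) := by
  have key : ∀ j, ((1 ≤ j ∧ j ≤ N) ∧ j < π j) ↔ (1 ≤ j ∧ j ≤ k) := by
    intro j
    have := Set.ext_iff.mp hexc j
    simpa [ExcSet, Set.mem_Icc] using this
  have hmaps : ∀ j, 1 ≤ j → j ≤ N → 1 ≤ π j ∧ π j ≤ N := by
    intro j h1 h2
    have := hπ.1.mapsTo (show j ∈ Set.Icc 1 N by simp [Set.mem_Icc, h1, h2])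
    simpa [Set.mem_Icc] using this
  ext i
  simp only [ExcSet, Set.mem_setOf_eq, Set.mem_Icc]
  by_cases hiN : i = N
  · subst hiN
    have hb := hmaps i hN le_rfl
    have e1 : phiExc i π i = i + 1 - π i := by simp [phiExc]
    rw [e1]
    omega
  · by_cases hi : 1 ≤ i ∧ i ≤ N - 1
    · have hb := hmaps (N - i) (by omega) (by omega)
      have hkey := key (N - i)
      simp only [phiExc, if_neg hiN, if_pos hi]
      omega
    · simp only [phiExc, if_neg hiN, if_neg hi]
      omega

lemma phiExc_phiExc (N : ℕ) (hN : 1 ≤ N) {π : ℕ → ℕ} (hπ : PermOn N π) :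
    phiExc N (phiExc N π) = π := by
  have hmaps : ∀ j, 1 ≤ j → j ≤ N → 1 ≤ π j ∧ π j ≤ N := by
    intro j h1 h2
    have := hπ.1.mapsTo (show j ∈ Set.Icc 1 N by simp [Set.mem_Icc, h1, h2])
    simpa [Set.mem_Icc] using this
  funext i
  by_cases hiN : i = N
  · subst hiN
    have hb := hmaps i hN le_rfl
    have e1 : ∀ σ : ℕ → ℕ, phiExc i σ i = i + 1 - σ i := fun σ => by simp [phiExc]
    rw [e1, e1]
    omega
  · by_cases hi : 1 ≤ i ∧ i ≤ N - 1
    · have hb := hmaps i (by omega) (by omega)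
      have h1 : N - (N - i) = i := by omega
      simp only [phiExc, if_neg hiN, if_pos hi,
        if_neg (show ¬ N - i = N by omega),
        if_pos (show 1 ≤ N - i ∧ N - i ≤ N - 1 by omega), h1]
      omega
    · have hid : π i = i := hπ.2 i (by simp only [Set.mem_Icc]; omega)
      simp only [phiExc, if_neg hiN, if_neg hi, hid]

theorem excedance_set_symmetry (m n : ℕ) (hm : 1 ≤ m) (hn : 1 ≤ n) (hmn : m + 1 ≤ n) :
    Nat.card {π : ℕ → ℕ // PermOn (m + n) π ∧ ExcSet (m + n) π = Set.Icc 1 m} =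
      Nat.card {π : ℕ → ℕ // PermOn (m + n) π ∧ ExcSet (m + n) π = Set.Icc 1 (n - 1)} := by
  refine Nat.card_congr ?_
  refine
    { toFun := fun p => ⟨phiExc (m + n) p.1, phiExc_permOn (m + n) (by omega) p.2.1, ?_⟩
      invFun := fun p => ⟨phiExc (m + n) p.1, phiExc_permOn (m + n) (by omega) p.2.1, ?_⟩
      left_inv := fun p => Subtype.ext (phiExc_phiExc (m + n) (by omega) p.2.1)
      right_inv := fun p => Subtype.ext (phiExc_phiExc (m + n) (by omega) p.2.1) }
  · have h := phiExc_excSet (m + n) m (by omega) (by omega) p.2.1 p.2.2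
    rw [h, show m + n - 1 - m = n - 1 from by omega]
  · have h := phiExc_excSet (m + n) (n - 1) (by omega) (by omega) p.2.1 p.2.2
    rw [h, show m + n - 1 - (n - 1) = m from by omega]
end

section
/- For m ≥ 1, the set of permutations π of [2m+1] satisfying π(i) ≤ m+i for 1 ≤ i ≤ m and π(i) ≥ i−m for m+1 ≤ i ≤ 2m+1 is in bijection with the set of permutations of [2m+1] whose excedance set is exactly {1,...,m}. Explicitly, the map sending π to σ defined by σ(i) = 2m+2−π(m+1−i) for 1 ≤ i ≤ m and σ(i) = 2m+2−π(3m+2−i) for m+1 ≤ i ≤ 2m+1 is such a bijection. -/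
/-- The map of the theorem. -/
def Fmap (m : ℕ) (π : ℕ → ℕ) : ℕ → ℕ := fun i =>
  if 1 ≤ i ∧ i ≤ m then 2 * m + 2 - π (m + 1 - i)
  else if m + 1 ≤ i ∧ i ≤ 2 * m + 1 then 2 * m + 2 - π (3 * m + 2 - i)
  else i

/-- The index reversal. -/
def revj (m i : ℕ) : ℕ :=
  if 1 ≤ i ∧ i ≤ m then m + 1 - i
  else if m + 1 ≤ i ∧ i ≤ 2 * m + 1 then 3 * m + 2 - i
  else i

/-- The value reversal. -/
def revr (m x : ℕ) : ℕ :=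
  if 1 ≤ x ∧ x ≤ 2 * m + 1 then 2 * m + 2 - x else x

lemma revj_invol (m i : ℕ) : revj m (revj m i) = i := by
  unfold revj; split_ifs <;> omega

lemma revr_invol (m x : ℕ) : revr m (revr m x) = x := by
  unfold revr; split_ifs <;> omega

lemma revj_mapsTo (m : ℕ) :
    Set.MapsTo (revj m) (Set.Icc 1 (2 * m + 1)) (Set.Icc 1 (2 * m + 1)) := by
  intro i hi
  simp only [Set.mem_Icc] at *
  unfold revj; split_ifs <;> omega

lemma revr_mapsTo (m : ℕ) :
    Set.MapsTo (revr m) (Set.Icc 1 (2 * m + 1)) (Set.Icc 1 (2 * m + 1)) := by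
  intro i hi
  simp only [Set.mem_Icc] at *
  unfold revr; split_ifs <;> omega

lemma revj_bijOn (m : ℕ) :
    Set.BijOn (revj m) (Set.Icc 1 (2 * m + 1)) (Set.Icc 1 (2 * m + 1)) :=
  Set.InvOn.bijOn ⟨fun i _ => revj_invol m i, fun i _ => revj_invol m i⟩
    (revj_mapsTo m) (revj_mapsTo m)

lemma revr_bijOn (m : ℕ) :
    Set.BijOn (revr m) (Set.Icc 1 (2 * m + 1)) (Set.Icc 1 (2 * m + 1)) :=
  Set.InvOn.bijOn ⟨fun i _ => revr_invol m i, fun i _ => revr_invol m i⟩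
    (revr_mapsTo m) (revr_mapsTo m)

lemma permOn_maps {m : ℕ} {π : ℕ → ℕ} (hπ : PermOn (2 * m + 1) π) :
    ∀ j, 1 ≤ j → j ≤ 2 * m + 1 → 1 ≤ π j ∧ π j ≤ 2 * m + 1 := by
  intro j h1 h2
  have := hπ.1.mapsTo (Set.mem_Icc.mpr ⟨h1, h2⟩)
  simpa [Set.mem_Icc] using this

lemma Fmap_eq (m : ℕ) (π : ℕ → ℕ) (hπ : PermOn (2 * m + 1) π) :
    Fmap m π = fun i => revr m (π (revj m i)) := by
  funext i
  have hout : ∀ j, ¬(1 ≤ j ∧ j ≤ 2 * m + 1) → π j = j := by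
    intro j hj
    exact hπ.2 j (by simp only [Set.mem_Icc]; omega)
  unfold Fmap revj revr
  by_cases h1 : 1 ≤ i ∧ i ≤ m
  · have hp := permOn_maps hπ (m + 1 - i) (by omega) (by omega)
    simp only [if_pos h1, if_pos hp]
  · by_cases h2 : m + 1 ≤ i ∧ i ≤ 2 * m + 1
    · have hp := permOn_maps hπ (3 * m + 2 - i) (by omega) (by omega)
      simp only [if_neg h1, if_pos h2, if_pos hp]
    · simp only [if_neg h1, if_neg h2]
      rw [hout i (by omega), if_neg (show ¬(1 ≤ i ∧ i ≤ 2 * m + 1) by omega)]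

lemma Fmap_permOn {m : ℕ} {π : ℕ → ℕ} (hπ : PermOn (2 * m + 1) π) :
    PermOn (2 * m + 1) (Fmap m π) := by
  rw [Fmap_eq m π hπ]
  constructor
  · exact (revr_bijOn m).comp (hπ.1.comp (revj_bijOn m))
  · intro i hi
    simp only [Set.mem_Icc, not_and_or, not_le] at hi
    have hj : revj m i = i := by unfold revj; split_ifs <;> omega
    have hpi : π i = i := hπ.2 i (by simp only [Set.mem_Icc]; omega)
    have hr : revr m i = i := by unfold revr; split_ifs <;> omega
    simp only [hj, hpi, hr]

lemma Fmap_invol {m : ℕ} {π : ℕ → ℕ} (hπ : PermOn (2 * m + 1) π) :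
    Fmap m (Fmap m π) = π := by
  rw [Fmap_eq m _ (Fmap_permOn hπ), Fmap_eq m π hπ]
  funext i
  simp only
  rw [revj_invol, revr_invol]

lemma Fmap_AtoB {m : ℕ} {π : ℕ → ℕ} (hm : 1 ≤ m) (hπ : PermOn (2 * m + 1) π)
    (hA1 : ∀ i, 1 ≤ i → i ≤ m → π i ≤ m + i)
    (hA2 : ∀ i, m + 1 ≤ i → i ≤ 2 * m + 1 → i - m ≤ π i) :
    PermOn (2 * m + 1) (Fmap m π) ∧ ExcSet (2 * m + 1) (Fmap m π) = Set.Icc 1 m := by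
  refine ⟨Fmap_permOn hπ, ?_⟩
  ext i
  simp only [ExcSet, Set.mem_setOf_eq, Set.mem_Icc]
  constructor
  · rintro ⟨⟨hi1, hi2⟩, hlt⟩
    by_contra hc
    have h2 : m + 1 ≤ i ∧ i ≤ 2 * m + 1 := by omega
    have heq : Fmap m π i = 2 * m + 2 - π (3 * m + 2 - i) := by
      unfold Fmap; rw [if_neg (by omega), if_pos h2]
    have hcond := hA2 (3 * m + 2 - i) (by omega) (by omega)
    have hp := permOn_maps hπ (3 * m + 2 - i) (by omega) (by omega)
    omega
  · rintro ⟨hi1, hi2⟩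
    have heq : Fmap m π i = 2 * m + 2 - π (m + 1 - i) := by
      unfold Fmap; rw [if_pos ⟨hi1, hi2⟩]
    have hcond := hA1 (m + 1 - i) (by omega) (by omega)
    have hp := permOn_maps hπ (m + 1 - i) (by omega) (by omega)
    exact ⟨⟨hi1, by omega⟩, by omega⟩

lemma Fmap_BtoA {m : ℕ} {σ : ℕ → ℕ} (hm : 1 ≤ m) (hσ : PermOn (2 * m + 1) σ)
    (hExc : ExcSet (2 * m + 1) σ = Set.Icc 1 m) :
    PermOn (2 * m + 1) (Fmap m σ) ∧
      (∀ i, 1 ≤ i → i ≤ m → Fmap m σ i ≤ m + i) ∧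
      (∀ i, m + 1 ≤ i → i ≤ 2 * m + 1 → i - m ≤ Fmap m σ i) := by
  refine ⟨Fmap_permOn hσ, ?_, ?_⟩
  · intro i hi1 hi2
    have heq : Fmap m σ i = 2 * m + 2 - σ (m + 1 - i) := by
      unfold Fmap; rw [if_pos ⟨hi1, hi2⟩]
    have hmem : (m + 1 - i) ∈ ExcSet (2 * m + 1) σ := by
      rw [hExc]; simp only [Set.mem_Icc]; omega
    have hlt : m + 1 - i < σ (m + 1 - i) := hmem.2
    omega
  · intro i hi1 hi2
    have heq : Fmap m σ i = 2 * m + 2 - σ (3 * m + 2 - i) := by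
      unfold Fmap; rw [if_neg (by omega), if_pos ⟨hi1, hi2⟩]
    have hnm : (3 * m + 2 - i) ∉ ExcSet (2 * m + 1) σ := by
      rw [hExc]; simp only [Set.mem_Icc]; omega
    have hle : σ (3 * m + 2 - i) ≤ 3 * m + 2 - i := by
      by_contra hc
      exact hnm ⟨Set.mem_Icc.mpr ⟨by omega, by omega⟩, by omega⟩
    have hp := permOn_maps hσ (3 * m + 2 - i) (by omega) (by omega)
    omega

theorem toppleable_bijection_excedance_odd (m : ℕ) (hm : 1 ≤ m) :
    Set.BijOn
      (fun (π : ℕ → ℕ) => fun (i : ℕ) =>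
        if 1 ≤ i ∧ i ≤ m then 2 * m + 2 - π (m + 1 - i)
        else if m + 1 ≤ i ∧ i ≤ 2 * m + 1 then 2 * m + 2 - π (3 * m + 2 - i)
        else i)
      {π : ℕ → ℕ | PermOn (2 * m + 1) π ∧
        (∀ i, 1 ≤ i → i ≤ m → π i ≤ m + i) ∧
        (∀ i, m + 1 ≤ i → i ≤ 2 * m + 1 → i - m ≤ π i)}
      {σ : ℕ → ℕ | PermOn (2 * m + 1) σ ∧ ExcSet (2 * m + 1) σ = Set.Icc 1 m} := by
  show Set.BijOn (Fmap m) _ _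
  refine ⟨?_, ?_, ?_⟩
  · rintro π ⟨hπ, hA1, hA2⟩
    exact Fmap_AtoB hm hπ hA1 hA2
  · rintro π1 ⟨hπ1, _, _⟩ π2 ⟨hπ2, _, _⟩ he
    calc π1 = Fmap m (Fmap m π1) := (Fmap_invol hπ1).symm
      _ = Fmap m (Fmap m π2) := by rw [he]
      _ = π2 := Fmap_invol hπ2
  · rintro σ ⟨hσ, hExc⟩
    exact ⟨Fmap m σ, Fmap_BtoA hm hσ hExc, Fmap_invol hσ⟩
end

section
/- For m ≥ 1, the set of permutations π of [2m] satisfying π(i) ≤ m+i for 1 ≤ i ≤ m and π(i) ≥ i−m+1 for m+1 ≤ i ≤ 2m is in bijection with (has the same cardinality as) the set of permutations of [2m] whose excedance set is exactly {1,...,m−1}. -/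
/-- auxiliary involution of `[2m]` -/
def qaux (m j : ℕ) : ℕ :=
  if 1 ≤ j ∧ j < m then m - j else if j = 2*m then m
  else if m ≤ j ∧ j < 2*m then 3*m - j else j

lemma qaux_mem (m : ℕ) (hm : 1 ≤ m) {j : ℕ} (hj : j ∈ Set.Icc 1 (2*m)) :
    qaux m j ∈ Set.Icc 1 (2*m) := by
  simp only [Set.mem_Icc] at *
  unfold qaux
  split_ifs <;> omega

lemma qaux_invol (m : ℕ) (hm : 1 ≤ m) (j : ℕ) : qaux m (qaux m j) = j := by
  unfold qaux
  split_ifs <;> omega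

/-- the map: `R m f j = 2m+1 - f (qaux m j)` on `[2m]`, identity elsewhere -/
def R (m : ℕ) (f : ℕ → ℕ) (j : ℕ) : ℕ :=
  if j ∈ Set.Icc 1 (2*m) then 2*m + 1 - f (qaux m j) else j

lemma R_permOn (m : ℕ) (hm : 1 ≤ m) {f : ℕ → ℕ} (hf : PermOn (2*m) f) :
    PermOn (2*m) (R m f) := by
  constructor
  · have hq : Set.BijOn (qaux m) (Set.Icc 1 (2*m)) (Set.Icc 1 (2*m)) := by
      refine Set.InvOn.bijOn ⟨?_, ?_⟩ (fun j hj => qaux_mem m hm hj)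
        (fun j hj => qaux_mem m hm hj) <;> exact fun j _ => qaux_invol m hm j
    have hg : Set.BijOn (fun v => 2*m + 1 - v) (Set.Icc 1 (2*m)) (Set.Icc 1 (2*m)) := by
      refine Set.InvOn.bijOn (f' := fun v => 2*m + 1 - v) ⟨?_, ?_⟩ ?_ ?_ <;>
        · intro v hv; simp only [Set.mem_Icc] at *; omega
    have := (hg.comp hf.1).comp hq
    refine this.congr fun j hj => ?_
    simp [R, hj, Function.comp]
  · intro j hj; simp [R, hj]

lemma R_R (m : ℕ) (hm : 1 ≤ m) {f : ℕ → ℕ} (hf : PermOn (2*m) f) :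
    R m (R m f) = f := by
  funext j
  by_cases hj : j ∈ Set.Icc 1 (2*m)
  · have hqj := qaux_mem m hm hj
    have hfj : f (qaux m (qaux m j)) ∈ Set.Icc 1 (2*m) := by
      rw [qaux_invol m hm]; exact hf.1.1 hj
    simp only [R, if_pos hj, if_pos hqj]
    rw [qaux_invol m hm] at *
    simp only [Set.mem_Icc] at hfj
    omega
  · simp [R, hj, hf.2 j hj]

/-- forward direction: toppleable → excedance set [1,m-1] -/
lemma R_exc (m : ℕ) (hm : 1 ≤ m) {f : ℕ → ℕ} (hf : PermOn (2*m) f)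
    (h1 : ∀ i, 1 ≤ i → i ≤ m → f i ≤ m + i)
    (h2 : ∀ i, m + 1 ≤ i → i ≤ 2 * m → i - m + 1 ≤ f i) :
    ExcSet (2*m) (R m f) = Set.Icc 1 (m - 1) := by
  ext j
  simp only [ExcSet, Set.mem_setOf_eq, Set.mem_Icc]
  constructor
  · rintro ⟨⟨hj1, hj2⟩, hlt⟩
    have hjIcc : j ∈ Set.Icc 1 (2*m) := Set.mem_Icc.2 ⟨hj1, hj2⟩
    simp only [R, if_pos hjIcc] at hlt
    by_contra hcon
    push_neg at hcon
    -- j ≥ m, show ¬ (j < R f j)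
    rcases Nat.lt_or_ge j (2*m) with hlt2 | hge2
    · have hq : qaux m j = 3*m - j := by unfold qaux; split_ifs <;> omega
      rw [hq] at hlt
      have := h2 (3*m - j) (by omega) (by omega)
      omega
    · have hj2m : j = 2*m := by omega
      have hq : qaux m j = m := by unfold qaux; split_ifs <;> omega
      have hfm : f m ∈ Set.Icc 1 (2*m) := hf.1.1 (by simp only [Set.mem_Icc]; omega)
      simp only [Set.mem_Icc] at hfm
      rw [hq] at hlt
      omega
  · rintro ⟨hj1, hj2⟩
    have hjIcc : j ∈ Set.Icc 1 (2*m) := Set.mem_Icc.2 ⟨hj1, by omega⟩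
    refine ⟨Set.mem_Icc.1 hjIcc, ?_⟩
    simp only [R, if_pos hjIcc]
    have hq : qaux m j = m - j := by unfold qaux; split_ifs <;> omega
    rw [hq]
    have := h1 (m - j) (by omega) (by omega)
    omega

/-- backward direction: excedance set [1,m-1] → toppleable -/
lemma R_top (m : ℕ) (hm : 1 ≤ m) {f : ℕ → ℕ} (hf : PermOn (2*m) f)
    (hexc : ExcSet (2*m) f = Set.Icc 1 (m - 1)) :
    (∀ i, 1 ≤ i → i ≤ m → R m f i ≤ m + i) ∧
    (∀ i, m + 1 ≤ i → i ≤ 2 * m → i - m + 1 ≤ R m f i) := by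
  have hmem : ∀ j, (j ∈ Set.Icc 1 (2*m) ∧ j < f j) ↔ (1 ≤ j ∧ j ≤ m - 1) := by
    intro j
    have := Set.ext_iff.1 hexc j
    simpa [ExcSet, Set.mem_Icc] using this
  have hbnd : ∀ j, j ∈ Set.Icc 1 (2*m) → f j ∈ Set.Icc 1 (2*m) := fun j hj => hf.1.1 hj
  constructor
  · intro i hi1 hi2
    have hiIcc : i ∈ Set.Icc 1 (2*m) := Set.mem_Icc.2 ⟨hi1, by omega⟩
    simp only [R, if_pos hiIcc]
    rcases Nat.lt_or_ge i m with hlt | hge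
    · have hq : qaux m i = m - i := by unfold qaux; split_ifs <;> omega
      rw [hq]
      have h := (hmem (m - i)).2 ⟨by omega, by omega⟩
      have hb := hbnd (m - i) (by simp only [Set.mem_Icc]; omega)
      simp only [Set.mem_Icc] at hb
      omega
    · have him : i = m := by omega
      have hq : qaux m i = 2*m := by unfold qaux; split_ifs <;> omega
      rw [hq]
      have h2m : ¬ (2*m ∈ Set.Icc 1 (2*m) ∧ 2*m < f (2*m)) := by
        rw [hmem]; omega
      have hb := hbnd (2*m) (by simp only [Set.mem_Icc]; omega)
      simp only [Set.mem_Icc] at h2m hb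
      omega
  · intro i hi1 hi2
    have hiIcc : i ∈ Set.Icc 1 (2*m) := Set.mem_Icc.2 ⟨by omega, hi2⟩
    simp only [R, if_pos hiIcc]
    rcases Nat.lt_or_ge i (2*m) with hlt | hge
    · have hq : qaux m i = 3*m - i := by unfold qaux; split_ifs <;> omega
      rw [hq]
      have h : ¬ ((3*m - i) ∈ Set.Icc 1 (2*m) ∧ (3*m - i) < f (3*m - i)) := by
        rw [hmem]; omega
      have hb := hbnd (3*m - i) (by simp only [Set.mem_Icc]; omega)
      simp only [Set.mem_Icc] at h hb
      omega
    · have hi2m : i = 2*m := by omega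
      have hq : qaux m i = m := by unfold qaux; split_ifs <;> omega
      rw [hq]
      have h : ¬ (m ∈ Set.Icc 1 (2*m) ∧ m < f m) := by
        rw [hmem]; omega
      have hb := hbnd m (by simp only [Set.mem_Icc]; omega)
      simp only [Set.mem_Icc] at h hb
      omega

theorem toppleable_bijection_excedance_even (m : ℕ) (hm : 1 ≤ m) :
    Nat.card {π : ℕ → ℕ // PermOn (2 * m) π ∧
        (∀ i, 1 ≤ i → i ≤ m → π i ≤ m + i) ∧
        (∀ i, m + 1 ≤ i → i ≤ 2 * m → i - m + 1 ≤ π i)} =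
      Nat.card {σ : ℕ → ℕ // PermOn (2 * m) σ ∧ ExcSet (2 * m) σ = Set.Icc 1 (m - 1)} := by
  refine Nat.card_congr ?_
  refine ⟨fun ⟨f, hp, h1, h2⟩ => ⟨R m f, R_permOn m hm hp, R_exc m hm hp h1 h2⟩,
          fun ⟨f, hp, he⟩ => ⟨R m f, R_permOn m hm hp, (R_top m hm hp he).1, (R_top m hm hp he).2⟩,
          ?_, ?_⟩
  · rintro ⟨f, hp, -, -⟩; exact Subtype.ext (R_R m hm hp)
  · rintro ⟨f, hp, -⟩; exact Subtype.ext (R_R m hm hp)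
end

section
/- For n ≥ 1, the set of permutations π of [2n+1] satisfying π(i) ≤ 2i for 1 ≤ i ≤ n and π(n+1+i) ≥ 2i for 1 ≤ i ≤ n is in bijection with the set of permutations of [2n+1] whose excedance set is exactly {1,3,5,...,2n−1}. Explicitly, the map sending π to σ with σ(2i) = π(i), σ(2i−1) = π(n+1+i) for 1 ≤ i ≤ n, and σ(2n+1) = π(n+1), is such a bijection. -/
/-- Index relabeling used by the forward map. -/
def tauF (n j : ℕ) : ℕ :=
  if j = 2 * n + 1 then n + 1
  else if 1 ≤ j ∧ j ≤ 2 * n then (if j % 2 = 0 then j / 2 else n + 1 + (j + 1) / 2)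
  else j

/-- Inverse index relabeling. -/
def tauG (n i : ℕ) : ℕ :=
  if i = n + 1 then 2 * n + 1
  else if 1 ≤ i ∧ i ≤ n then 2 * i
  else if n + 2 ≤ i ∧ i ≤ 2 * n + 1 then 2 * (i - (n + 1)) - 1
  else i

lemma tauF_id {n j : ℕ} (h : j ∉ Set.Icc 1 (2 * n + 1)) : tauF n j = j := by
  simp only [Set.mem_Icc, not_and, not_le] at h
  unfold tauF; split_ifs <;> omega

lemma tauG_id {n i : ℕ} (h : i ∉ Set.Icc 1 (2 * n + 1)) : tauG n i = i := by
  simp only [Set.mem_Icc, not_and, not_le] at h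
  unfold tauG; split_ifs <;> omega

lemma tauF_mem {n j : ℕ} (h : j ∈ Set.Icc 1 (2 * n + 1)) :
    tauF n j ∈ Set.Icc 1 (2 * n + 1) := by
  simp only [Set.mem_Icc] at *
  unfold tauF; split_ifs <;> omega

lemma tauG_mem {n i : ℕ} (h : i ∈ Set.Icc 1 (2 * n + 1)) :
    tauG n i ∈ Set.Icc 1 (2 * n + 1) := by
  simp only [Set.mem_Icc] at *
  unfold tauG; split_ifs <;> omega

lemma tauG_tauF {n j : ℕ} (h : j ∈ Set.Icc 1 (2 * n + 1)) : tauG n (tauF n j) = j := by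
  simp only [Set.mem_Icc] at h
  unfold tauF tauG; split_ifs <;> omega

lemma tauF_tauG {n i : ℕ} (h : i ∈ Set.Icc 1 (2 * n + 1)) : tauF n (tauG n i) = i := by
  simp only [Set.mem_Icc] at h
  unfold tauF tauG; split_ifs <;> omega

lemma tauF_bijOn (n : ℕ) : Set.BijOn (tauF n) (Set.Icc 1 (2 * n + 1)) (Set.Icc 1 (2 * n + 1)) :=
  Set.InvOn.bijOn ⟨fun _ h => tauG_tauF h, fun _ h => tauF_tauG h⟩
    (fun _ h => tauF_mem h) (fun _ h => tauG_mem h)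

lemma tauG_bijOn (n : ℕ) : Set.BijOn (tauG n) (Set.Icc 1 (2 * n + 1)) (Set.Icc 1 (2 * n + 1)) :=
  Set.InvOn.bijOn ⟨fun _ h => tauF_tauG h, fun _ h => tauG_tauF h⟩
    (fun _ h => tauG_mem h) (fun _ h => tauF_mem h)

lemma permOn_comp_tauF {n : ℕ} {π : ℕ → ℕ} (h : PermOn (2 * n + 1) π) :
    PermOn (2 * n + 1) (fun j => π (tauF n j)) :=
  ⟨h.1.comp (tauF_bijOn n), fun j hj => by show π (tauF n j) = j; rw [tauF_id hj]; exact h.2 j hj⟩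

lemma permOn_comp_tauG {n : ℕ} {σ : ℕ → ℕ} (h : PermOn (2 * n + 1) σ) :
    PermOn (2 * n + 1) (fun i => σ (tauG n i)) :=
  ⟨h.1.comp (tauG_bijOn n), fun i hi => by show σ (tauG n i) = i; rw [tauG_id hi]; exact h.2 i hi⟩


lemma tauF_even {n j : ℕ} (h1 : 1 ≤ j) (h2 : j ≤ 2 * n) (h3 : j % 2 = 0) :
    tauF n j = j / 2 := by unfold tauF; split_ifs <;> omega

lemma tauF_odd {n j : ℕ} (h1 : 1 ≤ j) (h2 : j ≤ 2 * n) (h3 : j % 2 = 1) :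
    tauF n j = n + 1 + (j + 1) / 2 := by unfold tauF; split_ifs <;> omega

lemma tauF_top (n : ℕ) : tauF n (2 * n + 1) = n + 1 := by unfold tauF; simp

lemma tauG_low {n i : ℕ} (h1 : 1 ≤ i) (h2 : i ≤ n) : tauG n i = 2 * i := by
  unfold tauG; split_ifs <;> omega

lemma tauG_high {n i : ℕ} (h1 : 1 ≤ i) (h2 : i ≤ n) : tauG n (n + 1 + i) = 2 * i - 1 := by
  unfold tauG; split_ifs <;> omega

lemma exc_of_domain {n : ℕ} (hn : 1 ≤ n) {π : ℕ → ℕ} (h : PermOn (2 * n + 1) π)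
    (hd1 : ∀ i, 1 ≤ i → i ≤ n → π i ≤ 2 * i)
    (hd2 : ∀ i, 1 ≤ i → i ≤ n → 2 * i ≤ π (n + 1 + i)) :
    ExcSet (2 * n + 1) (fun j => π (tauF n j)) = {j | 1 ≤ j ∧ j ≤ 2 * n - 1 ∧ Odd j} := by
  have fact3 : π (n + 1) ≤ 2 * n + 1 := by
    have := h.1.mapsTo (show n + 1 ∈ Set.Icc 1 (2 * n + 1) by simp [Set.mem_Icc]; omega)
    simpa [Set.mem_Icc] using this.2
  ext j
  simp only [ExcSet, Set.mem_setOf_eq, Set.mem_Icc, Nat.odd_iff]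
  constructor
  · rintro ⟨⟨hja, hjb⟩, hlt⟩
    rcases eq_or_ne j (2 * n + 1) with rfl | hne
    · rw [tauF_top] at hlt; omega
    · have hjb' : j ≤ 2 * n := by omega
      rcases Nat.even_or_odd j with he | ho
      · have he' : j % 2 = 0 := Nat.even_iff.mp he
        rw [tauF_even hja hjb' he'] at hlt
        have := hd1 (j / 2) (by omega) (by omega)
        omega
      · have ho' : j % 2 = 1 := Nat.odd_iff.mp ho
        exact ⟨hja, by omega, ho'⟩
  · rintro ⟨hja, hjb, ho⟩
    have hjb' : j ≤ 2 * n := by omega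
    refine ⟨⟨hja, by omega⟩, ?_⟩
    rw [tauF_odd hja hjb' ho]
    have := hd2 ((j + 1) / 2) (by omega) (by omega)
    omega

lemma dom_of_exc {n : ℕ} (hn : 1 ≤ n) {σ : ℕ → ℕ} (_h : PermOn (2 * n + 1) σ)
    (hexc : ExcSet (2 * n + 1) σ = {j | 1 ≤ j ∧ j ≤ 2 * n - 1 ∧ Odd j}) :
    (∀ i, 1 ≤ i → i ≤ n → σ (tauG n i) ≤ 2 * i) ∧
    (∀ i, 1 ≤ i → i ≤ n → 2 * i ≤ σ (tauG n (n + 1 + i))) := by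
  constructor
  · intro i h1 h2
    rw [tauG_low h1 h2]
    have hnot : 2 * i ∉ ExcSet (2 * n + 1) σ := by
      rw [hexc]; simp only [Set.mem_setOf_eq, Nat.odd_iff]; omega
    simp only [ExcSet, Set.mem_setOf_eq, Set.mem_Icc, not_and, not_lt] at hnot
    exact hnot ⟨by omega, by omega⟩
  · intro i h1 h2
    rw [tauG_high h1 h2]
    have hmem : 2 * i - 1 ∈ ExcSet (2 * n + 1) σ := by
      rw [hexc]; simp only [Set.mem_setOf_eq, Nat.odd_iff]; omega
    simp only [ExcSet, Set.mem_setOf_eq, Set.mem_Icc] at hmem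
    omega


theorem collapsed_bijection_genocchi (n : ℕ) (hn : 1 ≤ n) :
    Set.BijOn
      (fun (π : ℕ → ℕ) => fun (j : ℕ) =>
        if j = 2 * n + 1 then π (n + 1)
        else if 1 ≤ j ∧ j ≤ 2 * n then
          (if j % 2 = 0 then π (j / 2) else π (n + 1 + (j + 1) / 2))
        else j)
      {π : ℕ → ℕ | PermOn (2 * n + 1) π ∧
        (∀ i, 1 ≤ i → i ≤ n → π i ≤ 2 * i) ∧
        (∀ i, 1 ≤ i → i ≤ n → 2 * i ≤ π (n + 1 + i))}
      {σ : ℕ → ℕ | PermOn (2 * n + 1) σ ∧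
        ExcSet (2 * n + 1) σ = {j | 1 ≤ j ∧ j ≤ 2 * n - 1 ∧ Odd j}} := by
  -- the forward map agrees with `π ∘ tauF n` whenever `π` is the identity outside `[1, 2n+1]`
  have hFeq : ∀ π : ℕ → ℕ, (∀ i, i ∉ Set.Icc 1 (2 * n + 1) → π i = i) →
      (fun (j : ℕ) =>
        if j = 2 * n + 1 then π (n + 1)
        else if 1 ≤ j ∧ j ≤ 2 * n then
          (if j % 2 = 0 then π (j / 2) else π (n + 1 + (j + 1) / 2))
        else j) = fun j => π (tauF n j) := by
    intro π hπ
    funext j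
    unfold tauF
    split_ifs with h1 h2 h3
    · rfl
    · rfl
    · rfl
    · exact (hπ j (by simp only [Set.mem_Icc, not_and, not_le]; omega)).symm
  apply Set.InvOn.bijOn (f' := fun (σ : ℕ → ℕ) => fun i => σ (tauG n i))
  · constructor
    · -- left inverse on the domain
      rintro π ⟨hperm, hd1, hd2⟩
      funext i
      refine (congrFun (hFeq π hperm.2) (tauG n i)).trans ?_
      show π (tauF n (tauG n i)) = π i
      rcases em (i ∈ Set.Icc 1 (2 * n + 1)) with hi | hi
      · rw [tauF_tauG hi]
      · rw [tauG_id hi, tauF_id hi]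
    · -- right inverse on the codomain
      rintro σ ⟨hperm, hexc⟩
      simp only
      rw [hFeq (fun i => σ (tauG n i))
        (fun i hi => by show σ (tauG n i) = i; rw [tauG_id hi]; exact hperm.2 i hi)]
      funext j
      show σ (tauG n (tauF n j)) = σ j
      rcases em (j ∈ Set.Icc 1 (2 * n + 1)) with hj | hj
      · rw [tauG_tauF hj]
      · rw [tauF_id hj, tauG_id hj]
  · -- maps to
    rintro π ⟨hperm, hd1, hd2⟩
    simp only [Set.mem_setOf_eq]
    rw [hFeq π hperm.2]
    exact ⟨permOn_comp_tauF hperm, exc_of_domain hn hperm hd1 hd2⟩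
  · -- inverse maps to
    rintro σ ⟨hperm, hexc⟩
    simp only [Set.mem_setOf_eq]
    obtain ⟨hb1, hb2⟩ := dom_of_exc hn hperm hexc
    exact ⟨permOn_comp_tauG hperm, hb1, hb2⟩
end

section
/- For n ≥ 1, the cardinality of the set G_{2n} of permutations π of [2n] such that π^{-1}(k) ≥ 1 + ⌊k/2⌋ and π^{-1}(k) ≤ n + ⌊k/2⌋ for all k ∈ [2n] is divisible by 2^{n−1}. -/
namespace CollapsedAux

/-- Swap values `2j+2 ↔ 2j+3` for each `j` with `b j = true` (`j = k/2 - 1 < n-1`). -/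
def sw (n : ℕ) (b : ℕ → Bool) (k : ℕ) : ℕ :=
  if 2 ≤ k ∧ k ≤ 2 * n - 1 ∧ b (k / 2 - 1) = true then
    (if k % 2 = 0 then k + 1 else k - 1) else k

lemma sw_div (n : ℕ) (b : ℕ → Bool) (k : ℕ) : sw n b k / 2 = k / 2 := by
  unfold sw; split_ifs <;> omega

lemma sw_invol (n : ℕ) (b : ℕ → Bool) (k : ℕ) : sw n b (sw n b k) = k := by
  by_cases h : 2 ≤ k ∧ k ≤ 2 * n - 1 ∧ b (k / 2 - 1) = true
  · obtain ⟨h1, h2, h3⟩ := h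
    by_cases he : k % 2 = 0
    · have e1 : sw n b k = k + 1 := by
        unfold sw; rw [if_pos ⟨h1, h2, h3⟩, if_pos he]
      have e2 : (k + 1) / 2 - 1 = k / 2 - 1 := by omega
      have e3 : sw n b (k + 1) = k := by
        unfold sw
        rw [e2, if_pos ⟨by omega, by omega, h3⟩, if_neg (by omega)]
        omega
      rw [e1, e3]
    · have e1 : sw n b k = k - 1 := by
        unfold sw; rw [if_pos ⟨h1, h2, h3⟩, if_neg he]
      have e2 : (k - 1) / 2 - 1 = k / 2 - 1 := by omega
      have e3 : sw n b (k - 1) = k := by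
        unfold sw
        rw [e2, if_pos ⟨by omega, by omega, h3⟩, if_pos (by omega)]
        omega
      rw [e1, e3]
  · have e1 : sw n b k = k := by unfold sw; rw [if_neg h]
    rw [e1, e1]

lemma sw_inj (n : ℕ) (b : ℕ → Bool) : Function.Injective (sw n b) := by
  intro a c h
  rw [← sw_invol n b a, h, sw_invol]

lemma sw_mem {n : ℕ} (b : ℕ → Bool) {k : ℕ} (hk : k ∈ Set.Icc 1 (2 * n)) :
    sw n b k ∈ Set.Icc 1 (2 * n) := by
  simp only [Set.mem_Icc] at hk ⊢
  unfold sw; split_ifs <;> omega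

lemma sw_fix {n : ℕ} (b : ℕ → Bool) {k : ℕ} (hk : k ∉ Set.Icc 1 (2 * n)) :
    sw n b k = k := by
  simp only [Set.mem_Icc, not_and_or, not_le] at hk
  unfold sw
  rw [if_neg]
  rintro ⟨h1, h2, -⟩
  omega

lemma permOn_bijective {N : ℕ} {π : ℕ → ℕ} (h : PermOn N π) : Function.Bijective π := by
  obtain ⟨⟨hmap, hinj, hsurj⟩, hid⟩ := h
  constructor
  · intro a b hab
    by_cases ha : a ∈ Set.Icc 1 N <;> by_cases hb : b ∈ Set.Icc 1 N
    · exact hinj ha hb hab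
    · exact absurd (by rw [← hid b hb, ← hab]; exact hmap ha) hb
    · exact absurd (by rw [← hid a ha, hab]; exact hmap hb) ha
    · rw [← hid a ha, ← hid b hb, hab]
  · intro k
    by_cases hk : k ∈ Set.Icc 1 N
    · obtain ⟨i, -, hi⟩ := hsurj hk
      exact ⟨i, hi⟩
    · exact ⟨k, hid k hk⟩

lemma invFun_eq_of {π : ℕ → ℕ} (h : Function.Bijective π) {i k : ℕ} (hik : π i = k) :
    Function.invFun π k = i := by
  apply h.1
  rw [Function.invFun_eq ⟨i, hik⟩, hik]

lemma permOn_comp {n : ℕ} (b : ℕ → Bool) {π : ℕ → ℕ} (hπ : PermOn (2 * n) π) :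
    PermOn (2 * n) (sw n b ∘ π) := by
  have hb := permOn_bijective hπ
  refine ⟨⟨?_, ?_, ?_⟩, ?_⟩
  · intro i hi
    exact sw_mem b (hπ.1.1 hi)
  · intro a _ c _ h
    exact hb.1 (sw_inj n b h)
  · intro k hk
    refine ⟨Function.invFun π (sw n b k), ?_, ?_⟩
    · have hpk : π (Function.invFun π (sw n b k)) = sw n b k :=
        Function.invFun_eq (hb.2 (sw n b k))
      by_contra hmem
      rw [hπ.2 _ hmem] at hpk
      rw [hpk] at hmem
      exact hmem (sw_mem b hk)
    · show sw n b (π (Function.invFun π (sw n b k))) = k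
      rw [Function.invFun_eq (hb.2 (sw n b k)), sw_invol]
  · intro i hi
    show sw n b (π i) = i
    rw [hπ.2 i hi, sw_fix b hi]

/-- The predicate of the theorem. -/
def Good (n : ℕ) (π : ℕ → ℕ) : Prop :=
  PermOn (2 * n) π ∧
    ∀ k ∈ Set.Icc 1 (2 * n), ∀ i, π i = k → 1 + k / 2 ≤ i ∧ i ≤ n + k / 2

lemma good_comp {n : ℕ} (b : ℕ → Bool) {π : ℕ → ℕ} (h : Good n π) :
    Good n (sw n b ∘ π) := by
  refine ⟨permOn_comp b h.1, ?_⟩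
  intro k hk i hik
  have hik' : sw n b (π i) = k := hik
  have hπi : π i = sw n b k := by
    rw [← sw_invol n b (π i), hik']
  have := h.2 (sw n b k) (sw_mem b hk) i hπi
  have hd := sw_div n b k
  omega

lemma pos_comp {n : ℕ} {π : ℕ → ℕ} (hπ : PermOn (2 * n) π) (b : ℕ → Bool) (k : ℕ) :
    Function.invFun (sw n b ∘ π) k = Function.invFun π (sw n b k) := by
  have hb := permOn_bijective hπ
  have hc := permOn_bijective (permOn_comp b hπ)
  apply invFun_eq_of hc
  show sw n b (π (Function.invFun π (sw n b k))) = k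
  rw [Function.invFun_eq (hb.2 (sw n b k)), sw_invol]

lemma pos_ne {π : ℕ → ℕ} (hπ : Function.Bijective π) {k l : ℕ} (hkl : k ≠ l) :
    Function.invFun π k ≠ Function.invFun π l := by
  intro h
  have h1 : π (Function.invFun π k) = k := Function.invFun_eq (hπ.2 k)
  have h2 : π (Function.invFun π l) = l := Function.invFun_eq (hπ.2 l)
  rw [← h, h1] at h2
  exact hkl h2

/-- Extend `c : Fin (n-1) → Bool` to `ℕ → Bool` by `false`. -/
def ext (n : ℕ) (c : Fin (n - 1) → Bool) : ℕ → Bool :=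
  fun j => if h : j < n - 1 then c ⟨j, h⟩ else false

lemma sw_ext_pair {n : ℕ} (hn : 1 ≤ n) (c : Fin (n - 1) → Bool) (i : Fin (n - 1)) :
    sw n (ext n c) (2 * i + 2) = (if c i then 2 * (i : ℕ) + 3 else 2 * (i : ℕ) + 2) ∧
    sw n (ext n c) (2 * i + 3) = (if c i then 2 * (i : ℕ) + 2 else 2 * (i : ℕ) + 3) := by
  have hi : (i : ℕ) < n - 1 := i.2
  have h1 : ext n c ((2 * (i : ℕ) + 2) / 2 - 1) = c i := by
    have e : (2 * (i : ℕ) + 2) / 2 - 1 = (i : ℕ) := by omega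
    rw [e]
    simp [ext, hi]
  have h2 : ext n c ((2 * (i : ℕ) + 3) / 2 - 1) = c i := by
    have e : (2 * (i : ℕ) + 3) / 2 - 1 = (i : ℕ) := by omega
    rw [e]
    simp [ext, hi]
  cases hc : c i with
  | true =>
      refine ⟨?_, ?_⟩
      · unfold sw
        rw [if_pos ⟨by omega, by omega, by rw [h1, hc]⟩, if_pos (by omega)]
        simp
      · unfold sw
        rw [if_pos ⟨by omega, by omega, by rw [h2, hc]⟩, if_neg (by omega)]
        simp
  | false =>
      refine ⟨?_, ?_⟩
      · unfold sw
        rw [if_neg]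
        · simp
        · rintro ⟨-, -, hb⟩
          rw [h1, hc] at hb
          exact absurd hb (by simp)
      · unfold sw
        rw [if_neg]
        · simp
        · rintro ⟨-, -, hb⟩
          rw [h2, hc] at hb
          exact absurd hb (by simp)

/-- Whether value `2i+3` appears before value `2i+2`. -/
noncomputable def bcomp (n : ℕ) (π : ℕ → ℕ) (i : Fin (n - 1)) : Bool :=
  decide (Function.invFun π (2 * (i : ℕ) + 3) < Function.invFun π (2 * (i : ℕ) + 2))

lemma bcomp_comp {n : ℕ} (hn : 1 ≤ n) {π : ℕ → ℕ} (hπ : PermOn (2 * n) π)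
    (c : Fin (n - 1) → Bool) (i : Fin (n - 1)) :
    bcomp n (sw n (ext n c) ∘ π) i = xor (c i) (bcomp n π i) := by
  obtain ⟨he, ho⟩ := sw_ext_pair hn c i
  have hb := permOn_bijective hπ
  have ne : Function.invFun π (2 * (i : ℕ) + 3) ≠ Function.invFun π (2 * (i : ℕ) + 2) :=
    pos_ne hb (by omega)
  unfold bcomp
  rw [pos_comp hπ, pos_comp hπ, he, ho]
  cases hc : c i with
  | false => simp
  | true =>
      simp only [if_true, Bool.true_xor]
      rcases Nat.lt_trichotomy (Function.invFun π (2 * (i : ℕ) + 3))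
        (Function.invFun π (2 * (i : ℕ) + 2)) with h | h | h
      · simp [h, Nat.lt_asymm h]
      · exact absurd h ne
      · simp [h, Nat.lt_asymm h]

end CollapsedAux

open CollapsedAux in
theorem card_collapsed_even_divisible (n : ℕ) (hn : 1 ≤ n) :
    2 ^ (n - 1) ∣
      Nat.card {π : ℕ → ℕ // PermOn (2 * n) π ∧
        ∀ k ∈ Set.Icc 1 (2 * n), ∀ i, π i = k → 1 + k / 2 ≤ i ∧ i ≤ n + k / 2} := by
  classical
  have key : {π : ℕ → ℕ // Good n π} ≃
      (Fin (n - 1) → Bool) ×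
        {π : ℕ → ℕ // Good n π ∧ ∀ i : Fin (n - 1),
          Function.invFun π (2 * (i : ℕ) + 2) < Function.invFun π (2 * (i : ℕ) + 3)} := by
    refine
      { toFun := fun π =>
          ⟨bcomp n π.1, ⟨sw n (ext n (bcomp n π.1)) ∘ π.1, good_comp _ π.2, ?_⟩⟩
        invFun := fun p => ⟨sw n (ext n p.1) ∘ p.2.1, good_comp _ p.2.2.1⟩
        left_inv := ?_
        right_inv := ?_ }
    · intro i
      have hflip := bcomp_comp hn π.2.1 (bcomp n π.1) i
      rw [Bool.xor_self] at hflip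
      have hd : ¬ (Function.invFun (sw n (ext n (bcomp n π.1)) ∘ π.1) (2 * (i : ℕ) + 3) <
          Function.invFun (sw n (ext n (bcomp n π.1)) ∘ π.1) (2 * (i : ℕ) + 2)) := by
        have := of_decide_eq_false hflip
        exact this
      have hne : Function.invFun (sw n (ext n (bcomp n π.1)) ∘ π.1) (2 * (i : ℕ) + 2) ≠
          Function.invFun (sw n (ext n (bcomp n π.1)) ∘ π.1) (2 * (i : ℕ) + 3) :=
        pos_ne (permOn_bijective (permOn_comp _ π.2.1)) (by omega)
      omega
    · intro π
      apply Subtype.ext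
      funext x
      exact sw_invol n (ext n (bcomp n π.1)) (π.1 x)
    · rintro ⟨c, ρ, hρ, hY⟩
      have h1 : bcomp n (sw n (ext n c) ∘ ρ) = c := by
        funext i
        rw [bcomp_comp hn hρ.1 c i]
        have hz : bcomp n ρ i = false := by
          unfold bcomp
          exact decide_eq_false (Nat.lt_asymm (hY i))
        rw [hz, Bool.xor_false]
      refine Prod.ext h1 (Subtype.ext ?_)
      show sw n (ext n (bcomp n (sw n (ext n c) ∘ ρ))) ∘ (sw n (ext n c) ∘ ρ) = ρ
      rw [h1]
      funext x
      exact sw_invol n (ext n c) (ρ x)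
  have hcard : Nat.card {π : ℕ → ℕ // Good n π} =
      2 ^ (n - 1) * Nat.card {π : ℕ → ℕ // Good n π ∧ ∀ i : Fin (n - 1),
        Function.invFun π (2 * (i : ℕ) + 2) < Function.invFun π (2 * (i : ℕ) + 3)} := by
    rw [Nat.card_congr key, Nat.card_prod]
    congr 1
    rw [Nat.card_eq_fintype_card]
    simp
  exact Dvd.intro _ (by rw [← hcard]; rfl)
end

section
/- For n ≥ 1, the number of permutations π of [2n] such that π^{-1}(k) ≥ 1 + ⌊k/2⌋ and π^{-1}(k) ≤ n + ⌊k/2⌋ for all k, and additionally π^{-1}(2i) < π^{-1}(2i+1) for all 1 ≤ i ≤ n−1, equals the number of Dellac configurations of order n−1. -/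
/-- A Dellac configuration of order `N`: a set of cells of a `2N × N` array
(rows `1,…,2N`, columns `1,…,N`) with exactly one point in each row, exactly two
points in each column, and every point `(r, j)` of column `j` in a row `r` with
`j ≤ r ≤ N + j`. -/
def IsDellac (N : ℕ) (C : Finset (ℕ × ℕ)) : Prop :=
  (∀ p ∈ C, p.1 ∈ Finset.Icc 1 (2 * N) ∧ p.2 ∈ Finset.Icc 1 N) ∧
  (∀ r ∈ Finset.Icc 1 (2 * N), (C.filter (fun p => p.1 = r)).card = 1) ∧
  (∀ j ∈ Finset.Icc 1 N, (C.filter (fun p => p.2 = j)).card = 2) ∧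
  (∀ p ∈ C, p.2 ≤ p.1 ∧ p.1 ≤ N + p.2)

noncomputable section
open Finset
open scoped Classical

def colOf (C : Finset (ℕ × ℕ)) (r : ℕ) : ℕ :=
  ∑ p ∈ C.filter (fun p => p.1 = r), p.2

lemma row_filter_eq {N : ℕ} {C : Finset (ℕ × ℕ)} (hD : IsDellac N C)
    {r j : ℕ} (h : (r, j) ∈ C) :
    C.filter (fun p => p.1 = r) = {(r, j)} := by
  have hr : r ∈ Finset.Icc 1 (2 * N) := (hD.1 _ h).1
  have hc := hD.2.1 r hr
  obtain ⟨a, ha⟩ := Finset.card_eq_one.mp hc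
  have hmem : (r, j) ∈ C.filter (fun p => p.1 = r) := by
    simp [Finset.mem_filter, h]
  rw [ha] at hmem ⊢
  simp only [Finset.mem_singleton] at hmem
  rw [hmem]

lemma colOf_eq {N : ℕ} {C : Finset (ℕ × ℕ)} (hD : IsDellac N C)
    {r j : ℕ} (h : (r, j) ∈ C) : colOf C r = j := by
  rw [colOf, row_filter_eq hD h]; simp

lemma col_mem {N : ℕ} {C : Finset (ℕ × ℕ)} (hD : IsDellac N C)
    {r : ℕ} (hr : r ∈ Finset.Icc 1 (2 * N)) : (r, colOf C r) ∈ C := by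
  have hc := hD.2.1 r hr
  obtain ⟨a, ha⟩ := Finset.card_eq_one.mp hc
  have haf : a ∈ C.filter (fun p => p.1 = r) := by rw [ha]; simp
  rw [Finset.mem_filter] at haf
  have : colOf C r = a.2 := by rw [colOf, ha]; simp
  rw [this, ← haf.2]
  exact haf.1

lemma col_rows {N : ℕ} {C : Finset (ℕ × ℕ)} (hD : IsDellac N C)
    {j : ℕ} (hj : j ∈ Finset.Icc 1 N) :
    ∃ r₁ r₂, r₁ < r₂ ∧ C.filter (fun p => p.2 = j) = {(r₁, j), (r₂, j)} := by
  have hc := hD.2.2.1 j hj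
  obtain ⟨a, b, hab, hset⟩ := Finset.card_eq_two.mp hc
  have haf : a ∈ C.filter (fun p => p.2 = j) := by rw [hset]; simp
  have hbf : b ∈ C.filter (fun p => p.2 = j) := by rw [hset]; simp
  rw [Finset.mem_filter] at haf hbf
  have ha2 : a = (a.1, j) := by rw [← haf.2]
  have hb2 : b = (b.1, j) := by rw [← hbf.2]
  have hne : a.1 ≠ b.1 := by
    intro h; apply hab; rw [ha2, hb2, h]
  rcases lt_or_gt_of_ne hne with h | h
  · exact ⟨a.1, b.1, h, by rw [hset, ha2, hb2]⟩
  · exact ⟨b.1, a.1, h, by rw [hset, ha2, hb2, Finset.pair_comm]⟩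

lemma mem_col_iff {C : Finset (ℕ × ℕ)} {j r₁ r₂ : ℕ}
    (hfil : C.filter (fun p => p.2 = j) = {(r₁, j), (r₂, j)}) (r : ℕ) :
    (r, j) ∈ C ↔ r = r₁ ∨ r = r₂ := by
  constructor
  · intro h
    have : (r, j) ∈ C.filter (fun p => p.2 = j) := by simp [Finset.mem_filter, h]
    rw [hfil] at this
    simp only [Finset.mem_insert, Finset.mem_singleton, Prod.mk.injEq] at this
    tauto
  · intro h
    have : (r, j) ∈ C.filter (fun p => p.2 = j) := by
      rw [hfil]; rcases h with h | h <;> simp [h]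
    exact (Finset.mem_filter.mp this).1

def dperm (n : ℕ) (C : Finset (ℕ × ℕ)) (i : ℕ) : ℕ :=
  if 2 ≤ i ∧ i ≤ 2 * n - 1 then
    2 * colOf C (i - 1) + (if ∃ r, r < i - 1 ∧ (r, colOf C (i - 1)) ∈ C then 1 else 0)
  else i

lemma dperm_val {n : ℕ} (hn : 1 ≤ n) {C : Finset (ℕ × ℕ)} (hD : IsDellac (n - 1) C)
    {j r₁ r₂ : ℕ} (hlt : r₁ < r₂)
    (hfil : C.filter (fun p => p.2 = j) = {(r₁, j), (r₂, j)}) :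
    dperm n C (r₁ + 1) = 2 * j ∧ dperm n C (r₂ + 1) = 2 * j + 1 ∧
      r₁ ∈ Finset.Icc 1 (2 * (n - 1)) ∧ r₂ ∈ Finset.Icc 1 (2 * (n - 1)) := by
  have h1 : (r₁, j) ∈ C := (mem_col_iff hfil r₁).mpr (Or.inl rfl)
  have h2 : (r₂, j) ∈ C := (mem_col_iff hfil r₂).mpr (Or.inr rfl)
  have hr1 : r₁ ∈ Finset.Icc 1 (2 * (n - 1)) := (hD.1 _ h1).1
  have hr2 : r₂ ∈ Finset.Icc 1 (2 * (n - 1)) := (hD.1 _ h2).1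
  simp only [Finset.mem_Icc] at hr1 hr2
  have hc1 : colOf C r₁ = j := colOf_eq hD h1
  have hc2 : colOf C r₂ = j := colOf_eq hD h2
  refine ⟨?_, ?_, by simp [Finset.mem_Icc]; omega, by simp [Finset.mem_Icc]; omega⟩
  · rw [dperm, if_pos (by omega)]
    simp only [Nat.add_sub_cancel, hc1]
    rw [if_neg, add_zero]
    rintro ⟨r, hr, hrm⟩
    rcases (mem_col_iff hfil r).mp hrm with h | h <;> omega
  · rw [dperm, if_pos (by omega)]
    simp only [Nat.add_sub_cancel, hc2]
    rw [if_pos ⟨r₁, hlt, h1⟩]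

lemma dperm_inv {n : ℕ} (hn : 1 ≤ n) {C : Finset (ℕ × ℕ)} (hD : IsDellac (n - 1) C)
    {i : ℕ} (h2 : 2 ≤ i) (h2' : i ≤ 2 * n - 1) :
    ∃ j r₁ r₂, j ∈ Finset.Icc 1 (n - 1) ∧ r₁ < r₂ ∧
      C.filter (fun p => p.2 = j) = {(r₁, j), (r₂, j)} ∧
      (i = r₁ + 1 ∨ i = r₂ + 1) ∧ colOf C (i - 1) = j := by
  have hr : i - 1 ∈ Finset.Icc 1 (2 * (n - 1)) := by simp [Finset.mem_Icc]; omega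
  have hm : (i - 1, colOf C (i - 1)) ∈ C := col_mem hD hr
  set j := colOf C (i - 1) with hjdef
  have hj : j ∈ Finset.Icc 1 (n - 1) := (hD.1 _ hm).2
  obtain ⟨r₁, r₂, hlt, hfil⟩ := col_rows hD hj
  refine ⟨j, r₁, r₂, hj, hlt, hfil, ?_, rfl⟩
  rcases (mem_col_iff hfil (i - 1)).mp hm with h | h <;> omega

end
section Good
open Finset

variable {n : ℕ} {π : ℕ → ℕ}

def Good (n : ℕ) (π : ℕ → ℕ) : Prop :=
  PermOn (2 * n) π ∧
    (∀ k ∈ Set.Icc 1 (2 * n), ∀ i, π i = k → 1 + k / 2 ≤ i ∧ i ≤ n + k / 2) ∧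
    (∀ i, 1 ≤ i → i ≤ n - 1 → ∀ p q, π p = 2 * i → π q = 2 * i + 1 → p < q)

lemma good_one (hn : 1 ≤ n) (hg : Good n π) : π 1 = 1 := by
  have h1 : (1 : ℕ) ∈ Set.Icc 1 (2 * n) := by simp [Set.mem_Icc]; omega
  have hm : π 1 ∈ Set.Icc 1 (2 * n) := hg.1.1.1 h1
  simp only [Set.mem_Icc] at hm
  have := hg.2.1 (π 1) (by simp [Set.mem_Icc]; omega) 1 rfl
  omega

lemma good_top (hn : 1 ≤ n) (hg : Good n π) : π (2 * n) = 2 * n := by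
  have h1 : (2 * n : ℕ) ∈ Set.Icc 1 (2 * n) := by simp [Set.mem_Icc]; omega
  have hm : π (2 * n) ∈ Set.Icc 1 (2 * n) := hg.1.1.1 h1
  simp only [Set.mem_Icc] at hm
  have := hg.2.1 (π (2 * n)) (by simp [Set.mem_Icc]; omega) (2 * n) rfl
  omega

lemma good_mid (hn : 1 ≤ n) (hg : Good n π) {i : ℕ} (h2 : 2 ≤ i) (h2' : i ≤ 2 * n - 1) :
    2 ≤ π i ∧ π i ≤ 2 * n - 1 := by
  have hi : i ∈ Set.Icc 1 (2 * n) := by simp [Set.mem_Icc]; omega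
  have hm : π i ∈ Set.Icc 1 (2 * n) := hg.1.1.1 hi
  simp only [Set.mem_Icc] at hm
  have hne1 : π i ≠ 1 := by
    intro h
    have : i = 1 := hg.1.1.2.1 hi (by simp [Set.mem_Icc]; omega)
      (by rw [h, good_one hn hg])
    omega
  have hne2 : π i ≠ 2 * n := by
    intro h
    have : i = 2 * n := hg.1.1.2.1 hi (by simp [Set.mem_Icc]; omega)
      (by rw [h, good_top hn hg])
    omega
  omega

/-- positions of the pair `2j, 2j+1` under a good permutation -/
lemma pos_pair (hn : 1 ≤ n) (hg : Good n π) {j : ℕ} (hj : 1 ≤ j) (hj' : j ≤ n - 1) :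
    ∃ p₁ p₂, p₁ < p₂ ∧ 2 ≤ p₁ ∧ p₁ ≤ 2 * n - 1 ∧ 2 ≤ p₂ ∧ p₂ ≤ 2 * n - 1 ∧
      π p₁ = 2 * j ∧ π p₂ = 2 * j + 1 ∧
      (∀ i, 2 ≤ i → i ≤ 2 * n - 1 → π i / 2 = j → i = p₁ ∨ i = p₂) := by
  have hsurj := hg.1.1.2.2
  have hk1 : (2 * j : ℕ) ∈ Set.Icc 1 (2 * n) := by simp [Set.mem_Icc]; omega
  have hk2 : (2 * j + 1 : ℕ) ∈ Set.Icc 1 (2 * n) := by simp [Set.mem_Icc]; omega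
  obtain ⟨p₁, hp₁m, hp₁⟩ := hsurj hk1
  obtain ⟨p₂, hp₂m, hp₂⟩ := hsurj hk2
  simp only [Set.mem_Icc] at hp₁m hp₂m
  have h1 : π 1 = 1 := good_one hn hg
  have htop : π (2 * n) = 2 * n := good_top hn hg
  have hp₁r : 2 ≤ p₁ ∧ p₁ ≤ 2 * n - 1 := by
    constructor
    · rcases Nat.lt_or_ge p₁ 2 with h | h
      · exfalso; interval_cases p₁ <;> omega
      · exact h
    · rcases Nat.lt_or_ge (2 * n - 1) p₁ with h | h
      · exfalso
        have : p₁ = 2 * n := by omega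
        rw [this, htop] at hp₁; omega
      · exact h
  have hp₂r : 2 ≤ p₂ ∧ p₂ ≤ 2 * n - 1 := by
    constructor
    · rcases Nat.lt_or_ge p₂ 2 with h | h
      · exfalso; interval_cases p₂ <;> omega
      · exact h
    · rcases Nat.lt_or_ge (2 * n - 1) p₂ with h | h
      · exfalso
        have : p₂ = 2 * n := by omega
        rw [this, htop] at hp₂; omega
      · exact h
  have hlt : p₁ < p₂ := hg.2.2 j hj hj' p₁ p₂ hp₁ hp₂
  refine ⟨p₁, p₂, hlt, hp₁r.1, hp₁r.2, hp₂r.1, hp₂r.2, hp₁, hp₂, ?_⟩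
  intro i hi hi' hdiv
  have hiv : π i = 2 * j ∨ π i = 2 * j + 1 := by omega
  have him : i ∈ Set.Icc 1 (2 * n) := by simp [Set.mem_Icc]; omega
  rcases hiv with h | h
  · left
    exact hg.1.1.2.1 him (by simp [Set.mem_Icc]; omega) (by rw [h, hp₁])
  · right
    exact hg.1.1.2.1 him (by simp [Set.mem_Icc]; omega) (by rw [h, hp₂])

end Good

section Fwd
open Finset

def toDellac (n : ℕ) (π : ℕ → ℕ) : Finset (ℕ × ℕ) :=
  (Finset.Icc 2 (2 * n - 1)).image (fun i => (i - 1, π i / 2))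

variable {n : ℕ} {π : ℕ → ℕ}

lemma mem_toDellac {p : ℕ × ℕ} :
    p ∈ toDellac n π ↔ ∃ i, 2 ≤ i ∧ i ≤ 2 * n - 1 ∧ p = (i - 1, π i / 2) := by
  simp only [toDellac, Finset.mem_image, Finset.mem_Icc]
  constructor
  · rintro ⟨i, ⟨h1, h2⟩, h3⟩; exact ⟨i, h1, h2, h3.symm⟩
  · rintro ⟨i, h1, h2, h3⟩; exact ⟨i, ⟨h1, h2⟩, h3.symm⟩

lemma toDellac_isDellac (hn : 1 ≤ n) (hg : Good n π) : IsDellac (n - 1) (toDellac n π) := by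
  have hbnd : ∀ i, 2 ≤ i → i ≤ 2 * n - 1 →
      1 ≤ π i / 2 ∧ π i / 2 ≤ n - 1 ∧ π i / 2 ≤ i - 1 ∧ i - 1 ≤ (n - 1) + π i / 2 := by
    intro i h1 h2
    have hm := good_mid hn hg h1 h2
    have hp := hg.2.1 (π i) (by simp [Set.mem_Icc]; omega) i rfl
    omega
  refine ⟨?_, ?_, ?_, ?_⟩
  · rintro p hp
    obtain ⟨i, h1, h2, rfl⟩ := mem_toDellac.mp hp
    have := hbnd i h1 h2
    simp only [Finset.mem_Icc]
    omega
  · intro r hr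
    simp only [Finset.mem_Icc] at hr
    have hfil : (toDellac n π).filter (fun p => p.1 = r) = {(r, π (r + 1) / 2)} := by
      apply Finset.eq_singleton_iff_unique_mem.mpr
      constructor
      · rw [Finset.mem_filter]
        refine ⟨mem_toDellac.mpr ⟨r + 1, by omega, by omega, by simp⟩, rfl⟩
      · intro q hq
        rw [Finset.mem_filter] at hq
        obtain ⟨i, h1, h2, rfl⟩ := mem_toDellac.mp hq.1
        have : i = r + 1 := by
          have := hq.2; simp at this; omega
        subst this
        simp
    rw [hfil, Finset.card_singleton]
  · intro j hj
    simp only [Finset.mem_Icc] at hj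
    obtain ⟨p₁, p₂, hlt, ha, hb, hc, hd, hv1, hv2, huniq⟩ := pos_pair hn hg hj.1 hj.2
    have hfil : (toDellac n π).filter (fun p => p.2 = j) = {(p₁ - 1, j), (p₂ - 1, j)} := by
      ext q
      simp only [Finset.mem_filter, Finset.mem_insert, Finset.mem_singleton]
      constructor
      · rintro ⟨hq, hq2⟩
        obtain ⟨i, h1, h2, rfl⟩ := mem_toDellac.mp hq
        simp only at hq2
        rcases huniq i h1 h2 hq2 with rfl | rfl
        · left; rw [hq2]
        · right; rw [hq2]
      · rintro (rfl | rfl)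
        · refine ⟨mem_toDellac.mpr ⟨p₁, ha, hb, by rw [hv1]; congr 1; omega⟩, rfl⟩
        · refine ⟨mem_toDellac.mpr ⟨p₂, hc, hd, by rw [hv2]; congr 1; omega⟩, rfl⟩
    rw [hfil, Finset.card_insert_of_notMem (by simp; omega), Finset.card_singleton]
  · rintro p hp
    obtain ⟨i, h1, h2, rfl⟩ := mem_toDellac.mp hp
    have := hbnd i h1 h2
    simp only
    omega

lemma toDellac_inj (hn : 1 ≤ n) {π' : ℕ → ℕ} (hg : Good n π) (hg' : Good n π')
    (heq : toDellac n π = toDellac n π') : π = π' := by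
  have hdiv : ∀ i, 2 ≤ i → i ≤ 2 * n - 1 → π i / 2 = π' i / 2 := by
    intro i h1 h2
    have hm : ((i - 1 : ℕ), π i / 2) ∈ toDellac n π' := by
      rw [← heq]; exact mem_toDellac.mpr ⟨i, h1, h2, rfl⟩
    obtain ⟨i', h1', h2', hpe⟩ := mem_toDellac.mp hm
    have hii : i' = i := by
      have := congrArg Prod.fst hpe; simp at this; omega
    subst hii
    have := congrArg Prod.snd hpe; simpa using this
  funext i
  by_cases hi : 2 ≤ i ∧ i ≤ 2 * n - 1
  · obtain ⟨h1, h2⟩ := hi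
    have hj := good_mid hn hg h1 h2
    set j := π i / 2 with hjdef
    have hj1 : 1 ≤ j ∧ j ≤ n - 1 := by omega
    obtain ⟨p₁, p₂, hlt, ha, hb, hc, hd, hv1, hv2, huniq⟩ := pos_pair hn hg hj1.1 hj1.2
    obtain ⟨q₁, q₂, hlt', ha', hb', hc', hd', hw1, hw2, huniq'⟩ := pos_pair hn hg' hj1.1 hj1.2
    have key : p₁ = q₁ ∧ p₂ = q₂ := by
      have e1 := huniq' p₁ ha hb (by rw [← hdiv p₁ ha hb, hv1]; omega)
      have e2 := huniq' p₂ hc hd (by rw [← hdiv p₂ hc hd, hv2]; omega)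
      have e3 := huniq q₁ ha' hb' (by rw [hdiv q₁ ha' hb', hw1]; omega)
      have e4 := huniq q₂ hc' hd' (by rw [hdiv q₂ hc' hd', hw2]; omega)
      omega
    rcases huniq i h1 h2 rfl with rfl | rfl
    · rw [hv1, key.1, hw1]
    · rw [hv2, key.2, hw2]
  · push_neg at hi
    by_cases hO : i ∈ Set.Icc 1 (2 * n)
    · simp only [Set.mem_Icc] at hO
      have : i = 1 ∨ i = 2 * n := by omega
      rcases this with rfl | rfl
      · rw [good_one hn hg, good_one hn hg']
      · rw [good_top hn hg, good_top hn hg']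
    · rw [hg.1.2 i hO, hg'.1.2 i hO]

end Fwd

section Bwd
open Finset

variable {n : ℕ} {C : Finset (ℕ × ℕ)}

lemma rows_eq {j r₁ r₂ r₁' r₂' : ℕ}
    (h : ({(r₁, j), (r₂, j)} : Finset (ℕ × ℕ)) = {(r₁', j), (r₂', j)})
    (hlt : r₁ < r₂) (hlt' : r₁' < r₂') : r₁ = r₁' ∧ r₂ = r₂' := by
  have m1 : ((r₁, j) : ℕ × ℕ) ∈ ({(r₁', j), (r₂', j)} : Finset (ℕ × ℕ)) := by
    rw [← h]; simp
  have m2 : ((r₂, j) : ℕ × ℕ) ∈ ({(r₁', j), (r₂', j)} : Finset (ℕ × ℕ)) := by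
    rw [← h]; simp
  have m3 : ((r₁', j) : ℕ × ℕ) ∈ ({(r₁, j), (r₂, j)} : Finset (ℕ × ℕ)) := by
    rw [h]; simp
  simp only [Finset.mem_insert, Finset.mem_singleton, Prod.mk.injEq] at m1 m2 m3
  omega

lemma dperm_cases (hn : 1 ≤ n) (hD : IsDellac (n - 1) C) {i : ℕ}
    (h2 : 2 ≤ i) (h2' : i ≤ 2 * n - 1) :
    ∃ j r₁ r₂, 1 ≤ j ∧ j ≤ n - 1 ∧ r₁ < r₂ ∧
      C.filter (fun p => p.2 = j) = {(r₁, j), (r₂, j)} ∧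
      ((i = r₁ + 1 ∧ dperm n C i = 2 * j) ∨ (i = r₂ + 1 ∧ dperm n C i = 2 * j + 1)) := by
  obtain ⟨j, r₁, r₂, hj, hlt, hfil, hor, _⟩ := dperm_inv hn hD h2 h2'
  obtain ⟨hv1, hv2, _, _⟩ := dperm_val hn hD hlt hfil
  simp only [Finset.mem_Icc] at hj
  rcases hor with rfl | rfl
  · exact ⟨j, r₁, r₂, hj.1, hj.2, hlt, hfil, Or.inl ⟨rfl, hv1⟩⟩
  · exact ⟨j, r₁, r₂, hj.1, hj.2, hlt, hfil, Or.inr ⟨rfl, hv2⟩⟩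

lemma dperm_fix {i : ℕ} (h : ¬(2 ≤ i ∧ i ≤ 2 * n - 1)) : dperm n C i = i :=
  if_neg h

lemma dperm_good (hn : 1 ≤ n) (hD : IsDellac (n - 1) C) : Good n (dperm n C) := by
  refine ⟨⟨⟨?_, ?_, ?_⟩, ?_⟩, ?_, ?_⟩
  · -- MapsTo
    intro i hi
    by_cases h : 2 ≤ i ∧ i ≤ 2 * n - 1
    · obtain ⟨j, r₁, r₂, hj1, hj2, hlt, hfil, hor⟩ := dperm_cases hn hD h.1 h.2
      simp only [Set.mem_Icc]
      rcases hor with ⟨_, hv⟩ | ⟨_, hv⟩ <;> rw [hv] <;> omega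
    · rwa [dperm_fix h]
  · -- InjOn
    intro i hi i' hi' heq
    simp only [Set.mem_Icc] at hi hi'
    by_cases h : 2 ≤ i ∧ i ≤ 2 * n - 1 <;> by_cases h' : 2 ≤ i' ∧ i' ≤ 2 * n - 1
    · obtain ⟨j, r₁, r₂, hj1, hj2, hlt, hfil, hor⟩ := dperm_cases hn hD h.1 h.2
      obtain ⟨j', r₁', r₂', hj1', hj2', hlt', hfil', hor'⟩ := dperm_cases hn hD h'.1 h'.2
      have hjj : j = j' := by
        rcases hor with ⟨_, hv⟩ | ⟨_, hv⟩ <;> rcases hor' with ⟨_, hv'⟩ | ⟨_, hv'⟩ <;>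
          rw [hv, hv'] at heq <;> omega
      subst hjj
      have hre := rows_eq (hfil.symm.trans hfil') hlt hlt'
      rcases hor with ⟨he, hv⟩ | ⟨he, hv⟩ <;> rcases hor' with ⟨he', hv'⟩ | ⟨he', hv'⟩ <;>
        rw [hv, hv'] at heq <;> omega
    · obtain ⟨j, r₁, r₂, hj1, hj2, hlt, hfil, hor⟩ := dperm_cases hn hD h.1 h.2
      rw [dperm_fix h'] at heq
      rcases hor with ⟨_, hv⟩ | ⟨_, hv⟩ <;> rw [hv] at heq <;> omega
    · obtain ⟨j, r₁, r₂, hj1, hj2, hlt, hfil, hor⟩ := dperm_cases hn hD h'.1 h'.2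
      rw [dperm_fix h] at heq
      rcases hor with ⟨_, hv⟩ | ⟨_, hv⟩ <;> rw [hv] at heq <;> omega
    · rw [dperm_fix h, dperm_fix h'] at heq
      exact heq
  · -- SurjOn
    intro k hk
    simp only [Set.mem_Icc] at hk
    by_cases h : 2 ≤ k ∧ k ≤ 2 * n - 1
    · have hj : 1 ≤ k / 2 ∧ k / 2 ≤ n - 1 := by omega
      obtain ⟨r₁, r₂, hlt, hfil⟩ := col_rows (j := k / 2) hD (Finset.mem_Icc.mpr (by omega))
      obtain ⟨hv1, hv2, hr1, hr2⟩ := dperm_val hn hD hlt hfil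
      simp only [Finset.mem_Icc] at hr1 hr2
      rcases (by omega : k = 2 * (k / 2) ∨ k = 2 * (k / 2) + 1) with hke | hke
      · exact ⟨r₁ + 1, by simp [Set.mem_Icc]; omega, by rw [hv1]; omega⟩
      · exact ⟨r₂ + 1, by simp [Set.mem_Icc]; omega, by rw [hv2]; omega⟩
    · exact ⟨k, by simp [Set.mem_Icc]; omega, dperm_fix (by omega)⟩
  · -- identity outside
    intro i hi
    simp only [Set.mem_Icc, not_and_or, not_le] at hi
    exact dperm_fix (by omega)
  · -- position condition
    intro k hk i hi
    simp only [Set.mem_Icc] at hk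
    by_cases h : 2 ≤ i ∧ i ≤ 2 * n - 1
    · obtain ⟨j, r₁, r₂, hj1, hj2, hlt, hfil, hor⟩ := dperm_cases hn hD h.1 h.2
      rcases hor with ⟨he, hv⟩ | ⟨he, hv⟩
      · have hmem : (r₁, j) ∈ C := (mem_col_iff hfil r₁).mpr (Or.inl rfl)
        have hb := hD.2.2.2 _ hmem
        simp only at hb
        rw [hv] at hi
        omega
      · have hmem : (r₂, j) ∈ C := (mem_col_iff hfil r₂).mpr (Or.inr rfl)
        have hb := hD.2.2.2 _ hmem
        simp only at hb
        rw [hv] at hi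
        omega
    · rw [dperm_fix h] at hi
      omega
  · -- collapse condition
    intro m h1m h2m p q hp hq
    have hpm : 2 ≤ p ∧ p ≤ 2 * n - 1 := by
      by_contra hc
      rw [dperm_fix hc] at hp
      omega
    have hqm : 2 ≤ q ∧ q ≤ 2 * n - 1 := by
      by_contra hc
      rw [dperm_fix hc] at hq
      omega
    obtain ⟨j, r₁, r₂, hj1, hj2, hlt, hfil, hor⟩ := dperm_cases hn hD hpm.1 hpm.2
    obtain ⟨j', r₁', r₂', hj1', hj2', hlt', hfil', hor'⟩ := dperm_cases hn hD hqm.1 hqm.2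
    have hjm : j = m ∧ p = r₁ + 1 := by
      rcases hor with ⟨he, hv⟩ | ⟨he, hv⟩ <;> rw [hv] at hp <;> [exact ⟨by omega, he⟩; omega]
    have hjm' : j' = m ∧ q = r₂' + 1 := by
      rcases hor' with ⟨he, hv⟩ | ⟨he, hv⟩ <;> rw [hv] at hq <;> [omega; exact ⟨by omega, he⟩]
    have hjj : j = j' := by omega
    subst hjj
    have hre := rows_eq (hfil.symm.trans hfil') hlt hlt'
    omega

lemma toDellac_dperm (hn : 1 ≤ n) (hD : IsDellac (n - 1) C) :
    toDellac n (dperm n C) = C := by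
  ext p
  rw [mem_toDellac]
  constructor
  · rintro ⟨i, h2, h2', rfl⟩
    obtain ⟨j, r₁, r₂, hj1, hj2, hlt, hfil, hor⟩ := dperm_cases hn hD h2 h2'
    rcases hor with ⟨he, hv⟩ | ⟨he, hv⟩
    · have hpe : ((i - 1 : ℕ), dperm n C i / 2) = (r₁, j) := by
        rw [hv]; congr 1 <;> omega
      rw [hpe]
      exact (mem_col_iff hfil r₁).mpr (Or.inl rfl)
    · have hpe : ((i - 1 : ℕ), dperm n C i / 2) = (r₂, j) := by
        rw [hv]; congr 1 <;> omega
      rw [hpe]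
      exact (mem_col_iff hfil r₂).mpr (Or.inr rfl)
  · intro hp
    have hp' : (p.1, p.2) ∈ C := by rw [Prod.mk.eta]; exact hp
    have hr : p.1 ∈ Finset.Icc 1 (2 * (n - 1)) := (hD.1 _ hp).1
    simp only [Finset.mem_Icc] at hr
    have hcol : colOf C p.1 = p.2 := colOf_eq hD hp'
    have hdv : dperm n C (p.1 + 1) / 2 = p.2 := by
      rw [dperm, if_pos (by omega)]
      simp only [Nat.add_sub_cancel, hcol]
      split_ifs <;> omega
    exact ⟨p.1 + 1, by omega, by omega, by rw [Nat.add_sub_cancel, hdv, Prod.mk.eta]⟩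

end Bwd

theorem card_normalized_collapsed_eq_dellac (n : ℕ) (hn : 1 ≤ n) :
    Nat.card {π : ℕ → ℕ // PermOn (2 * n) π ∧
        (∀ k ∈ Set.Icc 1 (2 * n), ∀ i, π i = k → 1 + k / 2 ≤ i ∧ i ≤ n + k / 2) ∧
        (∀ i, 1 ≤ i → i ≤ n - 1 → ∀ p q, π p = 2 * i → π q = 2 * i + 1 → p < q)} =
      Nat.card {C : Finset (ℕ × ℕ) // IsDellac (n - 1) C} := by
  apply Nat.card_eq_of_bijective
    (fun x => (⟨toDellac n x.1, toDellac_isDellac hn x.2⟩ :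
      {C : Finset (ℕ × ℕ) // IsDellac (n - 1) C}))
  constructor
  · intro a b h
    exact Subtype.ext (toDellac_inj hn a.2 b.2 (congrArg Subtype.val h))
  · rintro ⟨C, hD⟩
    exact ⟨⟨dperm n C, dperm_good hn hD⟩, Subtype.ext (toDellac_dperm hn hD)⟩
end

section
/- For any finite simple graph G with a distinguished vertex s and any edge e not incident to s, the number of acyclic orientations of G with unique sink s equals the number of acyclic orientations of G∖e with unique sink s plus the number of acyclic orientations of G/e with unique sink s. -/
/-- An orientation of a simple graph `G`, given as a relation `o` on vertices:
only edges of `G` are oriented, and each edge gets exactly one direction. -/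
def IsOrientation {V : Type*} (G : SimpleGraph V) (o : V → V → Prop) : Prop :=
  (∀ u v, o u v → G.Adj u v) ∧ ∀ u v, G.Adj u v → (o u v ↔ ¬ o v u)

/-- An orientation is acyclic when it has no directed cycle. -/
def IsAcyclicRel {V : Type*} (o : V → V → Prop) : Prop :=
  Irreflexive (Relation.TransGen o)

/-- `s` is a sink of the orientation `o`: no outgoing edges. -/
def IsSinkOf {V : Type*} (o : V → V → Prop) (s : V) : Prop := ∀ v, ¬ o s v

/-- The number of acyclic orientations of `G`. -/
noncomputable def aoCount {V : Type*} (G : SimpleGraph V) : ℕ :=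
  Nat.card {o : V → V → Prop // IsOrientation G o ∧ IsAcyclicRel o}

/-- The number of acyclic orientations of `G` whose unique sink is `s`. -/
noncomputable def ausoCount {V : Type*} (G : SimpleGraph V) (s : V) : ℕ :=
  Nat.card {o : V → V → Prop // IsOrientation G o ∧ IsAcyclicRel o ∧
    ∀ v, IsSinkOf o v ↔ v = s}

/-- The contraction `G/e` of the edge `e = (a,b)`: `b` is merged into `a`. -/
def contractEdge {V : Type*} (G : SimpleGraph V) (a b : V) :
    SimpleGraph {v : V // v ≠ b} where
  Adj u v := u ≠ v ∧
    (G.Adj u.val v.val ∨ (u.val = a ∧ G.Adj b v.val) ∨ (v.val = a ∧ G.Adj u.val b))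
  symm := by
    refine ⟨?_⟩
    rintro u v ⟨h1, h2⟩
    refine ⟨h1.symm, ?_⟩
    rcases h2 with h | ⟨h, h'⟩ | ⟨h, h'⟩
    · exact Or.inl h.symm
    · exact Or.inr (Or.inr ⟨h, h'.symm⟩)
    · exact Or.inr (Or.inl ⟨h, h'.symm⟩)
  loopless := by refine ⟨?_⟩; rintro u ⟨h1, _⟩; exact h1 rfl

/-!
Write an orientation `o` of `G` as its restriction `r` to `G ∖ e`, `e = ab`, plus one arrow on
`e`. Then `o` is an AUSO iff `r` is acyclic, the arrow closes no cycle, and the sinks of `r` other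
than the tail of the arrow are exactly `s`.

If `r` is an AUSO of `G ∖ e`, orienting `e` as `a → b` (or `b → a` when `r` has a path from `b` to
`a`) gives an AUSO of `G`; these are the AUSOs of `G` counted by `G ∖ e`. Every other AUSO of `G`
has no path between `a` and `b` in `r`, so `r` descends to an acyclic orientation of `G / e`,
and this is a bijection onto the AUSOs of `G / e`: conversely, an AUSO of `G / e` pulls back to
an acyclic orientation of `G ∖ e` with no path between `a` and `b` whose sinks are `s` and at most
one of `a`, `b`; its preimage orients `e` out of that sink (out of `b` if there is none).

Acyclicity of the contraction: reachability in `r` with `a` and `b` identified is a preorder in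
which every arrow of `r` is strict, as long as `r` has no path between `a` and `b`.
-/

open Relation

section Relations

variable {α β : Type*} {r : α → α → Prop}

theorem IsAcyclicRel.of_map {p : β → β → Prop} (f : α → β) (hf : ∀ x y, r x y → p (f x) (f y))
    (hp : IsAcyclicRel p) : IsAcyclicRel r :=
  fun x hx => hp (f x) (hx.lift f hf)

theorem not_transGen_of_map_eq {p : β → β → Prop} (f : α → β)
    (hf : ∀ x y, r x y → p (f x) (f y)) (hp : IsAcyclicRel p) {x y : α} (hxy : f x = f y) :
    ¬ TransGen r x y := by
  intro h
  have h' : TransGen p (f x) (f y) := h.lift f hf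
  exact hp (f y) (hxy ▸ h')

theorem IsAcyclicRel.of_strict_of_trans {P : α → α → Prop} (hP : ∀ x y z, P x y → P y z → P x z)
    (h : ∀ x y, r x y → P x y ∧ ¬ P y x) : IsAcyclicRel r := by
  have hstrict : ∀ x y, TransGen r x y → P x y ∧ ¬ P y x := by
    intro x y hxy
    induction hxy with
    | single hxy => exact h _ _ hxy
    | tail _ hyz ih =>
      obtain ⟨hPxy, hPyx⟩ := ih
      obtain ⟨hPyz, hPzy⟩ := h _ _ hyz
      exact ⟨hP _ _ _ hPxy hPyz, fun hPzx => hPzy (hP _ _ _ hPzx hPxy)⟩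
  exact fun x hx => (hstrict x x hx).2 (hstrict x x hx).1

theorem IsSinkOf.not_transGen {x y : α} (h : IsSinkOf r x) : ¬ TransGen r x y := fun hxy =>
  let ⟨_, hxc, _⟩ := TransGen.head'_iff.1 hxy
  h _ hxc

theorem isSinkOf_map_iff (f : α → β) {u : β} :
    IsSinkOf (Relation.Map r f f) u ↔ ∀ x, f x = u → IsSinkOf r x := by
  simp only [IsSinkOf, Relation.Map]
  grind

def addArrow (r : α → α → Prop) (x y : α) : α → α → Prop :=
  fun u v => r u v ∨ (u = x ∧ v = y)

theorem isSinkOf_addArrow_iff {x y v : α} :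
    IsSinkOf (addArrow r x y) v ↔ IsSinkOf r v ∧ v ≠ x := by
  simp only [IsSinkOf, addArrow]
  grind

theorem transGen_addArrow {x y u v : α} (hyx : ¬ ReflTransGen r y x)
    (h : TransGen (addArrow r x y) u v) :
    TransGen r u v ∨ (ReflTransGen r u x ∧ ReflTransGen r y v) := by
  induction h with
  | single h =>
    rcases h with h | ⟨rfl, rfl⟩
    · exact .inl (.single h)
    · exact .inr ⟨.refl, .refl⟩
  | tail _ h ih =>
    rcases h, ih with ⟨h | ⟨rfl, rfl⟩, ih | ⟨hux, hyw⟩⟩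
    · exact .inl (ih.tail h)
    · exact .inr ⟨hux, hyw.tail h⟩
    · exact .inr ⟨ih.to_reflTransGen, .refl⟩
    · exact absurd hyw hyx

theorem isAcyclicRel_addArrow_iff {x y : α} :
    IsAcyclicRel (addArrow r x y) ↔ IsAcyclicRel r ∧ ¬ ReflTransGen r y x := by
  have hle : ∀ u v, r u v → addArrow r x y u v := fun _ _ => Or.inl
  refine ⟨fun h => ⟨h.of_map id hle, fun hyx => h x ?_⟩, fun ⟨hr, hyx⟩ u hu => ?_⟩
  · exact TransGen.head' (Or.inr ⟨rfl, rfl⟩) (ReflTransGen.mono hle _ _ hyx)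
  · rcases transGen_addArrow hyx hu with hu | ⟨hux, hyu⟩
    · exact hr u hu
    · exact hyx (hyu.trans hux)

end Relations

section MergedReach

variable {α : Type*} {r : α → α → Prop} {a b x y z : α}

/-- Reachability in `r` once `a` and `b` are identified: a shortest such walk jumps between `a`
and `b` at most once. -/
def MergedReach (r : α → α → Prop) (a b x y : α) : Prop :=
  ReflTransGen r x y ∨ (ReflTransGen r x a ∧ ReflTransGen r b y) ∨
    (ReflTransGen r x b ∧ ReflTransGen r a y)

theorem MergedReach.trans (hxy : MergedReach r a b x y) (hyz : MergedReach r a b y z) :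
    MergedReach r a b x z := by
  rcases hxy with h | ⟨h₁, h₂⟩ | ⟨h₁, h₂⟩ <;> rcases hyz with h' | ⟨h₁', h₂'⟩ | ⟨h₁', h₂'⟩
  exacts [.inl (h.trans h'), .inr (.inl ⟨h.trans h₁', h₂'⟩), .inr (.inr ⟨h.trans h₁', h₂'⟩),
    .inr (.inl ⟨h₁, h₂.trans h'⟩), .inr (.inl ⟨h₁, h₂'⟩), .inl (h₁.trans h₂'),
    .inr (.inr ⟨h₁, h₂.trans h'⟩), .inl (h₁.trans h₂'), .inr (.inr ⟨h₁, h₂'⟩)]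

theorem MergedReach.of_reflTransGen (h : ReflTransGen r x y) : MergedReach r a b x y := .inl h

theorem mergedReach_left_right : MergedReach r a b a b := .inr (.inl ⟨.refl, .refl⟩)

theorem mergedReach_right_left : MergedReach r a b b a := .inr (.inr ⟨.refl, .refl⟩)

theorem not_mergedReach_of_rel (hr : IsAcyclicRel r) (hab : ¬ TransGen r a b)
    (hba : ¬ TransGen r b a) (h : r x y) : ¬ MergedReach r a b y x := by
  rintro (h' | ⟨h₁, h₂⟩ | ⟨h₁, h₂⟩)
  · exact hr x (.head' h h')
  · exact hba ((TransGen.tail' h₂ h).trans_left h₁)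
  · exact hab ((TransGen.tail' h₂ h).trans_left h₁)

end MergedReach

section Orientation

variable {V W : Type*} {G H : SimpleGraph V} {K : SimpleGraph W} {o r : V → V → Prop}
  {u v x y : V}

theorem IsOrientation.asymm (ho : IsOrientation G o) (h : o u v) : ¬ o v u :=
  (ho.2 u v (ho.1 u v h)).1 h

theorem IsOrientation.total (ho : IsOrientation G o) (h : G.Adj u v) : o u v ∨ o v u :=
  or_iff_not_imp_right.2 (ho.2 u v h).2

theorem IsOrientation.of_acyclic (hadj : ∀ u v, o u v → G.Adj u v)
    (htotal : ∀ u v, G.Adj u v → o u v ∨ o v u) (hacyc : IsAcyclicRel o) :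
    IsOrientation G o :=
  ⟨hadj, fun u v h => ⟨fun h₁ h₂ => hacyc u (.tail (.single h₁) h₂), (htotal u v h).resolve_right⟩⟩

def orientComap (f : H →g K) (o : W → W → Prop) : V → V → Prop :=
  fun u v => H.Adj u v ∧ o (f u) (f v)

theorem IsOrientation.comap (f : H →g K) {o : W → W → Prop} (ho : IsOrientation K o) :
    IsOrientation H (orientComap f o) :=
  ⟨fun _ _ h => h.1, fun _ _ huv => ⟨fun h h' => ho.asymm h.2 h'.2,
    fun h => ⟨huv, (ho.total (f.map_rel huv)).resolve_right fun h' => h ⟨huv.symm, h'⟩⟩⟩⟩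

theorem orientComap_map_eq (f : H →g K) (ho : IsOrientation H o)
    (hmap : IsOrientation K (Relation.Map o f f)) : orientComap f (Relation.Map o f f) = o := by
  ext u v
  refine ⟨fun ⟨huv, hmuv⟩ => (ho.total huv).resolve_right fun hvu => ?_,
    fun h => ⟨ho.1 u v h, u, v, h, rfl, rfl⟩⟩
  exact hmap.asymm hmuv ⟨v, u, hvu, rfl, rfl⟩

theorem map_orientComap_eq (f : H →g K) (hf : ∀ u v, K.Adj u v → Relation.Map H.Adj f f u v)
    {o : W → W → Prop} (ho : IsOrientation K o) : Relation.Map (orientComap f o) f f = o := by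
  ext u v
  refine ⟨fun ⟨x, y, ⟨_, h⟩, hx, hy⟩ => hx ▸ hy ▸ h, fun h => ?_⟩
  obtain ⟨x, y, hxy, rfl, rfl⟩ := hf u v (ho.1 u v h)
  exact ⟨x, y, ⟨hxy, h⟩, rfl, rfl⟩

def restrictOrient (H : SimpleGraph V) (o : V → V → Prop) : V → V → Prop :=
  fun u v => H.Adj u v ∧ o u v

theorem IsOrientation.restrict (hHG : H ≤ G) (ho : IsOrientation G o) :
    IsOrientation H (restrictOrient H o) :=
  ho.comap (SimpleGraph.Hom.ofLE hHG)

theorem isOrientation_addArrow (hr : IsOrientation (G.deleteEdges {s(x, y)}) r)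
    (hxy : G.Adj x y) : IsOrientation G (addArrow r x y) := by
  have hr_adj : ∀ u v, r u v → G.Adj u v ∧ s(u, v) ≠ s(x, y) := fun _ _ h => by
    simpa using hr.1 _ _ h
  refine ⟨fun u v => ?_, fun u v huv => ?_⟩
  · rintro (h | ⟨rfl, rfl⟩)
    exacts [(hr_adj u v h).1, hxy]
  by_cases he : s(u, v) = s(x, y)
  · have hu : ¬ r u v := fun h => (hr_adj u v h).2 he
    have hv : ¬ r v u := fun h => (hr_adj v u h).2 (Sym2.eq_swap.trans he)
    simp only [addArrow, hu, hv, false_or]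
    rcases Sym2.eq_iff.1 he with ⟨rfl, rfl⟩ | ⟨rfl, rfl⟩ <;> simp [hxy.ne, hxy.ne.symm]
  · have hne : ¬ (u = x ∧ v = y) ∧ ¬ (v = x ∧ u = y) := by
      refine ⟨?_, ?_⟩ <;> rintro ⟨rfl, rfl⟩
      exacts [he rfl, he Sym2.eq_swap]
    simp only [addArrow, hne, or_false]
    exact hr.2 u v (by simpa [huv] using he)

theorem restrictOrient_addArrow (hr : IsOrientation (G.deleteEdges {s(x, y)}) r) :
    restrictOrient (G.deleteEdges {s(x, y)}) (addArrow r x y) = r := by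
  ext u v
  refine ⟨?_, fun h => ⟨hr.1 u v h, .inl h⟩⟩
  rintro ⟨huv, h | ⟨rfl, rfl⟩⟩
  · exact h
  · simp at huv

theorem addArrow_restrictOrient (ho : IsOrientation G o) (h : o x y) :
    addArrow (restrictOrient (G.deleteEdges {s(x, y)}) o) x y = o := by
  ext u v
  refine ⟨?_, fun huv => ?_⟩
  · rintro (⟨-, h'⟩ | ⟨rfl, rfl⟩)
    exacts [h', h]
  by_cases he : s(u, v) = s(x, y)
  · rcases Sym2.eq_iff.1 he with ⟨rfl, rfl⟩ | ⟨rfl, rfl⟩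
    · exact .inr ⟨rfl, rfl⟩
    · exact absurd h (ho.asymm huv)
  · exact .inl ⟨by simpa [ho.1 u v huv] using he, huv⟩

end Orientation

section AUSO

variable {V : Type*} {G : SimpleGraph V} {s x y : V} {r : V → V → Prop}

def IsAUSO (G : SimpleGraph V) (s : V) (o : V → V → Prop) : Prop :=
  IsOrientation G o ∧ IsAcyclicRel o ∧ ∀ v, IsSinkOf o v ↔ v = s

theorem isAUSO_addArrow_iff (hr : IsOrientation (G.deleteEdges {s(x, y)}) r)
    (hxy : G.Adj x y) :
    IsAUSO G s (addArrow r x y) ↔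
      IsAcyclicRel r ∧ ¬ ReflTransGen r y x ∧ ∀ v, IsSinkOf r v ∧ v ≠ x ↔ v = s := by
  simp only [IsAUSO, isAcyclicRel_addArrow_iff, isSinkOf_addArrow_iff,
    isOrientation_addArrow hr hxy, true_and, and_assoc]

theorem isAUSO_addArrow (hr : IsAUSO (G.deleteEdges {s(x, y)}) s r) (hxy : G.Adj x y)
    (hsx : s ≠ x) (hyx : ¬ ReflTransGen r y x) : IsAUSO G s (addArrow r x y) :=
  (isAUSO_addArrow_iff hr.1 hxy).2 ⟨hr.2.1, hyx, fun v => by rw [hr.2.2 v]; grind⟩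

theorem IsAUSO.of_addArrow (ho : IsAUSO G s (addArrow r x y))
    (hr : IsOrientation (G.deleteEdges {s(x, y)}) r) (hxy : G.Adj x y) (hx : ¬ IsSinkOf r x) :
    IsAUSO (G.deleteEdges {s(x, y)}) s r := by
  obtain ⟨hacyc, -, hsink⟩ := (isAUSO_addArrow_iff hr hxy).1 ho
  exact ⟨hr, hacyc, fun v => by rw [← hsink v]; grind⟩

end AUSO

section Deletion

variable {V : Type*} {G : SimpleGraph V} {s a b : V} {o r : V → V → Prop}

open Classical in
def deletionExtension (a b : V) (r : V → V → Prop) : V → V → Prop :=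
  if TransGen r b a then addArrow r b a else addArrow r a b

open Classical in
def contractionExtension (a b : V) (r : V → V → Prop) : V → V → Prop :=
  if IsSinkOf r a then addArrow r a b else addArrow r b a

def IsDeletionType (G : SimpleGraph V) (s a b : V) (o : V → V → Prop) : Prop :=
  IsAUSO (G.deleteEdges {s(a, b)}) s (restrictOrient (G.deleteEdges {s(a, b)}) o) ∧
    deletionExtension a b (restrictOrient (G.deleteEdges {s(a, b)}) o) = o

theorem restrictOrient_addArrow_swap (hr : IsOrientation (G.deleteEdges {s(a, b)}) r) :
    restrictOrient (G.deleteEdges {s(a, b)}) (addArrow r b a) = r := by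
  rw [Sym2.eq_swap] at hr ⊢
  exact restrictOrient_addArrow hr

theorem restrictOrient_deletionExtension (hr : IsOrientation (G.deleteEdges {s(a, b)}) r) :
    restrictOrient (G.deleteEdges {s(a, b)}) (deletionExtension a b r) = r := by
  unfold deletionExtension
  split_ifs
  exacts [restrictOrient_addArrow_swap hr, restrictOrient_addArrow hr]

theorem restrictOrient_contractionExtension
    (hr : IsOrientation (G.deleteEdges {s(a, b)}) r) :
    restrictOrient (G.deleteEdges {s(a, b)}) (contractionExtension a b r) = r := by
  unfold contractionExtension
  split_ifs
  exacts [restrictOrient_addArrow hr, restrictOrient_addArrow_swap hr]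

theorem isAUSO_deletionExtension (hab : G.Adj a b) (hsa : s ≠ a) (hsb : s ≠ b)
    (hr : IsAUSO (G.deleteEdges {s(a, b)}) s r) : IsAUSO G s (deletionExtension a b r) := by
  unfold deletionExtension
  split_ifs with hba
  · rw [Sym2.eq_swap] at hr
    exact isAUSO_addArrow hr hab.symm hsb fun hab' => hr.2.1 a (.trans_right hab' hba)
  · exact isAUSO_addArrow hr hab hsa fun h =>
      hba (reflTransGen_iff_eq_or_transGen.1 h |>.resolve_left hab.ne)

theorem isAUSO_contractionExtension_iff (hab : G.Adj a b) (hsa : s ≠ a) (hsb : s ≠ b)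
    (hr : IsOrientation (G.deleteEdges {s(a, b)}) r)
    (hrab : ¬ TransGen r a b) (hrba : ¬ TransGen r b a) :
    IsAUSO G s (contractionExtension a b r) ↔ IsAcyclicRel r ∧
      (∀ v, v ≠ a → v ≠ b → (IsSinkOf r v ↔ v = s)) ∧ ¬ (IsSinkOf r a ∧ IsSinkOf r b) := by
  have hrab' : ¬ ReflTransGen r a b := fun h =>
    hrab (reflTransGen_iff_eq_or_transGen.1 h |>.resolve_left hab.ne.symm)
  have hrba' : ¬ ReflTransGen r b a := fun h =>
    hrba (reflTransGen_iff_eq_or_transGen.1 h |>.resolve_left hab.ne)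
  unfold contractionExtension
  split_ifs with ha
  · rw [isAUSO_addArrow_iff hr hab]
    simp only [hrba', not_false_eq_true, true_and, ha]
    grind
  · rw [Sym2.eq_swap] at hr
    rw [isAUSO_addArrow_iff hr hab.symm]
    simp only [hrab', not_false_eq_true, true_and, ha, false_and]
    grind

theorem not_isDeletionType_contractionExtension (hab : G.Adj a b) (hsa : s ≠ a)
    (hr : IsOrientation (G.deleteEdges {s(a, b)}) r)
    (hrab : ¬ TransGen r a b) (hrba : ¬ TransGen r b a) :
    ¬ IsDeletionType G s a b (contractionExtension a b r) := by
  rintro ⟨hdel, hexts⟩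
  rw [restrictOrient_contractionExtension hr] at hdel hexts
  rw [deletionExtension, if_neg hrba, contractionExtension] at hexts
  split_ifs at hexts with ha
  · exact hsa ((hdel.2.2 a).1 ha).symm
  · have := congrFun (congrFun hexts a) b
    simp only [addArrow, and_self, or_true, true_iff, eq_iff_iff] at this
    rcases this with h | ⟨h, -⟩
    exacts [hrab (.single h), hab.ne h]

theorem contractionExtension_eq_of_not_isDeletionType (hab : G.Adj a b) (hsa : s ≠ a)
    (ho : IsAUSO G s o) (hD : ¬ IsDeletionType G s a b o) :
    ¬ TransGen (restrictOrient (G.deleteEdges {s(a, b)}) o) a b ∧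
      ¬ TransGen (restrictOrient (G.deleteEdges {s(a, b)}) o) b a ∧
      contractionExtension a b (restrictOrient (G.deleteEdges {s(a, b)}) o) = o := by
  set r := restrictOrient (G.deleteEdges {s(a, b)}) o
  have hr : IsOrientation (G.deleteEdges {s(a, b)}) r := ho.1.restrict (G.deleteEdges_le _)
  by_cases hoab : o a b
  · have ho' : addArrow r a b = o := addArrow_restrictOrient ho.1 hoab
    have ho₁ : IsAUSO G s (addArrow r a b) := by rwa [ho']
    obtain ⟨-, hba, -⟩ := (isAUSO_addArrow_iff hr hab).1 ho₁
    have hext : deletionExtension a b r = o := by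
      rw [deletionExtension, if_neg fun h => hba h.to_reflTransGen, ho']
    have ha : IsSinkOf r a := by
      by_contra hna
      exact hD ⟨ho₁.of_addArrow hr hab hna, hext⟩
    exact ⟨ha.not_transGen, fun h => hba h.to_reflTransGen,
      by rw [contractionExtension, if_pos ha, ho']⟩
  · have hoba := (ho.1.total hab).resolve_left hoab
    have ho' : addArrow r b a = o := by
      have := addArrow_restrictOrient ho.1 hoba
      rwa [Sym2.eq_swap] at this
    have hr' : IsOrientation (G.deleteEdges {s(b, a)}) r := by rwa [Sym2.eq_swap]
    have ho₁ : IsAUSO G s (addArrow r b a) := by rwa [ho']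
    obtain ⟨-, hab', hsink⟩ := (isAUSO_addArrow_iff hr' hab.symm).1 ho₁
    have hna : ¬ IsSinkOf r a := fun h => hsa ((hsink a).1 ⟨h, hab.ne⟩).symm
    have hba : ¬ TransGen r b a := fun h => by
      have hdel := ho₁.of_addArrow hr' hab.symm fun hb => hb.not_transGen h
      rw [Sym2.eq_swap] at hdel
      exact hD ⟨hdel, by rw [deletionExtension, if_pos h, ho']⟩
    exact ⟨fun h => hab' h.to_reflTransGen, hba, by rw [contractionExtension, if_neg hna, ho']⟩

def deletionEquiv (hab : G.Adj a b) (hsa : s ≠ a) (hsb : s ≠ b) :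
    {o : {o // IsAUSO G s o} // IsDeletionType G s a b o.1} ≃
      {r // IsAUSO (G.deleteEdges {s(a, b)}) s r} where
  toFun o := ⟨_, o.2.1⟩
  invFun r := ⟨⟨_, isAUSO_deletionExtension hab hsa hsb r.2⟩, by
    rw [IsDeletionType, restrictOrient_deletionExtension r.2.1]
    exact ⟨r.2, rfl⟩⟩
  left_inv o := Subtype.ext (Subtype.ext o.2.2)
  right_inv r := Subtype.ext (restrictOrient_deletionExtension r.2.1)

end Deletion

section Contraction

variable {V : Type*} [DecidableEq V] {G : SimpleGraph V} {s a b : V} {r : V → V → Prop}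

def mergeVertex (hne : a ≠ b) (v : V) : {v : V // v ≠ b} :=
  if h : v = b then ⟨a, hne⟩ else ⟨v, h⟩

theorem mergeVertex_eq_iff (hne : a ≠ b) {x : V} {u : {v : V // v ≠ b}} :
    mergeVertex hne x = u ↔ x = u.1 ∨ (u.1 = a ∧ x = b) := by
  obtain ⟨u, hu⟩ := u
  unfold mergeVertex
  split_ifs with hx
  · simp [hx, Ne.symm hu, eq_comm]
  · simp [hx]

theorem contractEdge_adj_iff (hne : a ≠ b) {u v : {v : V // v ≠ b}} :
    (contractEdge G a b).Adj u v ↔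
      Relation.Map (G.deleteEdges {s(a, b)}).Adj (mergeVertex hne) (mergeVertex hne) u v := by
  simp only [Relation.Map, mergeVertex_eq_iff, SimpleGraph.deleteEdges_adj,
    Set.mem_singleton_iff, Sym2.eq_iff]
  obtain ⟨u, hu⟩ := u
  obtain ⟨v, hv⟩ := v
  simp only [contractEdge, ne_eq, Subtype.mk.injEq]
  constructor
  · rintro ⟨huv, h | ⟨rfl, h⟩ | ⟨rfl, h⟩⟩
    · exact ⟨u, v, ⟨h, by grind⟩, .inl rfl, .inl rfl⟩
    · exact ⟨b, v, ⟨h, by grind⟩, .inr ⟨rfl, rfl⟩, .inl rfl⟩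
    · exact ⟨u, b, ⟨h, by grind⟩, .inl rfl, .inr ⟨rfl, rfl⟩⟩
  · rintro ⟨x, y, ⟨hxy, hne⟩, hx, hy⟩
    have := hxy.ne
    rcases hx with rfl | ⟨rfl, rfl⟩ <;> rcases hy with rfl | ⟨rfl, rfl⟩ <;> grind

def contractHom (G : SimpleGraph V) (hne : a ≠ b) :
    G.deleteEdges {s(a, b)} →g contractEdge G a b where
  toFun := mergeVertex hne
  map_rel' h := (contractEdge_adj_iff hne).2 ⟨_, _, h, rfl, rfl⟩

theorem contractHom_apply (hne : a ≠ b) (x : V) : contractHom G hne x = mergeVertex hne x := rfl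

theorem isAcyclicRel_map_contractHom (hne : a ≠ b) (hr : IsAcyclicRel r)
    (hrab : ¬ TransGen r a b) (hrba : ¬ TransGen r b a) :
    IsAcyclicRel (Relation.Map r (contractHom G hne) (contractHom G hne)) := by
  have hfiber : ∀ x u, mergeVertex hne x = u →
      MergedReach r a b u.1 x ∧ MergedReach r a b x u.1 := by
    intro x u hxu
    rcases (mergeVertex_eq_iff hne).1 hxu with rfl | ⟨hu, rfl⟩
    · exact ⟨.of_reflTransGen .refl, .of_reflTransGen .refl⟩
    · exact hu ▸ ⟨mergedReach_left_right, mergedReach_right_left⟩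
  refine IsAcyclicRel.of_strict_of_trans (P := fun u v => MergedReach r a b u.1 v.1)
    (fun _ _ _ => MergedReach.trans) ?_
  rintro u v ⟨x, y, hxy, hx, hy⟩
  have hux := (hfiber x u hx).1
  have hyv := (hfiber y v hy).2
  refine ⟨hux.trans ((MergedReach.of_reflTransGen (.single hxy)).trans hyv), fun hvu => ?_⟩
  exact not_mergedReach_of_rel hr hrab hrba hxy
    ((hfiber y v hy).2.trans (hvu.trans (hfiber x u hx).1))

theorem isOrientation_map_contractHom (hne : a ≠ b)
    (hr : IsOrientation (G.deleteEdges {s(a, b)}) r) (hacyc : IsAcyclicRel r)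
    (hrab : ¬ TransGen r a b) (hrba : ¬ TransGen r b a) :
    IsOrientation (contractEdge G a b)
      (Relation.Map r (contractHom G hne) (contractHom G hne)) := by
  refine .of_acyclic (fun u v ⟨x, y, h, hx, hy⟩ => ?_) (fun u v huv => ?_)
    (isAcyclicRel_map_contractHom hne hacyc hrab hrba)
  · exact (contractEdge_adj_iff hne).2 ⟨x, y, hr.1 x y h, hx, hy⟩
  · obtain ⟨x, y, hxy, rfl, rfl⟩ := (contractEdge_adj_iff hne).1 huv
    rcases hr.total hxy with h | h
    exacts [.inl ⟨x, y, h, rfl, rfl⟩, .inr ⟨y, x, h, rfl, rfl⟩]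

theorem map_orientComap_contractHom (hne : a ≠ b) {oc : {v // v ≠ b} → {v // v ≠ b} → Prop}
    (hoc : IsOrientation (contractEdge G a b) oc) :
    Relation.Map (orientComap (contractHom G hne) oc) (contractHom G hne) (contractHom G hne) =
      oc :=
  map_orientComap_eq _ (fun _ _ h => (contractEdge_adj_iff hne).1 h) hoc

theorem isSinkOf_map_contractHom_iff (hne : a ≠ b) {u : {v : V // v ≠ b}} :
    IsSinkOf (Relation.Map r (contractHom G hne) (contractHom G hne)) u ↔
      IsSinkOf r u.1 ∧ (u.1 = a → IsSinkOf r b) := by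
  simp only [isSinkOf_map_iff, contractHom_apply, mergeVertex_eq_iff]
  grind

theorem isAUSO_map_contractHom_iff (hne : a ≠ b) (hsa : s ≠ a) (hsb : s ≠ b)
    (hr : IsOrientation (G.deleteEdges {s(a, b)}) r) (hacyc : IsAcyclicRel r)
    (hrab : ¬ TransGen r a b) (hrba : ¬ TransGen r b a) :
    IsAUSO (contractEdge G a b) ⟨s, hsb⟩
        (Relation.Map r (contractHom G hne) (contractHom G hne)) ↔
      (∀ v, v ≠ a → v ≠ b → (IsSinkOf r v ↔ v = s)) ∧ ¬ (IsSinkOf r a ∧ IsSinkOf r b) := by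
  simp only [IsAUSO, isOrientation_map_contractHom hne hr hacyc hrab hrba,
    isAcyclicRel_map_contractHom hne hacyc hrab hrba, isSinkOf_map_contractHom_iff, true_and,
    Subtype.forall, Subtype.mk.injEq]
  constructor
  · intro h
    exact ⟨fun v hva hvb => by simpa [hva] using h v hvb,
      fun ⟨ha, hb⟩ => hsa ((h a hne).1 ⟨ha, fun _ => hb⟩).symm⟩
  · rintro ⟨hout, hboth⟩ v hvb
    by_cases hva : v = a
    · subst hva
      simpa [Ne.symm hsa] using hboth
    · simpa [hva] using hout v hva hvb

theorem isAUSO_map_restrictOrient (hab : G.Adj a b) (hsa : s ≠ a) (hsb : s ≠ b)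
    {o : V → V → Prop} (ho : IsAUSO G s o) (hD : ¬ IsDeletionType G s a b o) :
    IsAUSO (contractEdge G a b) ⟨s, hsb⟩ (Relation.Map (restrictOrient (G.deleteEdges {s(a, b)}) o)
      (contractHom G hab.ne) (contractHom G hab.ne)) := by
  obtain ⟨hrab, hrba, hext⟩ := contractionExtension_eq_of_not_isDeletionType hab hsa ho hD
  have hr := ho.1.restrict (G.deleteEdges_le {s(a, b)})
  rw [← hext, isAUSO_contractionExtension_iff hab hsa hsb hr hrab hrba] at ho
  rw [isAUSO_map_contractHom_iff hab.ne hsa hsb hr ho.1 hrab hrba]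
  exact ho.2

theorem isAUSO_and_not_isDeletionType_contractionExtension (hab : G.Adj a b) (hsa : s ≠ a)
    (hsb : s ≠ b) {oc : {v // v ≠ b} → {v // v ≠ b} → Prop}
    (hoc : IsAUSO (contractEdge G a b) ⟨s, hsb⟩ oc) :
    IsAUSO G s (contractionExtension a b (orientComap (contractHom G hab.ne) oc)) ∧
      ¬ IsDeletionType G s a b
        (contractionExtension a b (orientComap (contractHom G hab.ne) oc)) := by
  set f := contractHom G hab.ne
  set r := orientComap f oc
  have hr : IsOrientation (G.deleteEdges {s(a, b)}) r := hoc.1.comap f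
  have hacyc : IsAcyclicRel r := hoc.2.1.of_map f fun _ _ h => h.2
  have hfab : f a = f b := by simp [f, contractHom_apply, mergeVertex, hab.ne]
  have hrab : ¬ TransGen r a b := not_transGen_of_map_eq f (fun _ _ h => h.2) hoc.2.1 hfab
  have hrba : ¬ TransGen r b a := not_transGen_of_map_eq f (fun _ _ h => h.2) hoc.2.1 hfab.symm
  rw [← map_orientComap_contractHom hab.ne hoc.1,
    isAUSO_map_contractHom_iff hab.ne hsa hsb hr hacyc hrab hrba] at hoc
  have ho := (isAUSO_contractionExtension_iff hab hsa hsb hr hrab hrba).2 ⟨hacyc, hoc⟩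
  exact ⟨ho, not_isDeletionType_contractionExtension hab hsa hr hrab hrba⟩

def contractionEquiv (hab : G.Adj a b) (hsa : s ≠ a) (hsb : s ≠ b) :
    {o : {o // IsAUSO G s o} // ¬ IsDeletionType G s a b o.1} ≃
      {oc // IsAUSO (contractEdge G a b) ⟨s, hsb⟩ oc} where
  toFun o := ⟨_, isAUSO_map_restrictOrient hab hsa hsb o.1.2 o.2⟩
  invFun oc := ⟨⟨_, (isAUSO_and_not_isDeletionType_contractionExtension hab hsa hsb oc.2).1⟩,
    (isAUSO_and_not_isDeletionType_contractionExtension hab hsa hsb oc.2).2⟩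
  left_inv o := by
    obtain ⟨⟨o, ho⟩, hD⟩ := o
    obtain ⟨hrab, hrba, hext⟩ := contractionExtension_eq_of_not_isDeletionType hab hsa ho hD
    have hr := ho.1.restrict (G.deleteEdges_le {s(a, b)})
    have hacyc : IsAcyclicRel (restrictOrient (G.deleteEdges {s(a, b)}) o) :=
      ho.2.1.of_map id fun _ _ h => h.2
    refine Subtype.ext (Subtype.ext ?_)
    dsimp only
    rw [orientComap_map_eq _ hr (isOrientation_map_contractHom hab.ne hr hacyc hrab hrba), hext]
  right_inv oc := by
    refine Subtype.ext ?_
    dsimp only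
    rw [restrictOrient_contractionExtension (oc.2.1.comap _),
      map_orientComap_contractHom hab.ne oc.2.1]

end Contraction

theorem auso_deletion_contraction {V : Type*} [Fintype V] [DecidableEq V]
    (G : SimpleGraph V) (s a b : V) (hab : G.Adj a b) (hsa : s ≠ a) (hsb : s ≠ b) :
    ausoCount G s =
      ausoCount (G.deleteEdges {s(a, b)}) s + ausoCount (contractEdge G a b) ⟨s, hsb⟩ := by
  classical
  change Nat.card {o // IsAUSO G s o} =
    Nat.card {r // IsAUSO _ s r} + Nat.card {oc // IsAUSO (contractEdge G a b) ⟨s, hsb⟩ oc}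
  rw [← Nat.card_congr (deletionEquiv hab hsa hsb), ← Nat.card_congr (contractionEquiv hab hsa hsb),
    ← Nat.card_sum]
  exact Nat.card_congr (Equiv.sumCompl _).symm
end

section
/- For integers m ≥ 0 and n ≥ 1, the number of acyclic orientations of the complete bipartite graph K_{m,n} (with parts L of size m and R of size n) having no sink in L equals n!·n^m − Σ_{j=1}^{n−1} (−1)^{j−1} · (n−j)! · (n−j)^m · S(n, n−j), where S(a,b) denotes the Stirling number of the second kind. -/
/-!
The out-neighbourhoods `N(u) ⊆ R` of the vertices `u ∈ L` determine the orientation of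
`K_{m,n}`. It is acyclic iff they form a chain (two incomparable ones would close a directed
4-cycle; conversely, ranking the vertices by cardinalities of the `N(u)` is a potential), and
`L` has no sink iff they are nonempty. A family whose values form a chain `C_0 ⊂ ⋯ ⊂ C_{j-1}`
is a surjection `L ↠ Fin j` together with the level function `v ↦ #{i | v ∉ C_i}`, a map
`R → {0, …, j}` attaining `0, …, j-1`; there are `j! S(n,j) + (j+1)! S(n,j+1)` of those.
The identity `j! S(n,j) + (j+1)! S(n,j+1) = ∑_k (-1)^(n+k) C(k,j) k! S(n,k)` (both sides
satisfy the same recursion in `n`) and `∑_j C(k,j) j! S(m,j) = k^m` then turn the count into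
`∑_k (-1)^(n+k) k! S(n,k) k^m`, which is the stated formula after `k ↦ n - k`.
-/

open Finset

def IsNonemptyChainFamily {ι α : Type*} (f : ι → Finset α) : Prop :=
  IsChain (· ⊆ ·) (Set.range f) ∧ ∀ u, (f u).Nonempty

theorem isAcyclicRel_of_strictAnti {V β : Type*} [Preorder β] {o : V → V → Prop}
    (φ : V → β) (hφ : ∀ x y, o x y → φ y < φ x) : IsAcyclicRel o := by
  intro x hx
  have hlt : ∀ {y}, Relation.TransGen o x y → φ y < φ x := by
    intro y hy
    induction hy with
    | single hxy => exact hφ _ _ hxy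
    | tail _ hyz ih => exact (hφ _ _ hyz).trans ih
  exact lt_irrefl _ (hlt hx)

section Orientation

variable {ι α : Type*}

def chainOrientation (f : ι → Finset α) : ι ⊕ α → ι ⊕ α → Prop
  | .inl u, .inr v => v ∈ f u
  | .inr v, .inl u => v ∉ f u
  | _, _ => False

theorem isOrientation_chainOrientation (f : ι → Finset α) :
    IsOrientation (completeBipartiteGraph ι α) (chainOrientation f) := by
  constructor
  · rintro (u | v) (u' | v') h <;> simp_all [chainOrientation]
  · rintro (u | v) (u' | v') h <;> simp_all [chainOrientation]

theorem not_isSinkOf_chainOrientation {f : ι → Finset α} {u : ι} (hu : (f u).Nonempty) :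
    ¬ IsSinkOf (chainOrientation f) (.inl u) :=
  fun hs => hs (.inr hu.choose) hu.choose_spec

theorem isAcyclicRel_chainOrientation [Fintype ι] [DecidableEq α] {f : ι → Finset α}
    (hf : IsChain (· ⊆ ·) (Set.range f)) : IsAcyclicRel (chainOrientation f) := by
  let φ : ι ⊕ α → ℕ
    | .inl u => 2 * #(f u) + 1
    | .inr v => 2 * ({u | v ∉ f u} : Finset ι).sup fun u => #(f u) + 1
  refine isAcyclicRel_of_strictAnti φ ?_
  rintro (u | v) (u' | v') h <;> simp only [chainOrientation] at h
  · have hsup : ({u' | v' ∉ f u'} : Finset ι).sup (fun u' => #(f u') + 1) ≤ #(f u) := by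
      refine Finset.sup_le fun w hw => ?_
      have hvw : v' ∉ f w := (mem_filter.1 hw).2
      rcases hf.total ⟨w, rfl⟩ ⟨u, rfl⟩ with hwu | huw
      · exact card_lt_card (hwu.ssubset_of_ne fun heq => hvw (heq ▸ h))
      · exact absurd (huw h) hvw
    simp only [φ]; omega
  · have hle : #(f u') + 1 ≤ ({u | v ∉ f u} : Finset ι).sup fun u => #(f u) + 1 :=
      Finset.le_sup (f := fun u => #(f u) + 1) (mem_filter.2 ⟨mem_univ _, h⟩)
    simp only [φ]; omega

variable [Fintype α] {o : ι ⊕ α → ι ⊕ α → Prop}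

open Classical in
noncomputable def outNeighbors (o : ι ⊕ α → ι ⊕ α → Prop) (u : ι) : Finset α :=
  {v | o (.inl u) (.inr v)}

theorem mem_outNeighbors {u : ι} {v : α} : v ∈ outNeighbors o u ↔ o (.inl u) (.inr v) := by
  simp [outNeighbors]

theorem IsOrientation.notMem_outNeighbors_iff (ho : IsOrientation (completeBipartiteGraph ι α) o)
    (u : ι) (v : α) : v ∉ outNeighbors o u ↔ o (.inr v) (.inl u) := by
  rw [mem_outNeighbors, ho.2 _ _ (by simp), not_not]

theorem isChain_range_outNeighbors (ho : IsOrientation (completeBipartiteGraph ι α) o)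
    (ha : IsAcyclicRel o) : IsChain (· ⊆ ·) (Set.range (outNeighbors o)) := by
  rintro _ ⟨u, rfl⟩ _ ⟨u', rfl⟩ -
  by_contra hcon
  obtain ⟨v, hvu, hvu'⟩ := not_subset.1 (not_or.1 hcon).1
  obtain ⟨v', hv'u', hv'u⟩ := not_subset.1 (not_or.1 hcon).2
  exact ha (.inl u) <| .head (mem_outNeighbors.1 hvu) <|
    .head ((ho.notMem_outNeighbors_iff u' v).1 hvu') <|
    .head (mem_outNeighbors.1 hv'u') <| .single ((ho.notMem_outNeighbors_iff u v').1 hv'u)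

theorem outNeighbors_nonempty (ho : IsOrientation (completeBipartiteGraph ι α) o) {u : ι}
    (hu : ¬ IsSinkOf o (.inl u)) : (outNeighbors o u).Nonempty := by
  obtain ⟨x | v, hx⟩ := not_forall_not.1 hu
  · simpa using ho.1 _ _ hx
  · exact ⟨v, mem_outNeighbors.2 hx⟩

theorem chainOrientation_outNeighbors (ho : IsOrientation (completeBipartiteGraph ι α) o) :
    chainOrientation (outNeighbors o) = o := by
  funext x y
  apply propext
  rcases x with u | v <;> rcases y with u' | v'
  · exact iff_of_false id fun h => by simpa using ho.1 _ _ h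
  · exact mem_outNeighbors
  · exact ho.notMem_outNeighbors_iff u' v
  · exact iff_of_false id fun h => by simpa using ho.1 _ _ h

theorem outNeighbors_chainOrientation (f : ι → Finset α) :
    outNeighbors (chainOrientation f) = f := by
  funext u
  ext v
  rw [mem_outNeighbors]
  rfl

noncomputable def orientationEquivChainFamily [Fintype ι] [DecidableEq α] :
    {o : ι ⊕ α → ι ⊕ α → Prop // IsOrientation (completeBipartiteGraph ι α) o ∧
        IsAcyclicRel o ∧ ∀ u, ¬ IsSinkOf o (.inl u)} ≃
      {f : ι → Finset α // IsNonemptyChainFamily f} where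
  toFun o := ⟨outNeighbors o.1, isChain_range_outNeighbors o.2.1 o.2.2.1,
    fun u => outNeighbors_nonempty o.2.1 (o.2.2.2 u)⟩
  invFun f := ⟨chainOrientation f.1, isOrientation_chainOrientation f.1,
    isAcyclicRel_chainOrientation f.2.1, fun u => not_isSinkOf_chainOrientation (f.2.2 u)⟩
  left_inv o := Subtype.ext (chainOrientation_outNeighbors o.2.1)
  right_inv f := Subtype.ext (outNeighbors_chainOrientation f.1)

end Orientation

section Chain

variable {α : Type*} [DecidableEq α] (S : Finset (Finset α))

def chainRank (B : Finset α) : ℕ := #{C ∈ S | C ⊂ B}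

def chainLevel (v : α) : ℕ := #{C ∈ S | v ∉ C}

variable {S}

theorem chainRank_mono {B C : Finset α} (h : B ⊆ C) : chainRank S B ≤ chainRank S C :=
  card_le_card <| monotone_filter_right _ fun _ _ hA => hA.trans_subset h

theorem chainRank_lt_chainRank {B C : Finset α} (hB : B ∈ S) (h : B ⊂ C) :
    chainRank S B < chainRank S C :=
  card_lt_card ⟨monotone_filter_right _ fun _ _ hA => hA.trans h, fun hsub =>
    (mem_filter.1 (hsub (mem_filter.2 ⟨hB, h⟩))).2.ne rfl⟩

theorem chainRank_lt_card {B : Finset α} (hB : B ∈ S) : chainRank S B < #S :=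
  card_lt_card ⟨filter_subset _ _, fun hsub => (mem_filter.1 (hsub hB)).2.ne rfl⟩

theorem chainLevel_le_card (v : α) : chainLevel S v ≤ #S := card_filter_le _ _

variable (hS : IsChain (· ⊆ ·) (S : Set (Finset α)))
include hS

theorem injOn_chainRank : Set.InjOn (chainRank S) S := by
  intro B hB C hC h
  by_contra hne
  rcases hS.total hB hC with hBC | hCB
  · exact (chainRank_lt_chainRank hB (hBC.ssubset_of_ne hne)).ne h
  · exact (chainRank_lt_chainRank hC (hCB.ssubset_of_ne (Ne.symm hne))).ne h.symm

theorem image_chainRank : S.image (chainRank S) = range #S :=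
  eq_of_subset_of_card_le
    (fun _ hr => by
      obtain ⟨B, hB, rfl⟩ := mem_image.1 hr
      exact mem_range.2 (chainRank_lt_card hB))
    (by rw [card_range, card_image_of_injOn (injOn_chainRank hS)])

theorem mem_iff_chainLevel_le_chainRank {B : Finset α} (hB : B ∈ S) (v : α) :
    v ∈ B ↔ chainLevel S v ≤ chainRank S B := by
  constructor
  · intro hv
    refine card_le_card fun C hC => ?_
    obtain ⟨hCS, hvC⟩ := mem_filter.1 hC
    rcases hS.total hCS hB with hCB | hBC
    · exact mem_filter.2 ⟨hCS, hCB.ssubset_of_ne fun h => hvC (h ▸ hv)⟩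
    · exact absurd (hBC hv) hvC
  · intro hle
    by_contra hv
    refine hle.not_gt (card_lt_card ⟨fun C hC => ?_, fun hsub => ?_⟩)
    · obtain ⟨hCS, hCB⟩ := mem_filter.1 hC
      exact mem_filter.2 ⟨hCS, fun hvC => hv (hCB.subset hvC)⟩
    · exact (mem_filter.1 (hsub (mem_filter.2 ⟨hB, hv⟩))).2.ne rfl

theorem exists_chainLevel_eq (hne : ∀ B ∈ S, B.Nonempty) {i : ℕ} (hi : i < #S) :
    ∃ v, chainLevel S v = i := by
  obtain ⟨B, hB, rfl⟩ := mem_image.1 ((image_chainRank hS).symm ▸ mem_range.2 hi)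
  obtain ⟨v, hvB, hmax⟩ := B.exists_max_image (chainLevel S) (hne B hB)
  refine ⟨v, ((mem_iff_chainLevel_le_chainRank hS hB v).1 hvB).antisymm
    (not_lt.1 fun hlt => ?_)⟩
  -- otherwise the member of rank `chainLevel v` would contain all of `B`
  obtain ⟨C, hC, hrank⟩ := mem_image.1 ((image_chainRank hS).symm ▸
    mem_range.2 (hlt.trans (chainRank_lt_card hB)))
  have hBC : B ⊆ C := fun w hw =>
    (mem_iff_chainLevel_le_chainRank hS hC w).2 (hrank ▸ hmax w hw)
  exact (chainRank_mono hBC).not_gt (hrank ▸ hlt)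

end Chain

def LevelFn (ι : Type*) (j : ℕ) : Type _ :=
  {g : ι → Fin (j + 1) // ∀ i : Fin j, ∃ v, g v = i.castSucc}

open Classical in
noncomputable def levelFnEquiv (ι : Type*) (j : ℕ) :
    LevelFn ι j ≃ {h : ι → Fin (j + 1) // Function.Surjective h} ⊕
      {h : ι → Fin j // Function.Surjective h} where
  toFun g :=
    if hlast : ∃ v, g.1 v = Fin.last j then
      .inl ⟨g.1, Fin.lastCases hlast g.2⟩
    else
      .inr ⟨fun v => (g.1 v).castPred fun h => hlast ⟨v, h⟩, fun i => by
        obtain ⟨v, hv⟩ := g.2 i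
        exact ⟨v, by simp [hv]⟩⟩
  invFun
    | .inl h => ⟨h.1, fun i => h.2 _⟩
    | .inr h => ⟨fun v => (h.1 v).castSucc, fun i => by
        obtain ⟨v, hv⟩ := h.2 i
        exact ⟨v, congrArg Fin.castSucc hv⟩⟩
  left_inv g := by
    by_cases hlast : ∃ v, g.1 v = Fin.last j
    · simp only [hlast, ↓reduceDIte]
      rfl
    · simp only [hlast, ↓reduceDIte]
      exact Subtype.ext (funext fun v => Fin.castSucc_castPred _ _)
  right_inv := by
    rintro (h | h)
    · simp only [h.2 (Fin.last j), ↓reduceDIte]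
    · simp only [Fin.castSucc_ne_last, exists_false, ↓reduceDIte, Fin.castPred_castSucc]

section LevelSet

variable {α : Type*} [Fintype α] {j : ℕ} (g : α → Fin (j + 1))

def levelSet (i : Fin j) : Finset α := {v | g v ≤ i.castSucc}

variable {g} (hg : ∀ i : Fin j, ∃ v, g v = i.castSucc)
include hg

theorem levelSet_strictMono : StrictMono (levelSet g) := by
  intro i i' hii'
  refine (ssubset_iff_subset_ne).2 ⟨fun v hv => ?_, fun heq => ?_⟩
  · simp only [levelSet, mem_filter, mem_univ, true_and] at hv ⊢
    exact hv.trans (Fin.castSucc_le_castSucc_iff.2 hii'.le)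
  · obtain ⟨v, hv⟩ := hg i'
    have hvi : v ∈ levelSet g i := heq ▸ (by simp [levelSet, hv])
    simp only [levelSet, mem_filter, mem_univ, true_and, hv, Fin.castSucc_le_castSucc_iff] at hvi
    exact hii'.not_ge hvi

variable [DecidableEq α]

theorem chainRank_image_levelSet (i : Fin j) :
    chainRank (univ.image (levelSet g)) (levelSet g i) = i := by
  have hL := levelSet_strictMono hg
  rw [chainRank, filter_image, card_image_of_injective _ hL.injective]
  simp only [hL.lt_iff_lt]
  rw [filter_gt_eq_Iio, Fin.card_Iio]

theorem chainLevel_image_levelSet (v : α) :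
    chainLevel (univ.image (levelSet g)) v = g v := by
  rw [chainLevel, filter_image, card_image_of_injective _ (levelSet_strictMono hg).injective]
  simp only [levelSet, mem_filter, mem_univ, true_and, not_le, Fin.lt_def, Fin.val_castSucc]
  rw [Fin.card_filter_val_lt, min_eq_right (Nat.lt_succ_iff.1 (g v).2)]

end LevelSet

section ChainFamily

variable {ι α : Type*} [Fintype ι] [DecidableEq α]

theorem IsNonemptyChainFamily.isChain_image {f : ι → Finset α} (hf : IsNonemptyChainFamily f) :
    IsChain (· ⊆ ·) (univ.image f : Set (Finset α)) := by
  simpa using hf.1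

theorem IsNonemptyChainFamily.nonempty_of_mem_image {f : ι → Finset α}
    (hf : IsNonemptyChainFamily f) : ∀ B ∈ univ.image f, B.Nonempty := by
  simpa using hf.2

variable [Fintype α]

theorem image_univ_levelSet_comp {j : ℕ} {g : α → Fin (j + 1)} {h : ι → Fin j}
    (hh : Function.Surjective h) :
    univ.image (fun u => levelSet g (h u)) = univ.image (levelSet g) := by
  rw [← image_univ_of_surjective hh, image_image]; rfl

noncomputable def nonemptyChainFamilyEquiv (j : ℕ) :
    {f : ι → Finset α // IsNonemptyChainFamily f ∧ #(univ.image f) = j} ≃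
      LevelFn α j × {h : ι → Fin j // Function.Surjective h} where
  toFun f :=
    (⟨fun v => ⟨chainLevel (univ.image f.1) v,
        Nat.lt_succ_of_le ((chainLevel_le_card v).trans_eq f.2.2)⟩,
      fun i => by
        obtain ⟨v, hv⟩ := exists_chainLevel_eq f.2.1.isChain_image f.2.1.nonempty_of_mem_image
          (i.2.trans_eq f.2.2.symm)
        exact ⟨v, Fin.ext hv⟩⟩,
     ⟨fun u => ⟨chainRank (univ.image f.1) (f.1 u),
        (chainRank_lt_card (mem_image_of_mem _ (mem_univ u))).trans_eq f.2.2⟩, fun i => by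
        have hi : (i : ℕ) ∈ (univ.image f.1).image (chainRank (univ.image f.1)) := by
          rw [image_chainRank f.2.1.isChain_image, f.2.2]; exact mem_range.2 i.2
        obtain ⟨B, hB, hBi⟩ := mem_image.1 hi
        obtain ⟨u, -, rfl⟩ := mem_image.1 hB
        exact ⟨u, Fin.ext hBi⟩⟩)
  invFun gh := ⟨fun u => levelSet gh.1.1 (gh.2.1 u),
    ⟨((levelSet_strictMono gh.1.2).monotone.isChain_range).mono
      (Set.range_comp_subset_range gh.2.1 (levelSet gh.1.1)), fun u => by
      obtain ⟨v, hv⟩ := gh.1.2 ⟨0, Fin.pos (gh.2.1 u)⟩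
      exact ⟨v, by simp [levelSet, hv]⟩⟩,
    by rw [image_univ_levelSet_comp gh.2.2,
      card_image_of_injective _ (levelSet_strictMono gh.1.2).injective, card_univ,
      Fintype.card_fin]⟩
  left_inv f := by
    ext u v
    simp only [levelSet, mem_filter, mem_univ, true_and, Fin.le_def, Fin.val_castSucc]
    exact (mem_iff_chainLevel_le_chainRank f.2.1.isChain_image
      (mem_image_of_mem _ (mem_univ u)) v).symm
  right_inv := by
    rintro ⟨⟨g, hg⟩, ⟨h, hh⟩⟩
    refine Prod.ext (Subtype.ext (funext fun v => Fin.ext ?_))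
      (Subtype.ext (funext fun u => Fin.ext ?_))
    · simp only [image_univ_levelSet_comp hh, chainLevel_image_levelSet hg]
    · simp only [image_univ_levelSet_comp hh, chainRank_image_levelSet hg]

end ChainFamily

noncomputable def surjCount (m j : ℕ) : ℕ :=
  Nat.card {h : Fin m → Fin j // Function.Surjective h}

noncomputable def imageEqEquivSurjective {ι α : Type*} [Fintype ι] [DecidableEq α]
    (s : Finset α) :
    {f : ι → α // univ.image f = s} ≃ {h : ι → Fin #s // Function.Surjective h} where
  toFun f := ⟨fun u => s.equivFin ⟨f.1 u, by
    obtain ⟨f, rfl⟩ := f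
    exact mem_image_of_mem f (mem_univ u)⟩, by
    intro i
    have hi : (s.equivFin.symm i : α) ∈ univ.image f.1 := f.2.symm ▸ (s.equivFin.symm i).2
    obtain ⟨u, -, hu⟩ := mem_image.1 hi
    exact ⟨u, by simp [hu]⟩⟩
  invFun h := ⟨fun u => s.equivFin.symm (h.1 u), by
    ext a
    simp only [mem_image, mem_univ, true_and]
    refine ⟨fun ⟨u, hu⟩ => hu ▸ (s.equivFin.symm _).2, fun ha => ?_⟩
    obtain ⟨u, hu⟩ := h.2 (s.equivFin ⟨a, ha⟩)
    exact ⟨u, by simp [hu]⟩⟩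
  left_inv f := by ext; simp
  right_inv h := by ext; simp

theorem sum_choose_mul_surjCount (m k : ℕ) :
    ∑ j ∈ range (k + 1), k.choose j * surjCount m j = k ^ m := by
  classical
  have hfib : Fintype.card (Fin m → Fin k) =
      ∑ s ∈ (univ : Finset (Fin k)).powerset, #{f : Fin m → Fin k | univ.image f = s} :=
    card_eq_sum_card_fiberwise fun f _ => by simp
  have hs (s : Finset (Fin k)) : #{f : Fin m → Fin k | univ.image f = s} = surjCount m #s := by
    rw [← Fintype.card_subtype, surjCount, ← Nat.card_eq_fintype_card]
    exact Nat.card_congr (imageEqEquivSurjective s)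
  simp only [hs, sum_powerset_apply_card, card_univ, Fintype.card_fin, smul_eq_mul] at hfib
  simpa using hfib.symm

open Nat in
theorem sum_stirlingSecond_mul_descFactorial (m k : ℕ) :
    ∑ j ∈ range (k + 1), stirlingSecond m j * k.descFactorial j = k ^ m := by
  induction m with
  | zero => simp [sum_range_succ']
  | succ m ih =>
    have hk (j : ℕ) :
        k.descFactorial j * k = k.descFactorial (j + 1) + j * k.descFactorial j := by
      rcases le_or_gt j k with h | h
      · rw [descFactorial_succ, ← add_mul, Nat.sub_add_cancel h, mul_comm]
      · simp [descFactorial_of_lt h]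
    have hnew : ∑ j ∈ range (k + 1), stirlingSecond m j * k.descFactorial (j + 1) =
        ∑ j ∈ range k, stirlingSecond m j * k.descFactorial (j + 1) := by
      simp [sum_range_succ]
    have hold : ∑ j ∈ range (k + 1), stirlingSecond m j * (j * k.descFactorial j) =
        ∑ j ∈ range k, stirlingSecond m (j + 1) * ((j + 1) * k.descFactorial (j + 1)) := by
      simp [sum_range_succ']
    rw [pow_succ, ← ih, sum_mul]
    simp_rw [mul_assoc, hk, mul_add]
    rw [sum_add_distrib, hnew, hold, ← sum_add_distrib, sum_range_succ']
    simp only [stirlingSecond_succ_succ, stirlingSecond_succ_zero, zero_mul, add_zero]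
    exact sum_congr rfl fun j _ => by ring

theorem eq_of_sum_range_choose_mul_eq {x y : ℕ → ℕ}
    (h : ∀ k, ∑ j ∈ range (k + 1), k.choose j * x j =
      ∑ j ∈ range (k + 1), k.choose j * y j) :
    x = y := by
  funext k
  induction k using Nat.strong_induction_on with
  | _ k ih =>
    have hk := h k
    rw [sum_range_succ, sum_range_succ, sum_congr rfl fun j hj => by rw [ih j (mem_range.1 hj)]]
      at hk
    simpa using hk

open Nat in
theorem surjCount_eq_factorial_mul_stirlingSecond (m j : ℕ) :
    surjCount m j = j ! * stirlingSecond m j := by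
  revert j
  refine congrFun (eq_of_sum_range_choose_mul_eq fun k => ?_)
  rw [sum_choose_mul_surjCount, ← sum_stirlingSecond_mul_descFactorial]
  exact sum_congr rfl fun j _ => by rw [descFactorial_eq_factorial_mul_choose]; ring

theorem card_levelFn (n j : ℕ) :
    Nat.card (LevelFn (Fin n) j) = surjCount n j + surjCount n (j + 1) := by
  rw [Nat.card_congr (levelFnEquiv _ j), Nat.card_sum, surjCount, surjCount, add_comm]

theorem card_nonemptyChainFamily (m n : ℕ) :
    Nat.card {f : Fin m → Finset (Fin n) // IsNonemptyChainFamily f} =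
      ∑ j ∈ range (m + 1), (surjCount n j + surjCount n (j + 1)) * surjCount m j := by
  classical
  rw [Nat.card_eq_fintype_card, Fintype.card_subtype,
    card_eq_sum_card_fiberwise (f := fun f => #(univ.image f)) (t := range (m + 1))
      fun f _ => mem_range.2 (Nat.lt_succ_of_le ((card_image_le).trans_eq (card_fin m)))]
  refine sum_congr rfl fun j _ => ?_
  rw [filter_filter, ← Fintype.card_subtype, ← Nat.card_eq_fintype_card,
    Nat.card_congr (nonemptyChainFamilyEquiv j), Nat.card_prod, card_levelFn]
  rfl

theorem add_one_mul_choose_add_one_sub_mul_choose (k j : ℕ) :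
    ((k + 1) * (k + 1).choose j : ℤ) - k * k.choose j =
      (j + 1) * k.choose j + j * k.choose (j - 1) := by
  cases j with
  | zero => simp
  | succ i =>
    have hpascal : ((k + 1).choose (i + 1) : ℤ) = k.choose i + k.choose (i + 1) := by
      exact_mod_cast Nat.choose_succ_succ' k i
    have habsorb : ((k + 1) * k.choose i : ℤ) = (k + 1).choose (i + 1) * (i + 1) := by
      exact_mod_cast Nat.add_one_mul_choose_eq k i
    simp only [add_tsub_cancel_right, Nat.cast_add, Nat.cast_one]
    linear_combination (k + i + 2 : ℤ) * hpascal + habsorb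

open Nat in
def altChooseSum (n j : ℕ) : ℤ :=
  ∑ k ∈ range (n + 1), (-1) ^ (n + k) * k.choose j * (k ! * stirlingSecond n k)

open Nat in
theorem altChooseSum_succ (n j : ℕ) :
    altChooseSum (n + 1) j = (j + 1) * altChooseSum n j + j * altChooseSum n (j - 1) := by
  set T : ℕ → ℤ := fun k => k ! * stirlingSecond n k with hT
  set h : ℕ → ℤ := fun k => (-1) ^ (n + k) * k * k.choose j * T k with hh
  have hterm (k : ℕ) : (-1 : ℤ) ^ (n + 1 + (k + 1)) * (k + 1).choose j *
      ((k + 1)! * stirlingSecond (n + 1) (k + 1)) =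
      (-1) ^ (n + k) * ((k + 1) * (k + 1).choose j) * T k - h (k + 1) := by
    simp only [hT, hh, stirlingSecond_succ_succ, factorial_succ, pow_succ, ← add_assoc]
    push_cast; ring
  have htelescope : ∑ k ∈ range (n + 1), h (k + 1) = ∑ k ∈ range (n + 1), h k := by
    have htop : h (n + 1) = 0 := by simp [hh, hT, stirlingSecond_eq_zero_of_lt (lt_add_one n)]
    have := sum_range_succ' h (n + 1)
    rw [sum_range_succ, htop] at this
    simpa [hh] using this.symm
  rw [altChooseSum, sum_range_succ', stirlingSecond_succ_zero, Nat.cast_zero, mul_zero, mul_zero,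
    add_zero, sum_congr rfl fun k _ => hterm k, sum_sub_distrib, htelescope, ← sum_sub_distrib,
    altChooseSum, altChooseSum, mul_sum, mul_sum, ← sum_add_distrib]
  refine sum_congr rfl fun k _ => ?_
  linear_combination (-1 : ℤ) ^ (n + k) * T k * add_one_mul_choose_add_one_sub_mul_choose k j

open Nat in
theorem altChooseSum_eq (n j : ℕ) :
    altChooseSum n j = j ! * stirlingSecond n j + (j + 1)! * stirlingSecond n (j + 1) := by
  induction n generalizing j with
  | zero => cases j <;> simp [altChooseSum]
  | succ n ih =>
    rw [altChooseSum_succ, ih, ih]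
    cases j with
    | zero =>
      simp only [stirlingSecond_succ_succ, stirlingSecond_succ_zero, zero_add, factorial_zero,
        factorial_one, one_mul, zero_tsub, CharP.cast_eq_zero, cast_add, cast_one]
      ring
    | succ i =>
      simp only [stirlingSecond_succ_succ, factorial_succ, add_tsub_cancel_right, cast_add,
        cast_mul, cast_one]
      ring

theorem surjCount_eq_zero_of_lt {m j : ℕ} (h : m < j) : surjCount m j = 0 := by
  rw [surjCount_eq_factorial_mul_stirlingSecond, Nat.stirlingSecond_eq_zero_of_lt h, mul_zero]

theorem sum_range_choose_mul_surjCount (m k : ℕ) :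
    ∑ j ∈ range (m + 1), k.choose j * surjCount m j = k ^ m := by
  have hext (N : ℕ) (hN : N ≤ m + k + 1)
      (hzero : ∀ j, N ≤ j → k.choose j * surjCount m j = 0) :
      ∑ j ∈ range N, k.choose j * surjCount m j =
        ∑ j ∈ range (m + k + 1), k.choose j * surjCount m j :=
    sum_subset (range_subset_range.2 hN) fun j _ hj => hzero j (not_lt.1 (mem_range.not.1 hj))
  rw [← sum_choose_mul_surjCount m k, hext _ (by omega) fun j hj => by
      rw [surjCount_eq_zero_of_lt (by omega), mul_zero],
    hext (k + 1) (by omega) fun j hj => by rw [Nat.choose_eq_zero_of_lt (by omega), zero_mul]]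

open Nat in
theorem sum_altChooseSum_mul_surjCount (m n : ℕ) :
    ∑ j ∈ range (m + 1), altChooseSum n j * surjCount m j =
      ∑ k ∈ range (n + 1), (-1) ^ (n + k) * (k ! * stirlingSecond n k * (k : ℤ) ^ m) := by
  simp only [altChooseSum, sum_mul]
  rw [sum_comm]
  refine sum_congr rfl fun k _ => ?_
  have hk : ∑ j ∈ range (m + 1), (k.choose j * surjCount m j : ℤ) = (k : ℤ) ^ m := by
    exact_mod_cast sum_range_choose_mul_surjCount m k
  rw [← hk, mul_sum, mul_sum]
  exact sum_congr rfl fun j _ => by ring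

theorem sum_range_neg_one_pow_mul {n : ℕ} (hn : 1 ≤ n) (F : ℕ → ℤ) (hF : F 0 = 0) :
    ∑ k ∈ range (n + 1), (-1) ^ (n + k) * F k =
      F n - ∑ j ∈ Icc 1 (n - 1), (-1) ^ (j - 1) * F (n - j) := by
  have hsplit : range (n + 1) = insert n (insert 0 (Icc 1 (n - 1))) := by
    ext k; simp only [mem_range, mem_insert, mem_Icc]; omega
  have hreflect : ∑ j ∈ Icc 1 (n - 1), (-1) ^ (j - 1) * F (n - j) =
      ∑ k ∈ Icc 1 (n - 1), -((-1) ^ (n + k) * F k) := by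
    refine sum_nbij' (n - ·) (n - ·) ?_ ?_ ?_ ?_ fun j hj => ?_
    iterate 4 (intro j hj; simp only [mem_Icc] at hj ⊢; omega)
    have hj := mem_Icc.1 hj
    rw [show n + (n - j) = (j - 1) + 2 * (n - j) + 1 by omega, pow_succ, pow_add, pow_mul]
    simp
  rw [hsplit, sum_insert (by simp only [mem_insert, mem_Icc]; omega), sum_insert (by simp),
    hreflect, sum_neg_distrib, hF, show n + n = 2 * n by omega, pow_mul]
  simp

theorem stirling_eq_stirlingSecond : stirling = Nat.stirlingSecond := by
  funext n k
  induction n generalizing k with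
  | zero => cases k <;> rfl
  | succ n ih => cases k <;> simp [stirling, Nat.stirlingSecond, ih]

theorem ao_bipartite_no_left_sink_count (m n : ℕ) (hn : 1 ≤ n) :
    (Nat.card {o : (Fin m ⊕ Fin n) → (Fin m ⊕ Fin n) → Prop //
        IsOrientation (completeBipartiteGraph (Fin m) (Fin n)) o ∧ IsAcyclicRel o ∧
        ∀ u : Fin m, ¬ IsSinkOf o (Sum.inl u)} : ℤ) =
      (Nat.factorial n : ℤ) * (n : ℤ) ^ m -
        ∑ j ∈ Finset.Icc 1 (n - 1),
          (-1 : ℤ) ^ (j - 1) * (Nat.factorial (n - j) : ℤ) * ((n - j : ℕ) : ℤ) ^ m *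
            (stirling n (n - j) : ℤ) := by
  have hS0 : Nat.stirlingSecond n 0 = 0 := by
    obtain ⟨n, rfl⟩ := Nat.exists_eq_add_of_le' hn
    rfl
  rw [Nat.card_congr orientationEquivChainFamily, card_nonemptyChainFamily]
  calc _ = ∑ j ∈ range (m + 1), altChooseSum n j * surjCount m j := by
        push_cast
        refine sum_congr rfl fun j _ => ?_
        rw [altChooseSum_eq, surjCount_eq_factorial_mul_stirlingSecond n j,
          surjCount_eq_factorial_mul_stirlingSecond n (j + 1)]
        push_cast
        ring
    _ = ∑ k ∈ range (n + 1),
          (-1) ^ (n + k) * ((k.factorial : ℤ) * Nat.stirlingSecond n k * (k : ℤ) ^ m) :=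
        sum_altChooseSum_mul_surjCount m n
    _ = _ := by
        rw [sum_range_neg_one_pow_mul hn _ (by simp [hS0]), stirling_eq_stirlingSecond,
          Nat.stirlingSecond_self]
        push_cast
        congr 1
        · ring
        · exact sum_congr rfl fun j _ => by ring
end

section
/- The number of acyclic orientations of the complete bipartite graph K_{m+1,n} with a fixed unique sink equals the number of acyclic orientations of K_{m,n} (with parts L of size m and R of size n) that have no sink in L. -/
open Sum Relation

namespace Auso

variable {α : Type*}

/-- Grading conditions characterizing height functions of acyclic orientations of a
complete multipartite-type graph. -/
def Cond (G : SimpleGraph α) (h : α → ℕ) : Prop :=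
  (∀ v w, G.Adj v w → h v ≠ h w) ∧
  (∀ v t, t < h v → ∃ w, h w = t) ∧
  (∀ v w, h v = h w + 1 → G.Adj v w)

/-- Orientation associated to a height function. -/
def Phi (G : SimpleGraph α) (h : α → ℕ) : α → α → Prop := fun v w => G.Adj v w ∧ h w < h v

theorem Phi_isOrientation {G : SimpleGraph α} {h : α → ℕ} (hc : Cond G h) :
    IsOrientation G (Phi G h) := by
  refine ⟨fun u v hv => hv.1, fun u v hadj => ?_⟩
  have hne := hc.1 u v hadj
  constructor
  · rintro ⟨-, hlt⟩ ⟨-, hlt'⟩; omega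
  · intro hn
    refine ⟨hadj, ?_⟩
    rcases Nat.lt_or_ge (h v) (h u) with h1 | h1
    · exact h1
    · exact absurd ⟨hadj.symm, by omega⟩ hn

theorem Phi_acyclic {G : SimpleGraph α} (h : α → ℕ) :
    IsAcyclicRel (Phi G h) := by
  intro v hv
  have : ∀ a b, TransGen (Phi G h) a b → h b < h a := by
    intro a b hab
    induction hab with
    | single hx => exact hx.2
    | tail _ hx ih => exact lt_trans hx.2 ih
  exact absurd (this v v hv) (lt_irrefl _)

theorem Phi_sink_iff {G : SimpleGraph α} {h : α → ℕ} (hc : Cond G h) (v : α) :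
    IsSinkOf (Phi G h) v ↔ h v = 0 := by
  constructor
  · intro hs
    by_contra h0
    obtain ⟨w, hw⟩ := hc.2.1 v (h v - 1) (by omega)
    exact hs w ⟨hc.2.2 v w (by omega), by omega⟩
  · intro h0 w hw
    exact absurd hw.2 (by omega)

theorem Phi_injective (G : SimpleGraph α) :
    Function.Injective fun h : {h : α → ℕ // Cond G h} => Phi G h.1 := by
  rintro ⟨h, hc⟩ ⟨h', hc'⟩ heq
  simp only at heq
  have key : ∀ t : ℕ, ∀ v, h v = t → h' v = t := by
    intro t
    induction t using Nat.strong_induction_on with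
    | _ t ih =>
      intro v hv
      rcases Nat.eq_zero_or_pos t with rfl | hpos
      · -- v is a sink for Phi h, hence for Phi h'
        by_contra hne
        obtain ⟨w, hw⟩ := hc'.2.1 v (h' v - 1) (by omega)
        have hadj : G.Adj v w := hc'.2.2 v w (by omega)
        have : Phi G h' v w := ⟨hadj, by omega⟩
        rw [← heq] at this
        exact absurd this.2 (by omega)
      · -- lower bound
        obtain ⟨w, hw⟩ := hc.2.1 v (t - 1) (by omega)
        have hadj : G.Adj v w := hc.2.2 v w (by omega)
        have h1 : Phi G h v w := ⟨hadj, by omega⟩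
        have hw' : h' w = t - 1 := ih (t - 1) (by omega) w hw
        rw [heq] at h1
        have hlow : t ≤ h' v := by have := h1.2; omega
        -- upper bound
        by_contra hne
        have hgt : t < h' v := by omega
        obtain ⟨w', hw'2⟩ := hc'.2.1 v (h' v - 1) (by omega)
        have hadj' : G.Adj v w' := hc'.2.2 v w' (by omega)
        have h2 : Phi G h' v w' := ⟨hadj', by omega⟩
        rw [← heq] at h2
        have hsm : h w' < t := by have := h2.2; omega
        have := ih (h w') hsm w' rfl
        omega
  have key' : ∀ v, h v = h' v := fun v => (key (h v) v rfl).symm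
  exact Subtype.ext (funext key')

end Auso

namespace Auso

section Height

variable {α : Type*}

theorem wf_flip {o : α → α → Prop} [Finite α] (hac : IsAcyclicRel o) :
    WellFounded (fun a b => o b a) := by
  have hi : IsIrrefl α (Relation.TransGen fun a b => o b a) :=
    ⟨fun a ha => hac a (Relation.transGen_swap.mp ha)⟩
  have t : WellFounded (Relation.TransGen fun a b => o b a) :=
    Finite.wellFounded_of_trans_of_irrefl _
  refine Subrelation.wf ?_ t
  intro x y hxy
  exact Relation.TransGen.single hxy

open Classical in
noncomputable def height [Fintype α] (o : α → α → Prop) (hac : IsAcyclicRel o) : α → ℕ :=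
  (wf_flip hac).fix fun v ih =>
    Finset.univ.sup fun w : α => if hw : o v w then ih w hw + 1 else 0

open Classical in
theorem height_eq [Fintype α] (o : α → α → Prop) (hac : IsAcyclicRel o) (v : α) :
    height o hac v =
      Finset.univ.sup fun w : α => if o v w then height o hac w + 1 else 0 := by
  rw [height, WellFounded.fix_eq]
  rfl

theorem height_lt [Fintype α] {o : α → α → Prop} (hac : IsAcyclicRel o) {v w : α}
    (hvw : o v w) : height o hac w < height o hac v := by
  classical
  rw [height_eq o hac v]
  have := Finset.le_sup (f := fun w : α => if o v w then height o hac w + 1 else 0)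
    (Finset.mem_univ w)
  simp only [if_pos hvw] at this
  omega

theorem height_exists [Fintype α] {o : α → α → Prop} (hac : IsAcyclicRel o) {v : α}
    (hv : height o hac v ≠ 0) : ∃ w, o v w ∧ height o hac w + 1 = height o hac v := by
  classical
  obtain ⟨b, -, hb⟩ := Finset.exists_mem_eq_sup Finset.univ ⟨v, Finset.mem_univ v⟩
    (fun w : α => if o v w then height o hac w + 1 else 0)
  rw [← height_eq o hac v] at hb
  by_cases hvb : o v b
  · exact ⟨b, hvb, by rw [if_pos hvb] at hb; omega⟩
  · rw [if_neg hvb] at hb; omega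

theorem height_sink [Fintype α] {o : α → α → Prop} (hac : IsAcyclicRel o) {v : α}
    (hs : IsSinkOf o v) : height o hac v = 0 := by
  classical
  rw [height_eq o hac v]
  refine Nat.le_zero.mp (Finset.sup_le fun w _ => ?_)
  rw [if_neg (hs w)]

end Height

section CB

variable {L R : Type*}

theorem adj_iff (v w : L ⊕ R) :
    (completeBipartiteGraph L R).Adj v w ↔ v.isLeft ≠ w.isLeft := by
  cases v <;> cases w <;> simp

theorem orient_total {G : SimpleGraph α'} {o : α' → α' → Prop} (ho : IsOrientation G o)
    {v w : α'} (hadj : G.Adj v w) : o v w ∨ o w v := by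
  by_cases h : o v w
  · exact Or.inl h
  · exact Or.inr (((ho.2 w v hadj.symm).mpr) h)

variable [Fintype L] [Fintype R]

theorem height_cond {o : (L ⊕ R) → (L ⊕ R) → Prop}
    (ho : IsOrientation (completeBipartiteGraph L R) o) (hac : IsAcyclicRel o) :
    Cond (completeBipartiteGraph L R) (height o hac) := by
  have hC1 : ∀ v w, (completeBipartiteGraph L R).Adj v w →
      height o hac v ≠ height o hac w := by
    intro v w hadj
    rcases orient_total ho hadj with hx | hx
    · exact Nat.ne_of_gt (height_lt hac hx)
    · exact Nat.ne_of_lt (height_lt hac hx)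
  refine ⟨hC1, ?_, ?_⟩
  · -- downward closed
    have key : ∀ n v, height o hac v = n → ∀ t, t < n → ∃ w, height o hac w = t := by
      intro n
      induction n using Nat.strong_induction_on with
      | _ n ih =>
        intro v hv t ht
        obtain ⟨w, hw, hwv⟩ := height_exists hac (v := v) (by omega)
        rcases Nat.lt_or_ge t (height o hac w) with h1 | h1
        · exact ih (height o hac w) (by omega) w rfl t h1
        · exact ⟨w, by omega⟩
    intro v t ht
    exact key (height o hac v) v rfl t ht
  · -- consecutive implies adjacent
    intro v w hvw
    obtain ⟨w', hw', hw'v⟩ := height_exists hac (v := v) (by omega)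
    have hadj' : (completeBipartiteGraph L R).Adj v w' := ho.1 v w' hw'
    have hside : w'.isLeft = w.isLeft := by
      by_contra hne
      exact hC1 w' w ((adj_iff w' w).mpr hne) (by omega)
    rw [adj_iff] at hadj' ⊢
    rw [hside] at hadj'
    exact hadj'

theorem Phi_height {o : (L ⊕ R) → (L ⊕ R) → Prop}
    (ho : IsOrientation (completeBipartiteGraph L R) o) (hac : IsAcyclicRel o) :
    Phi (completeBipartiteGraph L R) (height o hac) = o := by
  funext v w
  refine propext ⟨?_, ?_⟩
  · rintro ⟨hadj, hlt⟩
    rcases orient_total ho hadj with hx | hx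
    · exact hx
    · exact absurd (height_lt hac hx) (by omega)
  · intro hx
    exact ⟨ho.1 v w hx, height_lt hac hx⟩

/-- The forward map from height functions to acyclic orientations. -/
noncomputable def toOrient (L R : Type*) [Fintype L] [Fintype R] :
    {h : (L ⊕ R) → ℕ // Cond (completeBipartiteGraph L R) h} →
      {o : (L ⊕ R) → (L ⊕ R) → Prop //
        IsOrientation (completeBipartiteGraph L R) o ∧ IsAcyclicRel o} :=
  fun h => ⟨Phi (completeBipartiteGraph L R) h.1, Phi_isOrientation h.2, Phi_acyclic h.1⟩

theorem toOrient_bij (L R : Type*) [Fintype L] [Fintype R] :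
    Function.Bijective (toOrient L R) := by
  constructor
  · intro h1 h2 hh
    exact Phi_injective (completeBipartiteGraph L R) (congrArg Subtype.val hh)
  · rintro ⟨o, ho, hac⟩
    exact ⟨⟨height o hac, height_cond ho hac⟩, Subtype.ext (Phi_height ho hac)⟩

/-- The master equivalence between acyclic orientations and height functions. -/
noncomputable def orientEquiv (L R : Type*) [Fintype L] [Fintype R] :
    {o : (L ⊕ R) → (L ⊕ R) → Prop //
        IsOrientation (completeBipartiteGraph L R) o ∧ IsAcyclicRel o} ≃
      {h : (L ⊕ R) → ℕ // Cond (completeBipartiteGraph L R) h} :=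
  (Equiv.ofBijective (toOrient L R) (toOrient_bij L R)).symm

theorem orientEquiv_phi (x : {o : (L ⊕ R) → (L ⊕ R) → Prop //
      IsOrientation (completeBipartiteGraph L R) o ∧ IsAcyclicRel o}) :
    Phi (completeBipartiteGraph L R) ((orientEquiv L R) x).1 = x.1 :=
  congrArg Subtype.val
    ((Equiv.ofBijective (toOrient L R) (toOrient_bij L R)).apply_symm_apply x)

theorem orientEquiv_sink_iff (x : {o : (L ⊕ R) → (L ⊕ R) → Prop //
      IsOrientation (completeBipartiteGraph L R) o ∧ IsAcyclicRel o}) (v : L ⊕ R) :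
    IsSinkOf x.1 v ↔ ((orientEquiv L R) x).1 v = 0 := by
  rw [← orientEquiv_phi x]
  exact Phi_sink_iff ((orientEquiv L R) x).2 v

end CB

end Auso

namespace Auso

section Transport

/-- Restrict an equivalence of subtypes by extra compatible predicates. -/
def subEquiv {X Y : Type*} {p : X → Prop} {q : Y → Prop} (E : {x // p x} ≃ {y // q y})
    (P : X → Prop) (Q : Y → Prop) (hPQ : ∀ z : {x // p x}, P z.1 ↔ Q (E z).1) :
    {x // p x ∧ P x} ≃ {y // q y ∧ Q y} where
  toFun x := ⟨(E ⟨x.1, x.2.1⟩).1, (E ⟨x.1, x.2.1⟩).2, (hPQ ⟨x.1, x.2.1⟩).mp x.2.2⟩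
  invFun y := ⟨(E.symm ⟨y.1, y.2.1⟩).1, (E.symm ⟨y.1, y.2.1⟩).2, by
    have := hPQ (E.symm ⟨y.1, y.2.1⟩)
    rw [E.apply_symm_apply] at this
    exact this.mpr y.2.2⟩
  left_inv x := by
    apply Subtype.ext
    simp
  right_inv y := by
    apply Subtype.ext
    simp

variable {V V' : Type*} {G : SimpleGraph V} {G' : SimpleGraph V'}

theorem cond_comp (σ : V ≃ V') (hσ : ∀ v w, G.Adj v w ↔ G'.Adj (σ v) (σ w))
    {h : V' → ℕ} (hc : Cond G' h) : Cond G (h ∘ σ) := by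
  refine ⟨?_, ?_, ?_⟩
  · intro v w hadj
    exact hc.1 (σ v) (σ w) ((hσ v w).mp hadj)
  · intro v t ht
    obtain ⟨w', hw'⟩ := hc.2.1 (σ v) t ht
    exact ⟨σ.symm w', by simpa using hw'⟩
  · intro v w hvw
    exact (hσ v w).mpr (hc.2.2 (σ v) (σ w) hvw)

/-- Transport of height functions along a side-compatible vertex equivalence. -/
def condCongr (σ : V ≃ V') (hσ : ∀ v w, G.Adj v w ↔ G'.Adj (σ v) (σ w)) :
    {h : V' → ℕ // Cond G' h} ≃ {h : V → ℕ // Cond G h} where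
  toFun h := ⟨h.1 ∘ σ, cond_comp σ hσ h.2⟩
  invFun h := ⟨h.1 ∘ σ.symm, by
    refine cond_comp σ.symm (fun v w => ?_) h.2
    rw [hσ (σ.symm v) (σ.symm w)]
    simp⟩
  left_inv h := by
    apply Subtype.ext
    funext v
    simp
  right_inv h := by
    apply Subtype.ext
    funext v
    simp

end Transport

section Cone

variable {L R : Type*}

/-- Embedding of vertices into the coned vertex set. -/
def emb : L ⊕ R → Option L ⊕ R := Sum.map some id

@[simp] theorem emb_inl (u : L) : (emb (Sum.inl u) : Option L ⊕ R) = Sum.inl (some u) := rfl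
@[simp] theorem emb_inr (r : R) : (emb (Sum.inr r) : Option L ⊕ R) = Sum.inr r := rfl

theorem emb_isLeft (v : L ⊕ R) : (emb v).isLeft = v.isLeft := by
  cases v <;> rfl

theorem emb_ne (v : L ⊕ R) : emb v ≠ Sum.inl none := by
  cases v <;> simp

/-- Forward map of the cone equivalence. -/
def coneFwd (h : (Option L ⊕ R) → ℕ) : (L ⊕ R) → ℕ := fun v => h (emb v) - 1

/-- Inverse map of the cone equivalence. -/
def coneInv (h : (L ⊕ R) → ℕ) : (Option L ⊕ R) → ℕ
  | Sum.inl none => 0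
  | Sum.inl (some u) => h (Sum.inl u) + 1
  | Sum.inr r => h (Sum.inr r) + 1

@[simp] theorem coneFwd_apply (h : (Option L ⊕ R) → ℕ) (v : L ⊕ R) :
    coneFwd h v = h (emb v) - 1 := rfl
@[simp] theorem coneInv_none (h : (L ⊕ R) → ℕ) : coneInv h (Sum.inl none) = 0 := rfl
@[simp] theorem coneInv_some (h : (L ⊕ R) → ℕ) (u : L) :
    coneInv h (Sum.inl (some u)) = h (Sum.inl u) + 1 := rfl
@[simp] theorem coneInv_inr (h : (L ⊕ R) → ℕ) (r : R) :
    coneInv h (Sum.inr r) = h (Sum.inr r) + 1 := rfl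

theorem coneInv_emb (h : (L ⊕ R) → ℕ) (v : L ⊕ R) : coneInv h (emb v) = h v + 1 := by
  cases v <;> rfl

theorem cone_pos {h : (Option L ⊕ R) → ℕ}
    (hf : ∀ v, h v = 0 ↔ v = Sum.inl none) (v : L ⊕ R) : 1 ≤ h (emb v) := by
  rcases Nat.eq_zero_or_pos (h (emb v)) with h0 | h0
  · exact absurd ((hf _).mp h0) (emb_ne v)
  · omega

section ConeProofs

variable {h : (Option L ⊕ R) → ℕ}
  (hc : Cond (completeBipartiteGraph (Option L) R) h)
  (hf : ∀ v, h v = 0 ↔ v = Sum.inl none)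

include hc hf in
theorem coneFwd_cond : Cond (completeBipartiteGraph L R) (coneFwd h) ∧
    ∀ u : L, coneFwd h (Sum.inl u) ≠ 0 := by
  have hpos := cone_pos hf
  refine ⟨⟨?_, ?_, ?_⟩, ?_⟩
  · -- C1
    intro v w hadj
    have h1 := hpos v
    have h2 := hpos w
    have : h (emb v) ≠ h (emb w) := by
      refine hc.1 _ _ ?_
      rw [adj_iff] at hadj ⊢
      rwa [emb_isLeft, emb_isLeft]
    simp only [coneFwd_apply]
    omega
  · -- C2
    intro v t ht
    simp only [coneFwd_apply] at ht
    have h1 := hpos v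
    obtain ⟨w', hw'⟩ := hc.2.1 (emb v) (t + 1) (by omega)
    have hne : w' ≠ Sum.inl none := by
      intro heq
      rw [heq] at hw'
      have := (hf (Sum.inl none)).mpr rfl
      omega
    rcases w' with (u | r)
    · rcases u with _ | u
      · exact absurd rfl hne
      · refine ⟨Sum.inl u, ?_⟩
        simp only [coneFwd_apply, emb_inl]
        omega
    · refine ⟨Sum.inr r, ?_⟩
      simp only [coneFwd_apply, emb_inr]
      omega
  · -- C3
    intro v w hvw
    simp only [coneFwd_apply] at hvw
    have h1 := hpos v
    have h2 := hpos w
    have heq : h (emb v) = h (emb w) + 1 := by omega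
    have hadj := hc.2.2 _ _ heq
    rw [adj_iff] at hadj ⊢
    rwa [emb_isLeft, emb_isLeft] at hadj
  · -- no left zero
    intro u h0
    simp only [coneFwd_apply, emb_inl] at h0
    have h1 := hpos (Sum.inl u)
    rw [emb_inl] at h1
    have hz : h (Sum.inl none) = 0 := (hf _).mpr rfl
    have heq : h (Sum.inl (some u)) = h (Sum.inl none) + 1 := by omega
    have hadj := hc.2.2 _ _ heq
    rw [adj_iff] at hadj
    simp at hadj

end ConeProofs

section ConeInvProofs

variable {h : (L ⊕ R) → ℕ}
  (hc : Cond (completeBipartiteGraph L R) h)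
  (hnl : ∀ u : L, h (Sum.inl u) ≠ 0)

include hc hnl in
theorem coneInv_cond : Cond (completeBipartiteGraph (Option L) R) (coneInv h) ∧
    ∀ v, coneInv h v = 0 ↔ v = Sum.inl none := by
  refine ⟨⟨?_, ?_, ?_⟩, ?_⟩
  · -- C1
    intro v w hadj
    rw [adj_iff] at hadj
    rcases v with ((_ | u) | r) <;> rcases w with ((_ | u') | r') <;>
      simp only [Sum.isLeft] at hadj <;> try simp at hadj
    · -- inl none vs inr r'
      simp
    · -- inl some u vs inr r'
      have := hc.1 (Sum.inl u) (Sum.inr r') ((adj_iff _ _).mpr (by simp))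
      simp only [coneInv_some, coneInv_inr]
      omega
    · -- inr r vs inl none
      simp
    · -- inr r vs inl some u'
      have := hc.1 (Sum.inr r) (Sum.inl u') ((adj_iff _ _).mpr (by simp))
      simp only [coneInv_some, coneInv_inr]
      omega
  · -- C2
    intro v t ht
    rcases v with ((_ | u) | r)
    · simp at ht
    · simp only [coneInv_some] at ht
      rcases t with _ | t'
      · exact ⟨Sum.inl none, rfl⟩
      · obtain ⟨w', hw'⟩ := hc.2.1 (Sum.inl u) t' (by omega)
        exact ⟨emb w', by rw [coneInv_emb, hw']⟩
    · simp only [coneInv_inr] at ht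
      rcases t with _ | t'
      · exact ⟨Sum.inl none, rfl⟩
      · obtain ⟨w', hw'⟩ := hc.2.1 (Sum.inr r) t' (by omega)
        exact ⟨emb w', by rw [coneInv_emb, hw']⟩
  · -- C3
    intro v w hvw
    rcases v with ((_ | u) | r) <;> rcases w with ((_ | u') | r') <;>
      simp only [coneInv_none, coneInv_some, coneInv_inr] at hvw
    · omega
    · omega
    · omega
    · -- inl some u vs inl none
      exact absurd (by omega : h (Sum.inl u) = 0) (hnl u)
    · have := hc.2.2 (Sum.inl u) (Sum.inl u') (by omega)
      rw [adj_iff] at this ⊢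
      simpa using this
    · have := hc.2.2 (Sum.inl u) (Sum.inr r') (by omega)
      rw [adj_iff] at this ⊢
      simpa using this
    · -- inr r vs inl none
      rw [adj_iff]
      simp
    · have := hc.2.2 (Sum.inr r) (Sum.inl u') (by omega)
      rw [adj_iff] at this ⊢
      simpa using this
    · have := hc.2.2 (Sum.inr r) (Sum.inr r') (by omega)
      rw [adj_iff] at this ⊢
      simpa using this
  · -- fiber 0
    intro v
    rcases v with ((_ | u) | r) <;> simp

end ConeInvProofs

/-- The cone equivalence: height functions on `Option L ⊕ R` with unique zero at the
new vertex correspond to height functions on `L ⊕ R` with no zero on the left. -/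
def coneEquiv (L R : Type*) :
    {h : (Option L ⊕ R) → ℕ // Cond (completeBipartiteGraph (Option L) R) h ∧
        ∀ v, h v = 0 ↔ v = Sum.inl none} ≃
      {h : (L ⊕ R) → ℕ // Cond (completeBipartiteGraph L R) h ∧
        ∀ u : L, h (Sum.inl u) ≠ 0} where
  toFun h := ⟨coneFwd h.1, coneFwd_cond h.2.1 h.2.2⟩
  invFun h := ⟨coneInv h.1, coneInv_cond h.2.1 h.2.2⟩
  left_inv h := by
    apply Subtype.ext
    funext v
    show coneInv (coneFwd h.1) v = h.1 v
    have hz : h.1 (Sum.inl none) = 0 := (h.2.2 _).mpr rfl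
    rcases v with ((_ | u) | r)
    · exact hz.symm
    · have h1 := cone_pos h.2.2 (Sum.inl u)
      rw [emb_inl] at h1
      simp only [coneInv_some, coneFwd_apply, emb_inl]
      omega
    · have h1 := cone_pos h.2.2 (Sum.inr r)
      rw [emb_inr] at h1
      simp only [coneInv_inr, coneFwd_apply, emb_inr]
      omega
  right_inv h := by
    apply Subtype.ext
    funext v
    show coneFwd (coneInv h.1) v = h.1 v
    rw [coneFwd_apply, coneInv_emb]
    omega

end Cone

end Auso

namespace Auso

section Seg

/-- `f` maps onto the initial segment `{0, ..., k-1}` of `ℕ`. -/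
def Seg {X : Type*} (f : X → ℕ) (k : ℕ) : Prop :=
  (∀ x, f x < k) ∧ (∀ t, t < k → ∃ x, f x = t)

theorem seg_unique {X : Type*} {f : X → ℕ} {j k : ℕ} (hj : Seg f j) (hk : Seg f k) :
    j = k := by
  by_contra hne
  rcases Nat.lt_or_ge j k with hlt | hge
  · obtain ⟨x, hx⟩ := hk.2 j hlt
    exact absurd (hj.1 x) (by omega)
  · have hlt : k < j := by omega
    obtain ⟨x, hx⟩ := hj.2 k hlt
    exact absurd (hk.1 x) (by omega)

end Seg

section Parity

variable {L R : Type*}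

/-- Pair condition: `A` and `B` are onto initial segments of sizes `q` and `p`
with `p = q` or `p = q + 1`. -/
def PairCond (A : L → ℕ) (B : R → ℕ) : Prop :=
  ∃ q p, Seg A q ∧ Seg B p ∧ (p = q ∨ p = q + 1)

theorem cond_parity {h : (L ⊕ R) → ℕ} (hc : Cond (completeBipartiteGraph L R) h)
    (hnl : ∀ u : L, h (Sum.inl u) ≠ 0) :
    (∀ u : L, h (Sum.inl u) % 2 = 1) ∧ (∀ r : R, h (Sum.inr r) % 2 = 0) := by
  have key : ∀ t, ∀ v : L ⊕ R, h v = t →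
      (∀ u : L, v = Sum.inl u → h v % 2 = 1) ∧ (∀ r : R, v = Sum.inr r → h v % 2 = 0) := by
    intro t
    induction t using Nat.strong_induction_on with
    | _ t ih =>
      intro v hv
      rcases t with _ | t'
      · rcases v with u | r
        · exact absurd hv (hnl u)
        · exact ⟨fun u hu => by simp at hu, fun r' hr => by omega⟩
      · obtain ⟨w, hw⟩ := hc.2.1 v t' (by omega)
        have hadj := hc.2.2 v w (by omega)
        have ihw := ih t' (by omega) w hw
        rw [adj_iff] at hadj
        rcases v with u | r <;> rcases w with u' | r' <;> simp at hadj
        · have := (ihw.2 r' rfl)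
          exact ⟨fun u' hu => by omega, fun r' hr => by simp at hr⟩
        · have := (ihw.1 u' rfl)
          exact ⟨fun u' hu => by simp at hu, fun r'' hr => by omega⟩
  constructor
  · intro u
    exact ((key (h (Sum.inl u)) (Sum.inl u) rfl).1 u rfl)
  · intro r
    exact ((key (h (Sum.inr r)) (Sum.inr r) rfl).2 r rfl)

variable [Fintype L] [Fintype R]

theorem cond_seg {G : SimpleGraph (L ⊕ R)} {h : (L ⊕ R) → ℕ} (hc : Cond G h) :
    ∃ K, (∀ v, h v < K) ∧ (∀ t, t < K → ∃ v, h v = t) := by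
  classical
  refine ⟨Finset.univ.sup (fun v => h v + 1), fun v => ?_, fun t ht => ?_⟩
  · have := Finset.le_sup (f := fun v : L ⊕ R => h v + 1) (Finset.mem_univ v)
    omega
  · have hne : (Finset.univ : Finset (L ⊕ R)).Nonempty := by
      by_contra hcon
      rw [Finset.not_nonempty_iff_eq_empty] at hcon
      rw [hcon] at ht
      simp at ht
    obtain ⟨v0, -, hv0⟩ := Finset.exists_mem_eq_sup Finset.univ hne (fun v : L ⊕ R => h v + 1)
    rw [hv0] at ht
    rcases Nat.lt_or_ge t (h v0) with h1 | h1
    · exact hc.2.1 v0 t h1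
    · exact ⟨v0, by omega⟩

theorem pair_fwd {h : (L ⊕ R) → ℕ} (hc : Cond (completeBipartiteGraph L R) h)
    (hnl : ∀ u : L, h (Sum.inl u) ≠ 0) :
    PairCond (fun u : L => h (Sum.inl u) / 2) (fun r : R => h (Sum.inr r) / 2) := by
  obtain ⟨hpL, hpR⟩ := cond_parity hc hnl
  obtain ⟨K, hKb, hKs⟩ := cond_seg hc
  refine ⟨K / 2, (K + 1) / 2, ⟨?_, ?_⟩, ⟨?_, ?_⟩, by omega⟩
  · intro u
    show h (Sum.inl u) / 2 < K / 2
    have h1 := hKb (Sum.inl u)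
    have h2 := hpL u
    omega
  · intro t ht
    obtain ⟨v, hv⟩ := hKs (2 * t + 1) (by omega)
    rcases v with u | r
    · exact ⟨u, show h (Sum.inl u) / 2 = t by omega⟩
    · have := hpR r
      omega
  · intro r
    show h (Sum.inr r) / 2 < (K + 1) / 2
    have h1 := hKb (Sum.inr r)
    have h2 := hpR r
    omega
  · intro t ht
    obtain ⟨v, hv⟩ := hKs (2 * t) (by omega)
    rcases v with u | r
    · have := hpL u
      omega
    · exact ⟨r, show h (Sum.inr r) / 2 = t by omega⟩

/-- The height function built from a pair of level maps. -/
def pairInv (A : L → ℕ) (B : R → ℕ) : (L ⊕ R) → ℕ :=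
  Sum.elim (fun u => 2 * A u + 1) (fun r => 2 * B r)

@[simp] theorem pairInv_inl (A : L → ℕ) (B : R → ℕ) (u : L) :
    pairInv A B (Sum.inl u) = 2 * A u + 1 := rfl
@[simp] theorem pairInv_inr (A : L → ℕ) (B : R → ℕ) (r : R) :
    pairInv A B (Sum.inr r) = 2 * B r := rfl

theorem pair_inv_cond {A : L → ℕ} {B : R → ℕ} (hp : PairCond A B) :
    Cond (completeBipartiteGraph L R) (pairInv A B) ∧
      ∀ u : L, pairInv A B (Sum.inl u) ≠ 0 := by
  obtain ⟨q, p, hA, hB, hpq⟩ := hp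
  refine ⟨⟨?_, ?_, ?_⟩, fun u => by simp⟩
  · -- C1: parity
    intro v w hadj
    rw [adj_iff] at hadj
    rcases v with u | r <;> rcases w with u' | r'
    · simp at hadj
    · simp only [pairInv_inl, pairInv_inr]; omega
    · simp only [pairInv_inl, pairInv_inr]; omega
    · simp at hadj
  · -- C2
    intro v t ht
    rcases v with u | r
    · simp only [pairInv_inl] at ht
      have hAu := hA.1 u
      rcases Nat.even_or_odd t with ⟨t', ht'⟩ | ⟨t', ht'⟩
      · -- t = 2t' even, need B r = t'
        obtain ⟨r, hr⟩ := hB.2 t' (by omega)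
        exact ⟨Sum.inr r, by simp [hr]; omega⟩
      · obtain ⟨u', hu'⟩ := hA.2 t' (by omega)
        exact ⟨Sum.inl u', by simp [hu']; omega⟩
    · simp only [pairInv_inr] at ht
      have hBr := hB.1 r
      rcases Nat.even_or_odd t with ⟨t', ht'⟩ | ⟨t', ht'⟩
      · obtain ⟨r', hr'⟩ := hB.2 t' (by omega)
        exact ⟨Sum.inr r', by simp [hr']; omega⟩
      · obtain ⟨u', hu'⟩ := hA.2 t' (by omega)
        exact ⟨Sum.inl u', by simp [hu']; omega⟩
  · -- C3
    intro v w hvw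
    rcases v with u | r <;> rcases w with u' | r' <;>
      simp only [pairInv_inl, pairInv_inr] at hvw <;> rw [adj_iff] <;> simp <;> omega

/-- The parity equivalence between height functions with no zero on the left and
pairs of level maps. -/
noncomputable def pairEquiv (L R : Type*) [Fintype L] [Fintype R] :
    {h : (L ⊕ R) → ℕ // Cond (completeBipartiteGraph L R) h ∧
        ∀ u : L, h (Sum.inl u) ≠ 0} ≃
      {AB : (L → ℕ) × (R → ℕ) // PairCond AB.1 AB.2} where
  toFun h := ⟨(fun u => h.1 (Sum.inl u) / 2, fun r => h.1 (Sum.inr r) / 2),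
    pair_fwd h.2.1 h.2.2⟩
  invFun AB := ⟨pairInv AB.1.1 AB.1.2, pair_inv_cond AB.2⟩
  left_inv h := by
    apply Subtype.ext
    funext v
    obtain ⟨hpL, hpR⟩ := cond_parity h.2.1 h.2.2
    rcases v with u | r
    · have := hpL u
      simp only [pairInv_inl]
      omega
    · have := hpR r
      simp only [pairInv_inr]
      omega
  right_inv AB := by
    apply Subtype.ext
    apply Prod.ext
    · funext u
      simp only [pairInv_inl]
      omega
    · funext r
      simp only [pairInv_inr]
      omega

end Parity

end Auso

namespace Auso

section SigmaDec

variable {X Y : Type*}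

theorem seg_pos [Nonempty Y] {B : Y → ℕ} {p : ℕ} (h : Seg B p) : 1 ≤ p := by
  rcases p with _ | p
  · exact absurd (h.1 (Classical.arbitrary Y)) (by omega)
  · omega

/-- Inverse map of the sigma decomposition. -/
def sigInv (y : Σ _k : ℕ, {B : Y → ℕ // Seg B (_k + 1)} ×
      ({A : X → ℕ // Seg A _k} ⊕ {A : X → ℕ // Seg A (_k + 1)})) :
    {AB : (X → ℕ) × (Y → ℕ) // PairCond AB.1 AB.2} :=
  ⟨(Sum.elim Subtype.val Subtype.val y.2.2, y.2.1.1), by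
    rcases y with ⟨k, B, A | A⟩
    · exact ⟨k, k + 1, A.2, B.2, Or.inr rfl⟩
    · exact ⟨k + 1, k + 1, A.2, B.2, Or.inl rfl⟩⟩

theorem sigInv_bijective [Nonempty Y] : Function.Bijective (sigInv (X := X) (Y := Y)) := by
  constructor
  · rintro ⟨k, B, AA⟩ ⟨k', B', AA'⟩ heq
    have hpair := congrArg Subtype.val heq
    have hB : B.1 = B'.1 := congrArg Prod.snd hpair
    have hA : Sum.elim Subtype.val Subtype.val AA = Sum.elim Subtype.val Subtype.val AA' :=
      congrArg Prod.fst hpair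
    have hk : k = k' := by
      have := seg_unique B.2 (hB ▸ B'.2)
      omega
    subst hk
    have hBB : B = B' := Subtype.ext hB
    subst hBB
    have hAA : AA = AA' := by
      rcases AA with A | A <;> rcases AA' with A' | A' <;> simp only [Sum.elim_inl,
        Sum.elim_inr] at hA
      · exact congrArg Sum.inl (Subtype.ext hA)
      · exact absurd (seg_unique A.2 (hA ▸ A'.2)) (by omega)
      · exact absurd (seg_unique A.2 (hA ▸ A'.2)) (by omega)
      · exact congrArg Sum.inr (Subtype.ext hA)
    rw [hAA]
  · rintro ⟨⟨A, B⟩, hPC⟩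
    obtain ⟨q, p, hA, hB, hpq⟩ := hPC
    obtain ⟨p', rfl⟩ : ∃ p', p = p' + 1 := ⟨p - 1, by have := seg_pos hB; omega⟩
    rcases hpq with hqe | hqe
    · -- p = q : A has p' + 1 levels
      refine ⟨⟨p', ⟨B, hB⟩, Sum.inr ⟨A, by rw [hqe]; exact hA⟩⟩, rfl⟩
    · -- p = q + 1 : A has p' levels
      refine ⟨⟨p', ⟨B, hB⟩, Sum.inl ⟨A, by
        have : q = p' := by omega
        rw [← this]; exact hA⟩⟩, rfl⟩

/-- The sigma decomposition equivalence. -/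
noncomputable def sigmaEquiv (X Y : Type*) [Nonempty Y] :
    {AB : (X → ℕ) × (Y → ℕ) // PairCond AB.1 AB.2} ≃
      Σ _k : ℕ, {B : Y → ℕ // Seg B (_k + 1)} ×
        ({A : X → ℕ // Seg A _k} ⊕ {A : X → ℕ // Seg A (_k + 1)}) :=
  (Equiv.ofBijective sigInv sigInv_bijective).symm

end SigmaDec

end Auso

namespace Auso

section Recurrence

variable {b k : ℕ}

/-- Insert a gap at value `j`. -/
def expand (j : ℕ) (g : Fin b → ℕ) : Fin b → ℕ :=
  fun i => if g i < j then g i else g i + 1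

theorem expand_ne (j : ℕ) (g : Fin b → ℕ) (i : Fin b) : expand j g i ≠ j := by
  unfold expand
  split_ifs with h <;> omega

theorem expand_inj (j : ℕ) {g g' : Fin b → ℕ} (h : expand j g = expand j g') : g = g' := by
  funext i
  have := congrFun h i
  unfold expand at this
  split_ifs at this <;> omega

/-- Inverse map for the surjection recurrence. -/
def recInv (b k : ℕ) :
    Fin (k + 1) × ({g : Fin b → ℕ // Seg g (k + 1)} ⊕ {g : Fin b → ℕ // Seg g k}) →
      {B : Fin (b + 1) → ℕ // Seg B (k + 1)} :=
  fun x => match x with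
  | (j, Sum.inl g) => ⟨Fin.snoc g.1 j.1, by
      constructor
      · intro i
        refine Fin.lastCases ?_ (fun i' => ?_) i
        · rw [Fin.snoc_last]; exact j.2
        · rw [Fin.snoc_castSucc]; exact g.2.1 i'
      · intro t ht
        obtain ⟨i, hi⟩ := g.2.2 t ht
        exact ⟨Fin.castSucc i, by rw [Fin.snoc_castSucc]; exact hi⟩⟩
  | (j, Sum.inr g) => ⟨Fin.snoc (expand j.1 g.1) j.1, by
      have hjk : (j : ℕ) < k + 1 := j.2
      constructor
      · intro i
        refine Fin.lastCases ?_ (fun i' => ?_) i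
        · rw [Fin.snoc_last]; exact j.2
        · rw [Fin.snoc_castSucc]
          have := g.2.1 i'
          unfold expand
          split_ifs <;> omega
      · intro t ht
        rcases Nat.lt_trichotomy t j.1 with h1 | h1 | h1
        · obtain ⟨i, hi⟩ := g.2.2 t (by omega)
          refine ⟨Fin.castSucc i, ?_⟩
          rw [Fin.snoc_castSucc]
          unfold expand
          rw [hi, if_pos h1]
        · exact ⟨Fin.last b, by rw [Fin.snoc_last]; omega⟩
        · obtain ⟨i, hi⟩ := g.2.2 (t - 1) (by omega)
          refine ⟨Fin.castSucc i, ?_⟩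
          rw [Fin.snoc_castSucc]
          unfold expand
          rw [hi, if_neg (by omega)]
          omega⟩

theorem recInv_bijective (b k : ℕ) : Function.Bijective (recInv b k) := by
  constructor
  · rintro ⟨j, AA⟩ ⟨j', AA'⟩ heq
    have hval := congrArg Subtype.val heq
    have hlast : (j : ℕ) = (j' : ℕ) := by
      have h1 := congrFun hval (Fin.last b)
      rcases AA with g | g <;> rcases AA' with g' | g' <;>
        simpa [recInv, Fin.snoc_last] using h1
    have hj : j = j' := Fin.ext hlast
    subst hj
    have hbody : ∀ i : Fin b, _ := fun i => congrFun hval (Fin.castSucc i)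
    rcases AA with g | g <;> rcases AA' with g' | g'
    · have : g.1 = g'.1 := by
        funext i
        have := hbody i
        simpa [recInv, Fin.snoc_castSucc] using this
      rw [Subtype.ext this]
    · -- inl vs inr : contradiction, g hits j but expand doesn't
      exfalso
      obtain ⟨i, hi⟩ := g.2.2 j.1 j.2
      have := hbody i
      simp only [recInv, Fin.snoc_castSucc] at this
      rw [hi] at this
      exact expand_ne j.1 g'.1 i this.symm
    · exfalso
      obtain ⟨i, hi⟩ := g'.2.2 j.1 j.2
      have := hbody i
      simp only [recInv, Fin.snoc_castSucc] at this
      rw [hi] at this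
      exact expand_ne j.1 g.1 i this
    · have : g.1 = g'.1 := expand_inj j.1 (by
        funext i
        have := hbody i
        simpa [recInv, Fin.snoc_castSucc] using this)
      rw [Subtype.ext this]
  · rintro ⟨B, hB⟩
    classical
    have hjlt : B (Fin.last b) < k + 1 := hB.1 _
    set jv := B (Fin.last b) with hjv
    set g : Fin b → ℕ := fun i => B (Fin.castSucc i) with hgdef
    have hsnoc : Fin.snoc g jv = B := by
      funext i
      rcases Fin.eq_castSucc_or_eq_last i with ⟨i', rfl⟩ | rfl
      · rw [Fin.snoc_castSucc]
      · rw [Fin.snoc_last]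
    by_cases hg : Seg g (k + 1)
    · exact ⟨(⟨jv, hjlt⟩, Sum.inl ⟨g, hg⟩), Subtype.ext hsnoc⟩
    · -- g misses exactly jv
      have hbound : ∀ i, g i < k + 1 := fun i => hB.1 _
      have hmiss : ∃ t, t < k + 1 ∧ ∀ i, g i ≠ t := by
        by_contra hcon
        push_neg at hcon
        refine hg ⟨hbound, fun t ht => ?_⟩
        obtain ⟨i, hi⟩ := hcon t ht
        exact ⟨i, hi⟩
      obtain ⟨t0, ht0, hmt⟩ := hmiss
      have ht0j : t0 = jv := by
        by_contra hne
        obtain ⟨x, hx⟩ := hB.2 t0 ht0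
        rcases Fin.eq_castSucc_or_eq_last x with ⟨x', rfl⟩ | rfl
        · exact hmt x' hx
        · exact hne hx.symm
      have hmtj : ∀ i, g i ≠ jv := by
        intro i
        rw [← ht0j]
        exact hmt i
      set c : Fin b → ℕ := fun i => if g i < jv then g i else g i - 1 with hcdef
      have hc : Seg c k := by
        constructor
        · intro i
          have h1 := hbound i
          have h2 := hmtj i
          simp only [hcdef]
          split_ifs <;> omega
        · intro t ht
          rcases Nat.lt_or_ge t jv with h1 | h1
          · obtain ⟨x, hx⟩ := hB.2 t (by omega)
            rcases Fin.eq_castSucc_or_eq_last x with ⟨x', rfl⟩ | rfl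
            · exact ⟨x', by simp only [hcdef]; rw [show g x' = t from hx, if_pos h1]⟩
            · exact absurd hx.symm (by omega)
          · obtain ⟨x, hx⟩ := hB.2 (t + 1) (by omega)
            rcases Fin.eq_castSucc_or_eq_last x with ⟨x', rfl⟩ | rfl
            · refine ⟨x', ?_⟩
              simp only [hcdef]
              rw [show g x' = t + 1 from hx, if_neg (by omega)]
              omega
            · exact absurd hx.symm (by omega)
      have hexp : expand jv c = g := by
        funext i
        have h2 := hmtj i
        simp only [hcdef, expand]
        split_ifs <;> omega
      refine ⟨(⟨jv, hjlt⟩, Sum.inr ⟨c, hc⟩), Subtype.ext ?_⟩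
      show Fin.snoc (expand jv c) jv = B
      rw [hexp, hsnoc]

/-- The surjection recurrence equivalence. -/
noncomputable def recEquiv (b k : ℕ) :
    {B : Fin (b + 1) → ℕ // Seg B (k + 1)} ≃
      Fin (k + 1) × ({g : Fin b → ℕ // Seg g (k + 1)} ⊕ {g : Fin b → ℕ // Seg g k}) :=
  (Equiv.ofBijective (recInv b k) (recInv_bijective b k)).symm

end Recurrence

end Auso

namespace Auso

section Shuffle

/-- Shuffle equivalence used for the symmetric middle form. -/
def shuffle (X P Q U V : Type*) : (X × (P ⊕ Q)) × (U ⊕ V) ≃ (X × (V ⊕ U)) × (Q ⊕ P) where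
  toFun z := ((z.1.1, (Equiv.sumComm U V) z.2), (Equiv.sumComm P Q) z.1.2)
  invFun z := ((z.1.1, (Equiv.sumComm Q P) z.2), (Equiv.sumComm V U) z.1.2)
  left_inv := by rintro ⟨⟨x, p | q⟩, u | v⟩ <;> rfl
  right_inv := by rintro ⟨⟨x, v | u⟩, q | p⟩ <;> rfl

end Shuffle

section Core

/-- Height functions on `K_{a,b}` with no zero on the left. -/
def NPset (a b : ℕ) : Type :=
  {h : (Fin a ⊕ Fin b) → ℕ // Cond (completeBipartiteGraph (Fin a) (Fin b)) h ∧
    ∀ u : Fin a, h (Sum.inl u) ≠ 0}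

/-- The core combinatorial identity, as an explicit bijection. -/
noncomputable def coreEquiv (a b : ℕ) : NPset a (b + 1) ≃ NPset b (a + 1) :=
  (pairEquiv (Fin a) (Fin (b + 1))).trans
    ((sigmaEquiv (Fin a) (Fin (b + 1))).trans
      ((Equiv.sigmaCongrRight (fun k =>
          ((Equiv.prodCongr (recEquiv b k) (Equiv.refl _)).trans
            (shuffle _ _ _ _ _)).trans
          (Equiv.prodCongr (recEquiv a k) (Equiv.refl _)).symm)).trans
        ((sigmaEquiv (Fin b) (Fin (a + 1))).symm.trans
          (pairEquiv (Fin b) (Fin (a + 1))).symm)))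

end Core

section Assembly

variable {V V' : Type*} {G : SimpleGraph V} {G' : SimpleGraph V'}

/-- Transport of fiber-pinned height sets along a side-compatible vertex equivalence. -/
noncomputable def fiberEquiv (σ : V ≃ V') (hσ : ∀ v w, G.Adj v w ↔ G'.Adj (σ v) (σ w))
    (s : V) :
    {h : V → ℕ // Cond G h ∧ ∀ v, h v = 0 ↔ v = s} ≃
      {h : V' → ℕ // Cond G' h ∧ ∀ v, h v = 0 ↔ v = σ s} :=
  subEquiv (condCongr σ hσ).symm _ _ (fun z => by
    constructor
    · intro H v'
      show z.1 (σ.symm v') = 0 ↔ v' = σ s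
      have h1 := H (σ.symm v')
      rw [Equiv.symm_apply_eq] at h1
      exact h1
    · intro H v
      have h1 : z.1 (σ.symm (σ v)) = 0 ↔ σ v = σ s := H (σ v)
      rw [Equiv.symm_apply_apply, Equiv.apply_eq_iff_eq] at h1
      exact h1)

theorem card_auso (L R : Type*) [Fintype L] [Fintype R] (s : L ⊕ R) :
    Nat.card {o : (L ⊕ R) → (L ⊕ R) → Prop //
        IsOrientation (completeBipartiteGraph L R) o ∧ IsAcyclicRel o ∧
        ∀ v, IsSinkOf o v ↔ v = s} =
      Nat.card {h : (L ⊕ R) → ℕ // Cond (completeBipartiteGraph L R) h ∧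
        ∀ v, h v = 0 ↔ v = s} :=
  Nat.card_congr ((Equiv.subtypeEquivRight (fun _ => and_assoc.symm)).trans
    (subEquiv (orientEquiv L R) _ _ (fun z => forall_congr' fun v =>
      iff_congr (orientEquiv_sink_iff z v) Iff.rfl)))

theorem card_noleft (L R : Type*) [Fintype L] [Fintype R] :
    Nat.card {o : (L ⊕ R) → (L ⊕ R) → Prop //
        IsOrientation (completeBipartiteGraph L R) o ∧ IsAcyclicRel o ∧
        ∀ u : L, ¬ IsSinkOf o (Sum.inl u)} =
      Nat.card {h : (L ⊕ R) → ℕ // Cond (completeBipartiteGraph L R) h ∧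
        ∀ u : L, h (Sum.inl u) ≠ 0} :=
  Nat.card_congr ((Equiv.subtypeEquivRight (fun _ => and_assoc.symm)).trans
    (subEquiv (orientEquiv L R) _ _ (fun z => forall_congr' fun u =>
      not_congr (orientEquiv_sink_iff z (Sum.inl u)))))

end Assembly

end Auso

open Auso in
theorem auso_eq_ao_no_left_sink (m n : ℕ) (hn : 1 ≤ n) (s : Fin (m + 1) ⊕ Fin n) :
    ausoCount (completeBipartiteGraph (Fin (m + 1)) (Fin n)) s =
      Nat.card {o : (Fin m ⊕ Fin n) → (Fin m ⊕ Fin n) → Prop //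
        IsOrientation (completeBipartiteGraph (Fin m) (Fin n)) o ∧ IsAcyclicRel o ∧
        ∀ u : Fin m, ¬ IsSinkOf o (Sum.inl u)} := by
  classical
  unfold ausoCount
  rw [card_auso, card_noleft]
  rcases s with a | b
  · -- sink on the left
    have hσ : ∀ v w : Fin (m + 1) ⊕ Fin n,
        (completeBipartiteGraph (Fin (m + 1)) (Fin n)).Adj v w ↔
          (completeBipartiteGraph (Option (Fin m)) (Fin n)).Adj
            ((Equiv.sumCongr (finSuccEquiv' a) (Equiv.refl (Fin n))) v)
            ((Equiv.sumCongr (finSuccEquiv' a) (Equiv.refl (Fin n))) w) := by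
      intro v w
      rcases v with u | r <;> rcases w with u' | r' <;> simp [adj_iff]
    have e1 := fiberEquiv (Equiv.sumCongr (finSuccEquiv' a) (Equiv.refl (Fin n))) hσ
      (Sum.inl a)
    rw [show (Equiv.sumCongr (finSuccEquiv' a) (Equiv.refl (Fin n))) (Sum.inl a) =
        Sum.inl none by simp [finSuccEquiv'_at]] at e1
    exact Nat.card_congr (e1.trans (coneEquiv (Fin m) (Fin n)))
  · -- sink on the right
    obtain ⟨n', rfl⟩ : ∃ n', n = n' + 1 := ⟨n - 1, by omega⟩
    -- swap sides
    have hσ1 : ∀ v w : Fin (m + 1) ⊕ Fin (n' + 1),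
        (completeBipartiteGraph (Fin (m + 1)) (Fin (n' + 1))).Adj v w ↔
          (completeBipartiteGraph (Fin (n' + 1)) (Fin (m + 1))).Adj
            ((Equiv.sumComm (Fin (m + 1)) (Fin (n' + 1))) v)
            ((Equiv.sumComm (Fin (m + 1)) (Fin (n' + 1))) w) := by
      intro v w
      rcases v with u | r <;> rcases w with u' | r' <;> simp [adj_iff]
    have e1 := fiberEquiv (Equiv.sumComm (Fin (m + 1)) (Fin (n' + 1))) hσ1 (Sum.inr b)
    rw [show (Equiv.sumComm (Fin (m + 1)) (Fin (n' + 1))) (Sum.inr b) = Sum.inl b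
      from rfl] at e1
    -- relabel the left part (now of size n' + 1)
    have hσ2 : ∀ v w : Fin (n' + 1) ⊕ Fin (m + 1),
        (completeBipartiteGraph (Fin (n' + 1)) (Fin (m + 1))).Adj v w ↔
          (completeBipartiteGraph (Option (Fin n')) (Fin (m + 1))).Adj
            ((Equiv.sumCongr (finSuccEquiv' b) (Equiv.refl (Fin (m + 1)))) v)
            ((Equiv.sumCongr (finSuccEquiv' b) (Equiv.refl (Fin (m + 1)))) w) := by
      intro v w
      rcases v with u | r <;> rcases w with u' | r' <;> simp [adj_iff]
    have e2 := fiberEquiv (Equiv.sumCongr (finSuccEquiv' b) (Equiv.refl (Fin (m + 1)))) hσ2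
      (Sum.inl b)
    rw [show (Equiv.sumCongr (finSuccEquiv' b) (Equiv.refl (Fin (m + 1)))) (Sum.inl b) =
        Sum.inl none by simp [finSuccEquiv'_at]] at e2
    exact Nat.card_congr (((e1.trans e2).trans
      (coneEquiv (Fin n') (Fin (m + 1)))).trans (coreEquiv n' m))
end
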